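/- arXiv:math/0305427 — 7 statements merged into one kernel-verified Lean document; each statement's English description precedes it below -/
import Mathlib

section
/- Let (M,d) be a complete metric space and Y a real Banach space together with a linear map ι : Y → C_b(M,ℝ) into the bounded continuous real functions on M such that sup_{x∈M} |ι(φ)(x)| ≤ ‖φ‖_Y for every φ ∈ Y. Assume there exist constants C > 1 and r > 0 such that for every p ∈ M, every ε > 0 and every δ ∈ (0,r) there exists b ∈ Y with ι(b)(p) = ε, ‖b‖_Y ≤ Cε(1 + 1/δ), and ι(b)(x) = 0 whenever d(x,p) ≥ δ. Let f : M → ℝ ∪ {+∞} be lower semicontinuous, bounded below, and not identically +∞. Then the set of all φ ∈ Y such that the function x ↦ f(x) + ι(φ)(x) attains a strong minimum on M contains a dense G_δ subset of Y. -/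
open Filter Topology

/-- A function `F : M → ℝ ∪ {+∞}` attains a strong minimum at `p` if `F p = inf F` and
every minimizing sequence converges to `p`. -/
def StrongMinAt {M : Type*} [MetricSpace M] (F : M → EReal) (p : M) : Prop :=
  (∀ x, F p ≤ F x) ∧
    ∀ u : ℕ → M, Tendsto (fun n => F (u n)) atTop (𝓝 (F p)) → Tendsto u atTop (𝓝 p)

theorem lsc_add_cont {M : Type*} [TopologicalSpace M] {f : M → EReal}
    (hf : LowerSemicontinuous f) (hb : ∀ x, f x ≠ ⊥) {g : M → ℝ} (hg : Continuous g) :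
    LowerSemicontinuous fun x => f x + ((g x : ℝ) : EReal) := by
  intro x y hy
  induction y using EReal.rec with
  | bot =>
    filter_upwards with z
    simp only [bot_lt_iff_ne_bot, ne_eq, EReal.add_eq_bot_iff]
    push_neg
    exact ⟨hb z, EReal.coe_ne_bot _⟩
  | top => exact absurd hy (not_top_lt)
  | coe y =>
    have h1 : ((y - g x : ℝ) : EReal) < f x := by
      have := EReal.add_lt_add_right_coe hy (-g x)
      rw [add_assoc, ← EReal.coe_add, ← EReal.coe_add] at this
      simpa [sub_eq_add_neg] using this
    obtain ⟨q, hq1, hq2⟩ := EReal.exists_between_coe_real h1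
    have hev1 : ∀ᶠ z in 𝓝 x, (q : EReal) < f z := hf x _ hq2
    have hgx : y - q < g x := by
      rw [EReal.coe_lt_coe_iff] at hq1; linarith
    have hev2 : ∀ᶠ z in 𝓝 x, y - q < g z := hg.continuousAt.eventually (eventually_gt_nhds hgx)
    filter_upwards [hev1, hev2] with z h1z h2z
    calc (y : EReal) < ↑(q + g z) := by
          rw [EReal.coe_lt_coe_iff]; linarith
      _ = (q : EReal) + ↑(g z) := by norm_cast
      _ < f z + ↑(g z) := EReal.add_lt_add_right_coe h1z _

/-- The Deville–Godefroy–Zizler variational principle for a complete metric space `M` and a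
Banach space `Y` of bounded continuous functions on `M` admitting uniform bumps. -/
theorem dgz_variational_principle
    {M : Type*} [MetricSpace M] [CompleteSpace M]
    {Y : Type*} [NormedAddCommGroup Y] [NormedSpace ℝ Y] [CompleteSpace Y]
    (ι : Y →ₗ[ℝ] BoundedContinuousFunction M ℝ)
    (hι : ∀ φ : Y, ∀ x : M, |ι φ x| ≤ ‖φ‖)
    (hbump : ∃ C > (1 : ℝ), ∃ r > (0 : ℝ), ∀ (p : M) (ε : ℝ), 0 < ε →
      ∀ δ : ℝ, 0 < δ → δ < r → ∃ b : Y, ι b p = ε ∧ ‖b‖ ≤ C * ε * (1 + 1 / δ) ∧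
        ∀ x : M, δ ≤ dist x p → ι b x = 0)
    (f : M → EReal) (hlsc : LowerSemicontinuous f)
    (hbdd : ∃ c : ℝ, ∀ x, (c : EReal) ≤ f x) (hproper : ∃ x, f x ≠ ⊤) :
    ∃ G : Set Y, IsGδ G ∧ Dense G ∧
      G ⊆ {φ : Y | ∃ p : M, StrongMinAt (fun x => f x + ((ι φ x : ℝ) : EReal)) p} := by
  obtain ⟨C, hC, r, hr, hB⟩ := hbump
  obtain ⟨c, hc⟩ := hbdd
  set F : Y → M → EReal := fun φ x => f x + ((ι φ x : ℝ) : EReal) with hFdef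
  have hfbot : ∀ x, f x ≠ ⊥ := fun x =>
    ne_of_gt (lt_of_lt_of_le (EReal.bot_lt_coe c) (hc x))
  have hFlsc : ∀ φ, LowerSemicontinuous (F φ) := fun φ =>
    lsc_add_cont hlsc hfbot (ι φ).continuous
  have hlow : ∀ φ x, ((c - ‖φ‖ : ℝ) : EReal) ≤ F φ x := by
    intro φ x
    have h1 : (-‖φ‖ : ℝ) ≤ ι φ x := neg_le_of_abs_le (hι φ x)
    calc ((c - ‖φ‖ : ℝ) : EReal) = (c : EReal) + ((-‖φ‖ : ℝ) : EReal) := by norm_cast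
      _ ≤ f x + ((ι φ x : ℝ) : EReal) := add_le_add (hc x) (EReal.coe_le_coe_iff.2 h1)
  have htop : ∀ (φ : Y) (p : M) (m : EReal), F φ p < m → f p ≠ ⊤ := by
    intro φ p m h hp
    rw [hFdef] at h
    simp only [hp, EReal.top_add_coe] at h
    exact absurd h not_top_lt
  have hrep : ∀ (φ : Y) (p : M), f p ≠ ⊤ → F φ p = (((f p).toReal + ι φ p : ℝ) : EReal) := by
    intro φ p hp
    rw [hFdef]
    simp only [EReal.coe_add, EReal.coe_toReal hp (hfbot p)]
  set U : ℕ → Set Y := fun n =>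
    {φ | ∃ p : M, ∃ m : ℝ, F φ p < (m : EReal) ∧
      ∀ x, 1 / (n + 1 : ℝ) ≤ dist x p → (m : EReal) ≤ F φ x} with hUdef
  have hopen : ∀ n, IsOpen (U n) := by
    intro n
    rw [Metric.isOpen_iff]
    rintro φ ⟨p, m, h1, h2⟩
    have hfp : f p ≠ ⊤ := htop φ p _ h1
    set a : ℝ := (f p).toReal + ι φ p with ha
    have haf : F φ p = (a : EReal) := hrep φ p hfp
    have ham : a < m := by rw [haf, EReal.coe_lt_coe_iff] at h1; exact h1
    set t : ℝ := (m - a) / 3 with ht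
    have ht0 : 0 < t := by rw [ht]; linarith
    refine ⟨t, ht0, ?_⟩
    intro ψ hψ
    rw [Metric.mem_ball, dist_eq_norm] at hψ
    have hsub : ∀ x, |ι ψ x - ι φ x| ≤ ‖ψ - φ‖ := by
      intro x
      have := hι (ψ - φ) x
      rwa [map_sub, BoundedContinuousFunction.sub_apply] at this
    refine ⟨p, m - t, ?_, ?_⟩
    · rw [hrep ψ p hfp, EReal.coe_lt_coe_iff]
      have := (abs_le.1 (hsub p)).2
      linarith
    · intro x hx
      have h2x := h2 x hx
      have hgx : ι φ x - t ≤ ι ψ x := by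
        have := (abs_le.1 (hsub x)).1
        linarith
      calc ((m - t : ℝ) : EReal) = (m : EReal) + ((-t : ℝ) : EReal) := by norm_cast
        _ ≤ (f x + ((ι φ x : ℝ) : EReal)) + ((-t : ℝ) : EReal) := add_le_add h2x le_rfl
        _ = f x + (((ι φ x - t : ℝ)) : EReal) := by
            rw [add_assoc]; norm_cast
        _ ≤ f x + ((ι ψ x : ℝ) : EReal) :=
            add_le_add le_rfl (EReal.coe_le_coe_iff.2 hgx)
  have hdense : ∀ n, Dense (U n) := by
    intro n
    rw [Metric.dense_iff]
    intro φ η hη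
    set I : EReal := ⨅ x, F φ x with hI
    have hIbot : ((c - ‖φ‖ : ℝ) : EReal) ≤ I := le_iInf (hlow φ)
    have hItop : I < ⊤ := by
      obtain ⟨x₀, hx₀⟩ := hproper
      refine lt_of_le_of_lt (iInf_le _ x₀) ?_
      rw [hrep φ x₀ hx₀]
      exact EReal.coe_lt_top _
    have hIbot' : I ≠ ⊥ := ne_of_gt (lt_of_lt_of_le (EReal.bot_lt_coe _) hIbot)
    set i : ℝ := I.toReal with hi
    have hIi : I = (i : EReal) := (EReal.coe_toReal (ne_of_lt hItop) hIbot').symm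
    set δ : ℝ := min (1 / (n + 1 : ℝ)) (r / 2) with hδdef
    have hδ0 : 0 < δ := lt_min (by positivity) (by linarith)
    have hδr : δ < r := lt_of_le_of_lt (min_le_right _ _) (by linarith)
    have hδn : δ ≤ 1 / (n + 1 : ℝ) := min_le_left _ _
    have hden : 0 < C * (1 + 1 / δ) := by positivity
    set ε : ℝ := η / (2 * (C * (1 + 1 / δ))) with hε
    have hε0 : 0 < ε := by positivity
    have hIlt : I < I + (ε : EReal) := by
      rw [hIi]
      norm_cast
      linarith
    obtain ⟨p, hp⟩ := iInf_lt_iff.1 (lt_of_eq_of_lt hI.symm hIlt)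
    have hfp : f p ≠ ⊤ := htop φ p _ hp
    obtain ⟨b, hb1, hb2, hb3⟩ := hB p ε hε0 δ hδ0 hδr
    have hbnorm : ‖b‖ < η := by
      have heq : C * ε * (1 + 1 / δ) = η / 2 := by
        rw [hε]; field_simp
      rw [heq] at hb2
      linarith
    refine ⟨φ - b, ?_, p, i, ?_, ?_⟩
    · rw [Metric.mem_ball, dist_eq_norm]
      simpa using hbnorm
    · have hιsub : ι (φ - b) p = ι φ p - ε := by
        rw [map_sub, BoundedContinuousFunction.sub_apply, hb1]
      have hpr : (f p).toReal + ι φ p < i + ε := by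
        rw [hrep φ p hfp, hIi, ← EReal.coe_add, EReal.coe_lt_coe_iff] at hp
        exact hp
      rw [hrep (φ - b) p hfp, hιsub, EReal.coe_lt_coe_iff]
      linarith
    · intro x hx
      have hzero : ι b x = 0 := hb3 x (le_trans hδn hx)
      have hFeq : F (φ - b) x = F φ x := by
        rw [hFdef]
        simp only [map_sub, BoundedContinuousFunction.sub_apply, hzero, sub_zero]
      rw [hFeq, ← hIi]
      exact iInf_le _ x
  refine ⟨⋂ n, U n, IsGδ.iInter_of_isOpen hopen, dense_iInter_of_isOpen hopen hdense, ?_⟩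
  intro φ hφ
  simp only [Set.mem_iInter, hUdef, Set.mem_setOf_eq] at hφ
  choose p m hm1 hm2 using hφ
  -- p is Cauchy
  have key : ∀ n k, n ≤ k → dist (p k) (p n) < 1 / (n + 1 : ℝ) := by
    intro n k hnk
    by_contra h
    push_neg at h
    have h1 : (m n : EReal) ≤ F φ (p k) := hm2 n (p k) h
    have h2 : (m k : EReal) ≤ F φ (p n) := by
      apply hm2 k (p n)
      rw [dist_comm]
      refine le_trans ?_ h
      have h1 : (0:ℝ) < n + 1 := by positivity
      have h2 : (n : ℝ) + 1 ≤ (k : ℝ) + 1 := by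
        have : (n : ℝ) ≤ (k : ℝ) := Nat.cast_le.mpr hnk; linarith
      rw [div_le_div_iff₀ (by positivity) h1]
      linarith
    have : F φ (p n) < F φ (p n) :=
      lt_of_lt_of_le (lt_of_lt_of_le (hm1 n) h1) (le_trans (le_of_lt (hm1 k)) h2)
    exact absurd this (lt_irrefl _)
  have hcauchy : CauchySeq p := by
    refine cauchySeq_of_le_tendsto_0 (fun n : ℕ => 1 / ((n : ℝ) + 1)) ?_
      tendsto_one_div_add_atTop_nhds_zero_nat
    intro a b N ha hb
    rcases le_total a b with hab | hab
    · rw [dist_comm]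
      refine le_of_lt (lt_of_lt_of_le (key a b hab) ?_)
      apply one_div_le_one_div_of_le (by positivity)
      have : (N : ℝ) ≤ (a : ℝ) := Nat.cast_le.mpr ha; linarith
    · refine le_of_lt (lt_of_lt_of_le (key b a hab) ?_)
      apply one_div_le_one_div_of_le (by positivity)
      have : (N : ℝ) ≤ (b : ℝ) := Nat.cast_le.mpr hb; linarith
  obtain ⟨q, hq⟩ := cauchySeq_tendsto_of_complete hcauchy
  -- first property: q is a minimizer
  have hmin : ∀ x, F φ q ≤ F φ x := by
    intro x
    by_contra hcon
    push_neg at hcon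
    obtain ⟨y, hy1, hy2⟩ := exists_between hcon
    have hev1 : ∀ᶠ k in atTop, y < F φ (p k) := hq.eventually (hFlsc φ q y hy2)
    have hxq : x ≠ q := by
      rintro rfl
      exact absurd hcon (lt_irrefl _)
    have hρ : 0 < dist x q := dist_pos.2 hxq
    have hev2 : ∀ᶠ k in atTop, dist (p k) q < dist x q / 2 := by
      obtain ⟨N, hN⟩ := Metric.tendsto_atTop.1 hq (dist x q / 2) (by linarith)
      exact eventually_atTop.2 ⟨N, hN⟩
    have hev3 : ∀ᶠ k : ℕ in atTop, 1 / ((k : ℝ) + 1) ≤ dist x q / 2 :=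
      tendsto_one_div_add_atTop_nhds_zero_nat.eventually
        (eventually_le_nhds (show (0:ℝ) < dist x q / 2 by linarith))
    obtain ⟨k, h1k, h2k, h3k⟩ := (hev1.and (hev2.and hev3)).exists
    have hdx : 1 / (k + 1 : ℝ) ≤ dist x (p k) := by
      have := dist_triangle x (p k) q
      linarith
    have hle := hm2 k x hdx
    exact absurd (h1k.trans ((hm1 k).trans_le hle)) (not_lt.2 hy1.le)
  refine ⟨q, hmin, ?_⟩
  -- second property: minimizing sequences converge to q
  intro u htend
  rw [Metric.tendsto_atTop]
  by_contra hcon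
  push_neg at hcon
  obtain ⟨ρ, hρ, hfreq⟩ := hcon
  have hev2 : ∀ᶠ k in atTop, dist (p k) q < ρ / 2 := by
    obtain ⟨N, hN⟩ := Metric.tendsto_atTop.1 hq (ρ / 2) (by linarith)
    exact eventually_atTop.2 ⟨N, hN⟩
  have hev3 : ∀ᶠ k : ℕ in atTop, 1 / ((k : ℝ) + 1) ≤ ρ / 2 :=
    tendsto_one_div_add_atTop_nhds_zero_nat.eventually
      (eventually_le_nhds (by linarith))
  obtain ⟨n, h2n, h3n⟩ := (hev2.and hev3).exists
  have hmq : F φ q < (m n : EReal) := lt_of_le_of_lt (hmin (p n)) (hm1 n)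
  have hevu : ∀ᶠ k in atTop, F φ (u k) < (m n : EReal) :=
    htend.eventually (eventually_lt_nhds hmq)
  obtain ⟨N, hN⟩ := eventually_atTop.1 hevu
  obtain ⟨k, hkN, hk⟩ := hfreq N
  have hdx : 1 / (n + 1 : ℝ) ≤ dist (u k) (p n) := by
    have := dist_triangle (u k) (p n) q
    linarith
  exact absurd (hm2 n (u k) hdx) (not_le.2 (hN k hkN))
end

section
/- Let H be a real Hilbert space and F : H → ℝ ∪ {+∞} a lower semicontinuous function that is bounded below and not identically +∞. Then for every δ > 0 there exists a bounded, Lipschitz, C¹ function φ : H → ℝ such that: (1) F − φ attains a strong minimum on H; (2) sup_{x∈H} |φ(x)| < δ and sup_{x∈H} ‖Dφ(x)‖ < δ, where Dφ(x) denotes the Fréchet derivative. -/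
open Filter Topology

open RealInnerProductSpace
lemma key_ineq {t y : ℝ} (ht : 0 ≤ t) (hy : 0 ≤ y) :
    2 * t * y * Real.exp (-(t * y ^ 2)) ≤ Real.sqrt t := by
  have hv : 0 ≤ t * y ^ 2 := mul_nonneg ht (sq_nonneg y)
  have he : Real.exp (-(t * y ^ 2)) * (1 + t * y ^ 2) ≤ 1 := by
    have h1 : 1 + t * y ^ 2 ≤ Real.exp (t * y ^ 2) := by
      have := Real.add_one_le_exp (t * y ^ 2); linarith
    calc Real.exp (-(t * y ^ 2)) * (1 + t * y ^ 2)
        ≤ Real.exp (-(t * y ^ 2)) * Real.exp (t * y ^ 2) :=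
          mul_le_mul_of_nonneg_left h1 (Real.exp_pos _).le
      _ = 1 := by rw [← Real.exp_add]; simp
  have he' : (0:ℝ) < Real.exp (-(t * y ^ 2)) := Real.exp_pos _
  set s := Real.sqrt t with hs
  have hs2 : s ^ 2 = t := Real.sq_sqrt ht
  have hs0 : 0 ≤ s := Real.sqrt_nonneg t
  have h2 : 2 * t * y ≤ s * (1 + t * y ^ 2) := by
    have h2' : 2 * s ^ 2 * y ≤ s * (1 + s ^ 2 * y ^ 2) := by
      nlinarith [mul_nonneg hs0 (sq_nonneg (s * y - 1))]
    rw [hs2] at h2'; exact h2'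
  calc 2 * t * y * Real.exp (-(t * y ^ 2))
      ≤ s * (1 + t * y ^ 2) * Real.exp (-(t * y ^ 2)) :=
        mul_le_mul_of_nonneg_right h2 he'.le
    _ = s * (Real.exp (-(t * y ^ 2)) * (1 + t * y ^ 2)) := by ring
    _ ≤ s * 1 := mul_le_mul_of_nonneg_left he hs0
    _ = s := mul_one s
section Bump
variable {H : Type*} [NormedAddCommGroup H] [InnerProductSpace ℝ H]

noncomputable def dgzBump (t : ℝ) (p : H) (x : H) : ℝ := Real.exp (-(t * ⟪x - p, x - p⟫))

noncomputable def dgzBumpD (t : ℝ) (p : H) (x : H) : H →L[ℝ] ℝ :=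
  (Real.exp (-(t * ⟪x - p, x - p⟫)) * (-(2 * t))) • (innerSL ℝ (x - p))

lemma dgzBumpD_norm_le {t : ℝ} (ht : 0 ≤ t) (p x : H) :
    ‖dgzBumpD t p x‖ ≤ Real.sqrt t := by
  rw [dgzBumpD]
  rw [norm_smul (Real.exp (-(t * ⟪x - p, x - p⟫)) * (-(2 * t))) (innerSL ℝ (x - p)), innerSL_apply_norm]
  have hq : ⟪x - p, x - p⟫ = ‖x - p‖ ^ 2 := real_inner_self_eq_norm_sq (x - p)
  rw [hq]
  have h1 : ‖Real.exp (-(t * ‖x - p‖ ^ 2)) * (-(2 * t))‖ =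
      2 * t * Real.exp (-(t * ‖x - p‖ ^ 2)) := by
    rw [norm_mul, Real.norm_eq_abs, Real.norm_eq_abs, abs_neg, abs_of_nonneg (Real.exp_pos _).le,
      abs_of_nonneg (by linarith : (0:ℝ) ≤ 2 * t)]
    ring
  rw [h1]
  calc 2 * t * Real.exp (-(t * ‖x - p‖ ^ 2)) * ‖x - p‖
      = 2 * t * ‖x - p‖ * Real.exp (-(t * ‖x - p‖ ^ 2)) := by ring
    _ ≤ Real.sqrt t := key_ineq ht (norm_nonneg _)

lemma dgzBumpD_continuous (t : ℝ) (p : H) : Continuous (fun x => dgzBumpD t p x) := by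
  apply Continuous.fun_smul
  · apply Continuous.mul _ continuous_const
    apply Real.continuous_exp.comp
    apply Continuous.neg
    apply Continuous.mul continuous_const
    exact Continuous.inner (continuous_id.sub continuous_const) (continuous_id.sub continuous_const)
  · exact (innerSL ℝ).continuous.comp (continuous_id.sub continuous_const)


lemma dgzBump_pos (t : ℝ) (p x : H) : 0 < dgzBump t p x := Real.exp_pos _

lemma dgzBump_le_one {t : ℝ} (ht : 0 ≤ t) (p x : H) : dgzBump t p x ≤ 1 := by
  rw [dgzBump, ← Real.exp_zero]
  apply Real.exp_le_exp.2
  simp only [neg_nonpos]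
  exact mul_nonneg ht real_inner_self_nonneg

lemma dgzBump_self (t : ℝ) (p : H) : dgzBump t p p = 1 := by
  simp [dgzBump]

lemma dgzBump_contDiff (t : ℝ) (p : H) : ContDiff ℝ 1 (dgzBump t p) := by
  apply Real.contDiff_exp.comp
  apply ContDiff.neg
  apply ContDiff.mul contDiff_const
  exact ContDiff.inner ℝ (contDiff_id.sub contDiff_const) (contDiff_id.sub contDiff_const)

lemma dgzBump_continuous (t : ℝ) (p : H) : Continuous (dgzBump t p) :=
  (dgzBump_contDiff t p).continuous

lemma dgzBump_hasFDerivAt (t : ℝ) (p x : H) :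
    HasFDerivAt (dgzBump t p) (dgzBumpD t p x) x := by
  have h1 : HasFDerivAt (fun y : H => y - p) (ContinuousLinearMap.id ℝ H) x :=
    (hasFDerivAt_id x).sub_const p
  have h4 := (((h1.inner ℝ h1).const_mul t).neg).exp
  convert h4 using 1
  · funext z; rfl
  ext z
  simp only [dgzBumpD, ContinuousLinearMap.smul_apply, ContinuousLinearMap.coe_comp',
    Function.comp_apply, ContinuousLinearMap.neg_apply, ContinuousLinearMap.smul_apply,
    innerSL_apply_apply, fderivInnerCLM_apply, ContinuousLinearMap.prod_apply,
    ContinuousLinearMap.coe_id', id_eq, smul_eq_mul, Pi.neg_apply]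
  rw [real_inner_comm z (x - p)]
  ring

lemma dgzBump_dist_le {t : ℝ} (ht : 0 ≤ t) {p x : H} {d : ℝ} (hd0 : 0 ≤ d) (hd : d ≤ ‖x - p‖) :
    dgzBump t p x ≤ Real.exp (-(t * d ^ 2)) := by
  rw [dgzBump, real_inner_self_eq_norm_sq]
  apply Real.exp_le_exp.2
  rw [neg_le_neg_iff]
  apply mul_le_mul_of_nonneg_left _ ht
  exact pow_le_pow_left₀ hd0 hd 2

end Bump

section Rec
variable {H : Type*} [NormedAddCommGroup H] [InnerProductSpace ℝ H]

open scoped Classical in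
noncomputable def dgzNearMin (g : H → ℝ) (σ : ℝ) : H :=
  if h : ∃ x, g x < sInf (Set.range g) + σ then h.choose else 0

lemma dgzNearMin_spec (g : H → ℝ) {σ : ℝ} (hσ : 0 < σ) :
    g (dgzNearMin g σ) < sInf (Set.range g) + σ := by
  have hne : (Set.range g).Nonempty := Set.range_nonempty g
  obtain ⟨a, ⟨x, rfl⟩, ha⟩ := Real.lt_sInf_add_pos hne hσ
  have h : ∃ x, g x < sInf (Set.range g) + σ := ⟨x, ha⟩
  classical
  rw [dgzNearMin]
  rw [dif_pos h]
  exact h.choose_spec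

noncomputable def dgzWgt (δ : ℝ) (n : ℕ) : ℝ := δ / 4 * (1 / 8) ^ n
noncomputable def dgzRad (n : ℕ) : ℝ := (1 / 2) ^ n
noncomputable def dgzTau (n : ℕ) : ℝ := 4 ^ n
noncomputable def dgzSig (δ : ℝ) (n : ℕ) : ℝ := dgzWgt δ n / 100

noncomputable def dgzSeq (f : H → ℝ) (δ : ℝ) : ℕ → (H → ℝ) × H
  | 0 => (f, dgzNearMin f (dgzSig δ 0))
  | (n + 1) =>
      let g := fun x => (dgzSeq f δ n).1 x -
        dgzWgt δ n * dgzBump (dgzTau n) ((dgzSeq f δ n).2) x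
      (g, dgzNearMin g (dgzSig δ (n + 1)))

variable (f : H → ℝ) (δ : ℝ)

noncomputable def dgzG (n : ℕ) : H → ℝ := (dgzSeq f δ n).1
noncomputable def dgzPt (n : ℕ) : H := (dgzSeq f δ n).2
noncomputable def dgzTerm (n : ℕ) (x : H) : ℝ := dgzWgt δ n * dgzBump (dgzTau n) (dgzPt f δ n) x

lemma dgzG_zero : dgzG f δ 0 = f := rfl

lemma dgzG_succ (n : ℕ) : dgzG f δ (n + 1) = fun x => dgzG f δ n x - dgzTerm f δ n x := rfl

lemma dgzPt_eq (n : ℕ) : dgzPt f δ n = dgzNearMin (dgzG f δ n) (dgzSig δ n) := by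
  cases n <;> rfl

lemma dgzG_eq (n : ℕ) (x : H) :
    dgzG f δ n x = f x - ∑ k ∈ Finset.range n, dgzTerm f δ k x := by
  induction n with
  | zero => simp [dgzG_zero]
  | succ n ih =>
      rw [dgzG_succ]
      show dgzG f δ n x - dgzTerm f δ n x = _
      rw [Finset.sum_range_succ, ih]
      ring

end Rec

section Num

noncomputable def dgzT (δ : ℝ) (n : ℕ) : ℝ := ∑' k, dgzWgt δ (n + k)

lemma dgzWgt_pos {δ : ℝ} (hδ : 0 < δ) (n : ℕ) : 0 < dgzWgt δ n := by
  apply mul_pos (by linarith)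
  positivity

lemma dgzWgt_antitone {δ : ℝ} (hδ : 0 < δ) {n m : ℕ} (h : n ≤ m) : dgzWgt δ m ≤ dgzWgt δ n := by
  apply mul_le_mul_of_nonneg_left _ (by linarith : (0:ℝ) ≤ δ / 4)
  exact pow_le_pow_of_le_one (by norm_num) (by norm_num) h

lemma summable_dgzWgt (δ : ℝ) : Summable (dgzWgt δ) := by
  unfold dgzWgt
  exact (summable_geometric_of_lt_one (by norm_num) (by norm_num)).mul_left _

lemma dgzT_eq (δ : ℝ) (n : ℕ) : dgzT δ n = dgzWgt δ n * (8 / 7) := by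
  unfold dgzT
  have h : ∀ k, dgzWgt δ (n + k) = dgzWgt δ n * (1 / 8 : ℝ) ^ k := by
    intro k; unfold dgzWgt; rw [pow_add]; ring
  simp_rw [h]
  rw [tsum_mul_left, tsum_geometric_of_lt_one (by norm_num) (by norm_num)]
  norm_num

lemma dgzT_nonneg {δ : ℝ} (hδ : 0 < δ) (n : ℕ) : 0 ≤ dgzT δ n := by
  rw [dgzT_eq]; have := dgzWgt_pos hδ n; linarith

lemma dgzSig_pos {δ : ℝ} (hδ : 0 < δ) (n : ℕ) : 0 < dgzSig δ n := by
  have := dgzWgt_pos hδ n; unfold dgzSig; linarith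

lemma dgzTau_nonneg (n : ℕ) : 0 ≤ dgzTau n := by unfold dgzTau; positivity

lemma dgzRad_pos (n : ℕ) : 0 < dgzRad n := by unfold dgzRad; positivity

lemma dgz_exp_quarter : Real.exp (-(dgzTau n * (dgzRad n / 2) ^ 2)) ≤ 4 / 5 := by
  have h1 : dgzTau n * (dgzRad n / 2) ^ 2 = 1 / 4 := by
    unfold dgzTau dgzRad
    rw [div_pow, ← pow_mul, mul_comm n 2, pow_mul]
    norm_num
    have h4 : (4:ℝ) ^ n * (1 / 4) ^ n = 1 := by rw [← mul_pow]; norm_num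
    calc (4:ℝ) ^ n * ((1 / 4) ^ n / 4) = 4 ^ n * (1 / 4) ^ n / 4 := by ring
      _ = 1 / 4 := by rw [h4]
  rw [h1]
  have h2 : (5 / 4 : ℝ) ≤ Real.exp (1 / 4) := by
    have := Real.add_one_le_exp (1 / 4 : ℝ); linarith
  rw [Real.exp_neg]
  rw [show (4/5 : ℝ) = (5/4 : ℝ)⁻¹ by norm_num]
  exact inv_anti₀ (by norm_num) h2

lemma dgzSqrtTau (n : ℕ) : Real.sqrt (dgzTau n) = 2 ^ n := by
  unfold dgzTau
  rw [show (4:ℝ) ^ n = ((2:ℝ) ^ n) ^ 2 by rw [← pow_mul, mul_comm, pow_mul]; norm_num]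
  exact Real.sqrt_sq (by positivity)

end Num

section Core
variable {H : Type*} [NormedAddCommGroup H] [InnerProductSpace ℝ H] [CompleteSpace H]

theorem dgz_core (f : H → ℝ) (hlsc : LowerSemicontinuous f) {c : ℝ} (hc : ∀ x, c ≤ f x)
    {δ : ℝ} (hδ : 0 < δ) :
    ∃ φ : H → ℝ, ContDiff ℝ 1 φ ∧ Differentiable ℝ φ ∧
      (∀ x, 0 ≤ φ x) ∧ (∀ x, φ x ≤ δ / 2) ∧ (∀ x, ‖fderiv ℝ φ x‖ ≤ δ / 2) ∧
      ∃ p : H, (∀ x, f p - φ p ≤ f x - φ x) ∧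
        ∀ ρ > 0, ∃ γ > 0, ∀ x, ρ ≤ dist x p → f p - φ p + γ ≤ f x - φ x := by
  have hWs : Summable (dgzWgt δ) := summable_dgzWgt δ
  have hW : ∀ n, 0 < dgzWgt δ n := dgzWgt_pos hδ
  have htermpos : ∀ n (x : H), 0 < dgzTerm f δ n x :=
    fun n x => mul_pos (hW n) (dgzBump_pos _ _ _)
  have hterm_le : ∀ n (x : H), dgzTerm f δ n x ≤ dgzWgt δ n := by
    intro n x
    have := dgzBump_le_one (dgzTau_nonneg n) (dgzPt f δ n) x
    calc dgzTerm f δ n x ≤ dgzWgt δ n * 1 := mul_le_mul_of_nonneg_left this (hW n).le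
      _ = dgzWgt δ n := mul_one _
  have hWshift : ∀ n, Summable (fun k => dgzWgt δ (n + k)) := by
    intro n
    have := (summable_nat_add_iff (f := dgzWgt δ) n).2 hWs
    exact this.congr (fun k => by rw [add_comm])
  have htermshift : ∀ n (x : H), Summable (fun k => dgzTerm f δ (n + k) x) := by
    intro n x
    apply Summable.of_nonneg_of_le (fun k => (htermpos _ x).le) (fun k => hterm_le _ x) (hWshift n)
  have htail_le : ∀ n (x : H), ∑' k, dgzTerm f δ (n + k) x ≤ dgzT δ n := by
    intro n x
    exact Summable.tsum_le_tsum (fun k => hterm_le _ x) (htermshift n x) (hWshift n)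
  have htail_nonneg : ∀ n (x : H), 0 ≤ ∑' k, dgzTerm f δ (n + k) x := by
    intro n x
    exact tsum_nonneg (fun k => (htermpos _ x).le)
  have hsum_le_T : ∀ n m, n ≤ m → ∀ x : H,
      ∑ k ∈ Finset.Ico n m, dgzTerm f δ k x ≤ dgzT δ n := by
    intro n m h x
    rw [Finset.sum_Ico_eq_sum_range]
    calc ∑ i ∈ Finset.range (m - n), dgzTerm f δ (n + i) x
        ≤ ∑ i ∈ Finset.range (m - n), dgzWgt δ (n + i) :=
          Finset.sum_le_sum (fun i _ => hterm_le _ x)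
      _ ≤ ∑' i, dgzWgt δ (n + i) :=
          Summable.sum_le_tsum _ (fun i _ => (hW _).le) (hWshift n)
      _ = dgzT δ n := rfl
  have hGdiff : ∀ n m, n ≤ m → ∀ x : H,
      dgzG f δ n x - dgzG f δ m x = ∑ k ∈ Finset.Ico n m, dgzTerm f δ k x := by
    intro n m h x
    rw [dgzG_eq, dgzG_eq, Finset.sum_Ico_eq_sub _ h]
    ring
  have hGmono : ∀ n m, n ≤ m → ∀ x : H, dgzG f δ m x ≤ dgzG f δ n x := by
    intro n m h x
    have h1 := hGdiff n m h x
    have h2 : 0 ≤ ∑ k ∈ Finset.Ico n m, dgzTerm f δ k x :=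
      Finset.sum_nonneg (fun k _ => (htermpos k x).le)
    linarith
  have hGsub : ∀ n m, n ≤ m → ∀ x : H, dgzG f δ n x ≤ dgzG f δ m x + dgzT δ n := by
    intro n m h x
    have h1 := hGdiff n m h x
    have h2 := hsum_le_T n m h x
    linarith
  have hGlb : ∀ n (x : H), c - dgzT δ 0 ≤ dgzG f δ n x := by
    intro n x
    have h1 := hGsub 0 n (Nat.zero_le n) x
    have h2 := hc x
    rw [dgzG_zero] at h1
    linarith
  have hbdd : ∀ n, BddBelow (Set.range (dgzG f δ n)) := by
    intro n
    exact ⟨c - dgzT δ 0, by rintro _ ⟨x, rfl⟩; exact hGlb n x⟩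
  have hInf_le : ∀ n (x : H), sInf (Set.range (dgzG f δ n)) ≤ dgzG f δ n x :=
    fun n x => csInf_le (hbdd n) ⟨x, rfl⟩
  have hPt : ∀ n, dgzG f δ n (dgzPt f δ n) < sInf (Set.range (dgzG f δ n)) + dgzSig δ n := by
    intro n
    have := dgzNearMin_spec (dgzG f δ n) (dgzSig_pos hδ n)
    rwa [← dgzPt_eq] at this
  have hGsucc : ∀ n (x : H), dgzG f δ (n + 1) x = dgzG f δ n x - dgzTerm f δ n x :=
    fun n x => congrFun (dgzG_succ f δ n) x
  -- Step A
  have hA : ∀ n (x : H), dgzRad n / 2 ≤ ‖x - dgzPt f δ n‖ →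
      dgzG f δ (n + 1) (dgzPt f δ n) + (dgzWgt δ n / 5 - dgzSig δ n) ≤ dgzG f δ (n + 1) x := by
    intro n x hx
    have hb : dgzBump (dgzTau n) (dgzPt f δ n) x ≤ 4 / 5 :=
      le_trans (dgzBump_dist_le (dgzTau_nonneg n) (by have := dgzRad_pos n; linarith) hx) dgz_exp_quarter
    have h1 : dgzTerm f δ n x ≤ dgzWgt δ n * (4 / 5) :=
      mul_le_mul_of_nonneg_left hb (hW n).le
    have h2 : dgzTerm f δ n (dgzPt f δ n) = dgzWgt δ n := by
      rw [dgzTerm, dgzBump_self, mul_one]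
    have h3 := hGsucc n x
    have h4 := hGsucc n (dgzPt f δ n)
    have h5 := hInf_le n x
    have h6 := hPt n
    linarith
  -- Step B
  have hB : ∀ n m, n < m → dgzG f δ (n + 1) (dgzPt f δ m) ≤
      dgzG f δ (n + 1) (dgzPt f δ n) + (dgzSig δ m + dgzT δ (n + 1)) := by
    intro n m h
    have h1 := hGsub (n + 1) m h (dgzPt f δ m)
    have h2 := hPt m
    have h3 := hInf_le m (dgzPt f δ n)
    have h4 := hGmono (n + 1) m h (dgzPt f δ n)
    linarith
  have hWsucc : ∀ n, dgzWgt δ (n + 1) = dgzWgt δ n * (1 / 8) := by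
    intro n; rw [dgzWgt, dgzWgt, pow_succ]; ring
  have hnum : ∀ n m, n < m → dgzSig δ m + dgzT δ (n + 1) < dgzWgt δ n / 5 - dgzSig δ n := by
    intro n m h
    have h1 : dgzSig δ m ≤ dgzSig δ (n + 1) := by
      rw [dgzSig, dgzSig]
      have := dgzWgt_antitone hδ h
      linarith
    rw [dgzT_eq] at *
    rw [dgzSig, dgzSig] at *
    rw [hWsucc n] at *
    have := hW n
    linarith
  have hdist : ∀ n m, n < m → dist (dgzPt f δ m) (dgzPt f δ n) ≤ dgzRad n / 2 := by
    intro n m h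
    by_contra hcon
    push_neg at hcon
    have hx : dgzRad n / 2 ≤ ‖dgzPt f δ m - dgzPt f δ n‖ := by
      rw [← dist_eq_norm]; linarith
    have h1 := hA n (dgzPt f δ m) hx
    have h2 := hB n m h
    have h3 := hnum n m h
    linarith
  have hcauchy : CauchySeq (dgzPt f δ) := by
    apply cauchySeq_of_le_geometric (1 / 2) 1 (by norm_num)
    intro n
    have h1 := hdist n (n + 1) (Nat.lt_succ_self n)
    rw [dist_comm] at h1
    calc dist (dgzPt f δ n) (dgzPt f δ (n + 1)) ≤ dgzRad n / 2 := h1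
      _ ≤ 1 * (1 / 2) ^ n := by rw [dgzRad]; rw [one_mul]; nlinarith [pow_pos (by norm_num : (0:ℝ) < 1/2) n]
  obtain ⟨p, hp⟩ := cauchySeq_tendsto_of_complete hcauchy
  have hpd : ∀ n, dist p (dgzPt f δ n) ≤ dgzRad n / 2 := by
    intro n
    have h1 : Tendsto (fun m => dist (dgzPt f δ m) (dgzPt f δ n)) atTop
        (𝓝 (dist p (dgzPt f δ n))) := hp.dist tendsto_const_nhds
    apply le_of_tendsto h1
    filter_upwards [eventually_gt_atTop n] with m hm
    exact hdist n m hm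
  -- the perturbation function and its derivative
  set φ : H → ℝ := fun x => ∑' n, dgzTerm f δ n x with hφdef
  have hsφ : ∀ x : H, Summable (fun n => dgzTerm f δ n x) := fun x =>
    Summable.of_nonneg_of_le (fun n => (htermpos n x).le) (fun n => hterm_le n x) hWs
  have hφ0 : ∀ x, 0 ≤ φ x := fun x => tsum_nonneg (fun n => (htermpos n x).le)
  have hT0 : dgzT δ 0 ≤ δ / 2 := by
    rw [dgzT_eq, dgzWgt]
    norm_num
    linarith
  have hφle : ∀ x, φ x ≤ δ / 2 := by
    intro x
    have h1 : φ x ≤ ∑' n, dgzWgt δ n :=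
      Summable.tsum_le_tsum (fun n => hterm_le n x) (hsφ x) hWs
    have h2 : ∑' n, dgzWgt δ n = dgzT δ 0 := by
      rw [dgzT]
      exact tsum_congr (fun k => by rw [Nat.zero_add])
    linarith
  -- splitting
  have hsplit : ∀ n (x : H), f x - φ x = dgzG f δ n x - ∑' k, dgzTerm f δ (n + k) x := by
    intro n x
    have h1 := (Summable.sum_add_tsum_nat_add (f := fun k => dgzTerm f δ k x) n (hsφ x))
    have h2 : ∑' k, dgzTerm f δ (k + n) x = ∑' k, dgzTerm f δ (n + k) x :=
      tsum_congr (fun k => by rw [add_comm])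
    rw [dgzG_eq]
    rw [h2] at h1
    have : φ x = ∑' k, dgzTerm f δ k x := rfl
    linarith
  have hGinf_le : ∀ n (x : H), f x - φ x ≤ dgzG f δ n x := by
    intro n x
    have := hsplit n x
    have := htail_nonneg n x
    linarith
  have hGinf_ge : ∀ n (x : H), dgzG f δ n x - dgzT δ n ≤ f x - φ x := by
    intro n x
    have := hsplit n x
    have := htail_le n x
    linarith
  -- derivative of φ
  set Dphi : H → (H →L[ℝ] ℝ) :=
    fun x => ∑' n, dgzWgt δ n • dgzBumpD (dgzTau n) (dgzPt f δ n) x with hDdef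
  set u : ℕ → ℝ := fun n => dgzWgt δ n * 2 ^ n with hudef
  have huv : ∀ n, u n = δ / 4 * (1 / 4 : ℝ) ^ n := by
    intro n
    show dgzWgt δ n * 2 ^ n = _
    rw [dgzWgt]
    rw [mul_assoc, ← mul_pow]
    norm_num
  have hu : Summable u := by
    apply Summable.congr ((summable_geometric_of_lt_one (by norm_num) (by norm_num :
      (1/4:ℝ) < 1)).mul_left (δ / 4))
    intro n; rw [huv n]
  have htsu : ∑' n, u n ≤ δ / 2 := by
    have h1 : ∑' n, u n = δ / 4 * (4 / 3) := by
      calc ∑' n, u n = ∑' n, δ / 4 * (1 / 4 : ℝ) ^ n := tsum_congr huv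
        _ = δ / 4 * ∑' n, (1 / 4 : ℝ) ^ n := tsum_mul_left
        _ = δ / 4 * (4 / 3) := by
            rw [tsum_geometric_of_lt_one (by norm_num) (by norm_num)]; norm_num
    rw [h1]; linarith
  have hder : ∀ n (x : H), HasFDerivAt (fun y => dgzTerm f δ n y)
      (dgzWgt δ n • dgzBumpD (dgzTau n) (dgzPt f δ n) x) x := by
    intro n x
    exact (dgzBump_hasFDerivAt (dgzTau n) (dgzPt f δ n) x).const_mul (dgzWgt δ n)
  have hdnorm : ∀ n (x : H), ‖dgzWgt δ n • dgzBumpD (dgzTau n) (dgzPt f δ n) x‖ ≤ u n := by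
    intro n x
    rw [norm_smul (dgzWgt δ n) (dgzBumpD (dgzTau n) (dgzPt f δ n) x), Real.norm_eq_abs,
      abs_of_pos (hW n)]
    have h1 := dgzBumpD_norm_le (dgzTau_nonneg n) (dgzPt f δ n) x
    rw [dgzSqrtTau n] at h1
    show _ ≤ dgzWgt δ n * 2 ^ n
    exact mul_le_mul_of_nonneg_left h1 (hW n).le
  have hφder : ∀ x : H, HasFDerivAt φ (Dphi x) x := by
    intro x
    exact hasFDerivAt_tsum hu hder hdnorm (hsφ 0) x
  have hdiff : Differentiable ℝ φ := fun x => (hφder x).differentiableAt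
  have hfderiv : ∀ x, fderiv ℝ φ x = Dphi x := fun x => (hφder x).fderiv
  have hDnorm : ∀ x, ‖Dphi x‖ ≤ δ / 2 := by
    intro x
    have hsn : Summable fun n => ‖dgzWgt δ n • dgzBumpD (dgzTau n) (dgzPt f δ n) x‖ :=
      Summable.of_nonneg_of_le (fun n => norm_nonneg _) (fun n => hdnorm n x) hu
    calc ‖Dphi x‖ ≤ ∑' n, ‖dgzWgt δ n • dgzBumpD (dgzTau n) (dgzPt f δ n) x‖ :=
          norm_tsum_le_tsum_norm hsn
      _ ≤ ∑' n, u n := Summable.tsum_le_tsum (fun n => hdnorm n x) hsn hu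
      _ ≤ δ / 2 := htsu
  have hfdn : ∀ x, ‖fderiv ℝ φ x‖ ≤ δ / 2 := by
    intro x; rw [hfderiv x]; exact hDnorm x
  have hC1 : ContDiff ℝ 1 φ := by
    rw [contDiff_one_iff_fderiv]
    refine ⟨hdiff, ?_⟩
    have h1 : (fderiv ℝ φ) = Dphi := funext hfderiv
    rw [h1]
    apply continuous_tsum _ hu (fun n x => hdnorm n x)
    intro n
    exact (dgzBumpD_continuous (dgzTau n) (dgzPt f δ n)).const_smul (dgzWgt δ n)
  -- lower semicontinuity of the perturbed function
  have hlscG : LowerSemicontinuous (fun x => f x - φ x) := by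
    have h1 : (fun x => f x - φ x) = fun x => f x + (-(φ x)) :=
      funext fun x => sub_eq_add_neg _ _
    rw [h1]
    exact hlsc.add (hC1.continuous.neg.lowerSemicontinuous)
  have hSig0 : Tendsto (dgzSig δ) atTop (𝓝 0) := by
    have h0 : Tendsto (fun n : ℕ => δ / 400 * (1 / 8 : ℝ) ^ n) atTop (𝓝 0) := by
      simpa using
        (tendsto_pow_atTop_nhds_zero_of_lt_one (by norm_num : (0:ℝ) ≤ 1/8)
          (by norm_num)).const_mul (δ / 400)
    apply h0.congr
    intro n
    rw [dgzSig, dgzWgt]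
    ring
  have hT0' : Tendsto (dgzT δ) atTop (𝓝 0) := by
    have h0 : Tendsto (fun n : ℕ => δ / 4 * (8 / 7) * (1 / 8 : ℝ) ^ n) atTop (𝓝 0) := by
      simpa using
        (tendsto_pow_atTop_nhds_zero_of_lt_one (by norm_num : (0:ℝ) ≤ 1/8)
          (by norm_num)).const_mul (δ / 4 * (8 / 7))
    apply h0.congr
    intro n
    rw [dgzT_eq, dgzWgt]
    ring
  have hterm_pt : ∀ n, dgzTerm f δ n (dgzPt f δ n) = dgzWgt δ n := by
    intro n; rw [dgzTerm, dgzBump_self, mul_one]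
  -- the limit value is below all approximate minima
  have hL1 : ∀ n, f p - φ p ≤ dgzG f δ (n + 1) (dgzPt f δ n) := by
    intro n
    by_contra hcon
    push_neg at hcon
    set C := dgzG f δ (n + 1) (dgzPt f δ n) with hC
    set y := (C + (f p - φ p)) / 2 with hy
    have h1 : ∀ᶠ x in 𝓝 p, y < f x - φ x := hlscG p y (by rw [hy]; linarith)
    have h2 : ∀ᶠ m in atTop, y < f (dgzPt f δ m) - φ (dgzPt f δ m) := hp.eventually h1
    have h3 : ∀ᶠ m in atTop, dgzSig δ m < y - C :=
      hSig0.eventually_lt_const (by rw [hy]; linarith)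
    obtain ⟨m, hm2, hm3, hm4⟩ := (h2.and (h3.and (eventually_gt_atTop n))).exists
    have h5 := hGinf_le m (dgzPt f δ m)
    have h6 := hPt m
    have h7 := hInf_le m (dgzPt f δ n)
    have h8 := hGmono (n + 1) m hm4 (dgzPt f δ n)
    linarith
  -- global minimum
  have hminp : ∀ x, f p - φ p ≤ f x - φ x := by
    intro x
    have key : ∀ n, f p - φ p - (f x - φ x) ≤ dgzT δ n := by
      intro n
      have h1 := hGinf_ge n x
      have h2 := hInf_le n x
      have h3 := hL1 n
      have h4 := hGsucc n (dgzPt f δ n)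
      have h5 := hterm_pt n
      have h6 := hPt n
      have h7 : dgzSig δ n ≤ dgzWgt δ n := by
        rw [dgzSig]; have := hW n; linarith
      have h8 := hInf_le n (dgzPt f δ n)
      linarith
    have h9 : f p - φ p - (f x - φ x) ≤ 0 :=
      ge_of_tendsto hT0' (Eventually.of_forall key)
    linarith
  -- quantitative gap
  have hgap : ∀ ρ > 0, ∃ γ > 0, ∀ x, ρ ≤ dist x p → f p - φ p + γ ≤ f x - φ x := by
    intro ρ hρ
    obtain ⟨n, hn⟩ : ∃ n, dgzRad n ≤ ρ := by
      obtain ⟨n, hn⟩ := exists_pow_lt_of_lt_one hρ (by norm_num : (1/2 : ℝ) < 1)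
      exact ⟨n, by rw [dgzRad]; exact hn.le⟩
    refine ⟨dgzWgt δ n / 5 - dgzSig δ n - dgzT δ (n + 1), ?_, ?_⟩
    · have h1 := hnum n (n + 1) (Nat.lt_succ_self n)
      have h2 := dgzSig_pos hδ (n + 1)
      linarith
    · intro x hx
      have hxn : dgzRad n / 2 ≤ ‖x - dgzPt f δ n‖ := by
        rw [← dist_eq_norm]
        have h1 := hpd n
        have h2 := dist_triangle x (dgzPt f δ n) p
        have h3 : dist (dgzPt f δ n) p = dist p (dgzPt f δ n) := dist_comm _ _
        linarith
      have h1 := hA n x hxn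
      have h2 := hGinf_ge (n + 1) x
      have h3 := hL1 n
      linarith
  exact ⟨φ, hC1, hdiff, hφ0, hφle, hfdn, p, hminp, hgap⟩

end Core

/-- The Deville–Godefroy–Zizler smooth variational principle in a real Hilbert space:
every proper, bounded below, lower semicontinuous `F : H → ℝ ∪ {+∞}` admits, for each `δ > 0`,
a bounded Lipschitz `C¹` perturbation `φ` with `‖φ‖_∞ < δ` and `‖Dφ‖_∞ < δ` such that `F - φ`
attains a strong minimum. -/
theorem smooth_variational_principle_hilbert
    {H : Type*} [NormedAddCommGroup H] [InnerProductSpace ℝ H] [CompleteSpace H]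
    (F : H → EReal) (hlsc : LowerSemicontinuous F)
    (hbdd : ∃ c : ℝ, ∀ x, (c : EReal) ≤ F x) (hproper : ∃ x, F x ≠ ⊤)
    (δ : ℝ) (hδ : 0 < δ) :
    ∃ φ : H → ℝ, ContDiff ℝ 1 φ ∧ (∃ K : NNReal, LipschitzWith K φ) ∧
      (∃ p : H, StrongMinAt (fun x => F x - ((φ x : ℝ) : EReal)) p) ∧
      ∃ c < δ, (∀ x, |φ x| ≤ c) ∧ ∀ x, ‖fderiv ℝ φ x‖ ≤ c := by
  obtain ⟨c0, hc0⟩ := hbdd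
  obtain ⟨x₀, hx₀⟩ := hproper
  set A : ℝ := (F x₀).toReal with hAdef
  set M : ℝ := max c0 A + δ + 1 with hMdef
  have hFbot : ∀ x, F x ≠ ⊥ := fun x => ((EReal.bot_lt_coe c0).trans_le (hc0 x)).ne'
  have hFx₀ : F x₀ = (A : EReal) := (EReal.coe_toReal hx₀ (hFbot x₀)).symm
  have hAM : A + δ + 1 ≤ M := by
    have := le_max_right c0 A; rw [hMdef]; linarith
  have hcM : c0 ≤ M := by
    have := le_max_left c0 A; rw [hMdef]; linarith
  set f : H → ℝ := fun x => (F x ⊓ (M : EReal)).toReal with hfdef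
  have hmin_ne_top : ∀ x, F x ⊓ (M : EReal) ≠ ⊤ :=
    fun x => ne_top_of_le_ne_top (EReal.coe_ne_top M) inf_le_right
  have hmin_lb : ∀ x, (c0 : EReal) ≤ F x ⊓ (M : EReal) :=
    fun x => le_inf (hc0 x) (EReal.coe_le_coe_iff.2 hcM)
  have hmin_ne_bot : ∀ x, F x ⊓ (M : EReal) ≠ ⊥ :=
    fun x => ((EReal.bot_lt_coe c0).trans_le (hmin_lb x)).ne'
  have hcoe : ∀ x, ((f x : ℝ) : EReal) = F x ⊓ (M : EReal) :=
    fun x => EReal.coe_toReal (hmin_ne_top x) (hmin_ne_bot x)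
  have hflb : ∀ x, c0 ≤ f x := by
    intro x
    have h1 := EReal.toReal_le_toReal (hmin_lb x) (EReal.coe_ne_bot c0) (hmin_ne_top x)
    simpa using h1
  have hflsc : LowerSemicontinuous f := by
    intro x y hy
    have h1 : (y : EReal) < F x ⊓ (M : EReal) := by
      rw [← hcoe x]; exact EReal.coe_lt_coe_iff.2 hy
    have h2 : (y : EReal) < F x := h1.trans_le inf_le_left
    have h3 : (y : EReal) < (M : EReal) := h1.trans_le inf_le_right
    filter_upwards [hlsc x (y : EReal) h2] with z hz
    have h4 : (y : EReal) < F z ⊓ (M : EReal) := lt_inf_iff.2 ⟨hz, h3⟩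
    rw [← hcoe z] at h4
    exact EReal.coe_lt_coe_iff.1 h4
  obtain ⟨φ, hC1, hdiff, hφ0, hφle, hfdn, p, hminp, hgap⟩ := dgz_core f hflsc hflb hδ
  have hfx₀ : f x₀ = A := by
    rw [hfdef]
    simp only []
    rw [hFx₀, inf_eq_left.2 (EReal.coe_le_coe_iff.2 (by linarith : A ≤ M))]
    exact EReal.toReal_coe A
  have hfpφ : f p - φ p ≤ A := by
    have h1 := hminp x₀
    have h2 := hφ0 x₀
    rw [hfx₀] at h1
    linarith
  have hMgap : ∀ x, (M : EReal) ≤ F x →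
      ((f p - φ p + 1 : ℝ) : EReal) ≤ F x - ((φ x : ℝ) : EReal) := by
    intro x hx
    have h1 : ((M - δ / 2 : ℝ) : EReal) ≤ F x - ((φ x : ℝ) : EReal) := by
      calc ((M - δ / 2 : ℝ) : EReal) = (M : EReal) - ((δ / 2 : ℝ) : EReal) := by
            rw [← EReal.coe_sub]
        _ ≤ F x - ((φ x : ℝ) : EReal) :=
            EReal.sub_le_sub hx (EReal.coe_le_coe_iff.2 (hφle x))
    refine le_trans (EReal.coe_le_coe_iff.2 ?_) h1
    linarith
  have hFpM : F p < (M : EReal) := by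
    by_contra hcon
    push_neg at hcon
    have h1 : f p = M := by
      rw [hfdef]
      simp only []
      rw [inf_eq_right.2 hcon]
      exact EReal.toReal_coe M
    have h2 := hφle p
    rw [h1] at hfpφ
    linarith
  have hcoex : ∀ x, F x < (M : EReal) → ((f x : ℝ) : EReal) = F x := by
    intro x hx
    rw [hcoe x, inf_eq_left.2 hx.le]
  have hL : F p - ((φ p : ℝ) : EReal) = ((f p - φ p : ℝ) : EReal) := by
    rw [← hcoex p hFpM, ← EReal.coe_sub]
  refine ⟨φ, hC1, ⟨(δ / 2).toNNReal, ?_⟩, ⟨p, ?_, ?_⟩, ⟨δ / 2, by linarith, ?_, hfdn⟩⟩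
  · apply lipschitzWith_of_nnnorm_fderiv_le hdiff
    intro x
    rw [← norm_toNNReal]
    exact Real.toNNReal_le_toNNReal (hfdn x)
  · -- minimality
    intro x
    show F p - ((φ p : ℝ) : EReal) ≤ F x - ((φ x : ℝ) : EReal)
    rcases lt_or_ge (F x) ((M : EReal)) with h | h
    · rw [hL, ← hcoex x h, ← EReal.coe_sub]
      exact EReal.coe_le_coe_iff.2 (hminp x)
    · refine le_trans ?_ (hMgap x h)
      rw [hL]
      exact EReal.coe_le_coe_iff.2 (by linarith)
  · -- minimizing sequences converge
    intro u hu
    rw [Metric.tendsto_atTop]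
    intro ρ hρ
    obtain ⟨γ, hγ, hgapρ⟩ := hgap ρ hρ
    set γ' : ℝ := min γ 1 with hγ'def
    have hγ' : 0 < γ' := lt_min hγ one_pos
    have hlt : F p - ((φ p : ℝ) : EReal) < ((f p - φ p + γ' : ℝ) : EReal) := by
      rw [hL]; exact EReal.coe_lt_coe_iff.2 (by linarith)
    have hev : ∀ᶠ n in atTop,
        F (u n) - ((φ (u n) : ℝ) : EReal) < ((f p - φ p + γ' : ℝ) : EReal) :=
      hu.eventually_lt_const hlt
    obtain ⟨N, hN⟩ := eventually_atTop.1 hev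
    refine ⟨N, fun n hn => ?_⟩
    have h1 := hN n hn
    have h2 : F (u n) < (M : EReal) := by
      by_contra hcon
      push_neg at hcon
      have h3 := hMgap (u n) hcon
      have h4 : ((f p - φ p + γ' : ℝ) : EReal) ≤ ((f p - φ p + 1 : ℝ) : EReal) :=
        EReal.coe_le_coe_iff.2 (by have := min_le_right γ 1; linarith)
      exact absurd (h1.trans_le h4) (not_lt.2 h3)
    have h5 : ((f (u n) - φ (u n) : ℝ) : EReal) < ((f p - φ p + γ' : ℝ) : EReal) := by
      rw [EReal.coe_sub, hcoex (u n) h2]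
      exact h1
    have h6 : f (u n) - φ (u n) < f p - φ p + γ := by
      have := EReal.coe_lt_coe_iff.1 h5
      have := min_le_left γ 1
      linarith
    by_contra hcon
    push_neg at hcon
    exact absurd (hgapρ (u n) hcon) (by linarith)
  · intro x
    exact abs_le.2 ⟨by have := hφ0 x; linarith, hφle x⟩
end

section
/- Let H be a real Hilbert space, f : H → ℝ ∪ {+∞} a function, p a point with f(p) < +∞, and ζ ∈ H*. The following are equivalent: (1) there exists a C¹ function φ : H → ℝ such that f − φ attains a local minimum at p and Dφ(p) = ζ; (2) there exists a function φ : H → ℝ which is Fréchet differentiable at p such that f − φ attains a local minimum at p and Dφ(p) = ζ; (3) liminf_{v→0} ( f(p+v) − f(p) − ζ(v) ) / ‖v‖ ≥ 0. -/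
open Filter Topology intervalIntegral


private theorem visc_eta_exists (ε : ℝ → ℝ) (hmono : Monotone ε) (hnn : ∀ t, 0 ≤ ε t)
    (hub : ∀ t, ε t ≤ 1) (hneg : ∀ t ≤ (0:ℝ), ε t = 0)
    (hlim : ∀ c > (0:ℝ), ∃ δ > (0:ℝ), ∀ t < δ, ε t ≤ c) :
    ∃ η d : ℝ → ℝ, ContDiff ℝ 1 η ∧ (∀ t, HasDerivAt η (d t) t) ∧ Continuous d ∧
      η 0 = 0 ∧ (∀ t, 0 ≤ t → η t ≤ -(t * ε t)) ∧
      (∀ t, 0 ≤ t → -(4 * t * ε (4 * t)) ≤ η t) ∧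
      (∀ t, 0 ≤ t → |d t| ≤ 4 * ε (4 * t)) := by
  have hint : ∀ a b : ℝ, IntervalIntegrable ε MeasureTheory.volume a b :=
    fun a b => hmono.intervalIntegrable
  set G : ℝ → ℝ := fun t => ∫ s in (0:ℝ)..t, ε s with hG
  have hGsub : ∀ a b : ℝ, G b - G a = ∫ s in a..b, ε s := by
    intro a b
    have := integral_add_adjacent_intervals (hint 0 a) (hint a b)
    simp only [hG]
    linarith [this]
  have hGlip : LipschitzWith 1 G := by
    apply LipschitzWith.of_dist_le_mul
    intro a b
    rw [Real.dist_eq, Real.dist_eq]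
    calc |G a - G b| = ‖∫ s in b..a, ε s‖ := by rw [← hGsub b a]; rfl
      _ ≤ 1 * |a - b| := norm_integral_le_of_norm_le_const (fun x _ => by
          rw [Real.norm_eq_abs, abs_of_nonneg (hnn x)]; exact hub x)
  have hGcont : Continuous G := hGlip.continuous
  have hGnn : ∀ t : ℝ, 0 ≤ t → 0 ≤ G t := fun t ht =>
    integral_nonneg ht (fun u _ => hnn u)
  have hGlb : ∀ t : ℝ, 0 < t → t * ε t ≤ G (2 * t) := by
    intro t ht
    have h1 : G (2 * t) - G t = ∫ s in t..(2 * t), ε s := hGsub t (2 * t)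
    have h2 : ∫ _s in t..(2 * t), ε t ≤ ∫ s in t..(2 * t), ε s :=
      integral_mono_on (by linarith) intervalIntegrable_const (hint t (2 * t))
        (fun x hx => hmono hx.1)
    rw [integral_const, smul_eq_mul] at h2
    have h3 := hGnn t ht.le
    nlinarith
  have hGub : ∀ t : ℝ, 0 ≤ t → G (2 * t) ≤ 2 * t * ε (2 * t) := by
    intro t ht
    have h2 : ∫ s in (0:ℝ)..(2 * t), ε s ≤ ∫ _s in (0:ℝ)..(2 * t), ε (2 * t) :=
      integral_mono_on (by linarith) (hint 0 (2 * t)) intervalIntegrable_const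
        (fun x hx => hmono hx.2)
    rw [integral_const, smul_eq_mul] at h2
    calc G (2 * t) ≤ (2 * t - 0) * ε (2 * t) := h2
      _ = 2 * t * ε (2 * t) := by ring
  set eb : ℝ → ℝ := fun t => if t ≤ 0 then 0 else G (2 * t) / t with heb
  have heb_nn : ∀ t, 0 ≤ eb t := by
    intro t
    simp only [heb]
    split
    · exact le_refl _
    · rename_i h
      push_neg at h
      exact div_nonneg (hGnn _ (by linarith)) h.le
  have heb_le : ∀ t, eb t ≤ 2 * ε (2 * t) := by
    intro t
    simp only [heb]
    split
    · exact mul_nonneg (by norm_num) (hnn _)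
    · rename_i h
      push_neg at h
      rw [div_le_iff₀ h]
      calc G (2 * t) ≤ 2 * t * ε (2 * t) := hGub t h.le
        _ = 2 * ε (2 * t) * t := by ring
  have heb_ge : ∀ t, 0 < t → ε t ≤ eb t := by
    intro t ht
    simp only [heb, if_neg (not_le.2 ht)]
    rw [le_div_iff₀ ht]
    calc ε t * t = t * ε t := by ring
      _ ≤ G (2 * t) := hGlb t ht
  have hεt0 : Tendsto ε (𝓝 0) (𝓝 0) := by
    rw [Metric.tendsto_nhds]
    intro c hc
    obtain ⟨δ, hδ, h⟩ := hlim (c / 2) (by linarith)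
    filter_upwards [Iio_mem_nhds hδ] with s hs
    rw [Real.dist_eq, sub_zero, abs_of_nonneg (hnn s)]
    linarith [h s hs]
  have h2e : Tendsto (fun s : ℝ => 2 * ε (2 * s)) (𝓝 0) (𝓝 0) := by
    have : Tendsto (fun s : ℝ => 2 * s) (𝓝 0) (𝓝 0) := by
      exact (continuous_const.mul continuous_id).tendsto' (0:ℝ) 0 (by simp)
    simpa using (hεt0.comp this).const_mul 2
  have heb_cont : Continuous eb := by
    rw [continuous_iff_continuousAt]
    intro t
    rcases lt_trichotomy t 0 with h | h | h
    · have hev : (fun _ : ℝ => (0:ℝ)) =ᶠ[𝓝 t] eb := by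
        filter_upwards [Iio_mem_nhds h] with s hs
        simp [heb, (Set.mem_Iio.1 hs).le]
      exact continuousAt_const.congr hev
    · subst h
      have h1 : ContinuousAt eb 0 ↔ Tendsto eb (𝓝 0) (𝓝 0) := by
        unfold ContinuousAt
        rw [show eb 0 = 0 by simp [heb]]
      rw [h1]
      exact squeeze_zero heb_nn heb_le h2e
    · have hev : (fun s => G (2 * s) / s) =ᶠ[𝓝 t] eb := by
        filter_upwards [Ioi_mem_nhds h] with s hs
        simp [heb, not_le.2 (Set.mem_Ioi.1 hs)]
      exact (((hGcont.comp (continuous_const.mul continuous_id)).continuousAt.div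
        continuousAt_id (ne_of_gt h)).congr hev)
  set F : ℝ → ℝ := fun u => ∫ s in (0:ℝ)..u, eb s with hF
  set η : ℝ → ℝ := fun t => -F (2 * t) with hη
  set d : ℝ → ℝ := fun t => -(2 * eb (2 * t)) with hd
  have hFd : ∀ u, HasDerivAt F (eb u) u := fun u =>
    (heb_cont.integral_hasStrictDerivAt 0 u).hasDerivAt
  have hder : ∀ t, HasDerivAt η (d t) t := by
    intro t
    have h1 : HasDerivAt (fun t : ℝ => 2 * t) 2 t := by
      simpa using (hasDerivAt_id t).const_mul 2
    have h2 := ((hFd (2 * t)).comp t h1).neg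
    simpa [hη, hd, mul_comm, Function.comp_def, Pi.neg_def] using h2
  have hcont_d : Continuous d :=
    (continuous_const.mul (heb_cont.comp (continuous_const.mul continuous_id))).neg
  have hcd : ContDiff ℝ 1 η := by
    rw [contDiff_one_iff_deriv]
    refine ⟨fun t => (hder t).differentiableAt, ?_⟩
    have h3 : deriv η = d := funext fun t => (hder t).deriv
    rw [h3]; exact hcont_d
  have hintb : ∀ a b : ℝ, IntervalIntegrable eb MeasureTheory.volume a b :=
    fun a b => heb_cont.intervalIntegrable a b
  refine ⟨η, d, hcd, hder, hcont_d, by simp [hη, hF], ?_, ?_, ?_⟩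
  · intro t ht
    rcases eq_or_lt_of_le ht with h | h
    · simp [hη, hF, ← h]
    · have hsplit : (∫ s in (0:ℝ)..t, eb s) + ∫ s in t..(2*t), eb s = F (2*t) :=
        integral_add_adjacent_intervals (hintb 0 t) (hintb t (2*t))
      have h1 : 0 ≤ ∫ s in (0:ℝ)..t, eb s := integral_nonneg ht (fun u _ => heb_nn u)
      have h2 : ∫ _s in t..(2*t), ε t ≤ ∫ s in t..(2*t), eb s :=
        integral_mono_on (by linarith) intervalIntegrable_const (hintb t (2*t))
          (fun x hx => le_trans (hmono hx.1) (heb_ge x (lt_of_lt_of_le h hx.1)))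
      rw [integral_const, smul_eq_mul] at h2
      simp only [hη]
      nlinarith
  · intro t ht
    have h2 : ∫ s in (0:ℝ)..(2*t), eb s ≤ ∫ _s in (0:ℝ)..(2*t), 2 * ε (4 * t) :=
      integral_mono_on (by linarith) (hintb 0 (2*t)) intervalIntegrable_const
        (fun x hx => le_trans (heb_le x)
          (by have := hmono (show 2*x ≤ 4*t by linarith [hx.2]); linarith))
    rw [integral_const, smul_eq_mul] at h2
    simp only [hη, hF]
    nlinarith
  · intro t ht
    simp only [hd, abs_neg]
    rw [abs_of_nonneg (mul_nonneg (by norm_num) (heb_nn _))]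
    have h1 : eb (2*t) ≤ 2 * ε (4*t) := by
      have h0 := heb_le (2*t)
      rw [show 2*(2*t) = 4*t by ring] at h0
      exact h0
    linarith

private theorem visc_psi_exists {H : Type*} [NormedAddCommGroup H] [InnerProductSpace ℝ H]
    (p : H) (ε : ℝ → ℝ) (hmono : Monotone ε) (hnn : ∀ t, 0 ≤ ε t)
    (hub : ∀ t, ε t ≤ 1) (hneg : ∀ t ≤ (0:ℝ), ε t = 0)
    (hlim : ∀ c > (0:ℝ), ∃ δ > (0:ℝ), ∀ t < δ, ε t ≤ c) :
    ∃ ψ : H → ℝ, ContDiff ℝ 1 ψ ∧ HasFDerivAt ψ (0 : H →L[ℝ] ℝ) p ∧ ψ p = 0 ∧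
      ∀ x : H, ψ x ≤ -(‖x - p‖ * ε ‖x - p‖) := by
  obtain ⟨η, d, hcd, hder, hcont_d, hη0, hηub, hηlb, hdb⟩ :=
    visc_eta_exists ε hmono hnn hub hneg hlim
  have hεt0 : Tendsto ε (𝓝 0) (𝓝 0) := by
    rw [Metric.tendsto_nhds]
    intro c hc
    obtain ⟨δ, hδ, h⟩ := hlim (c / 2) (by linarith)
    filter_upwards [Iio_mem_nhds hδ] with s hs
    rw [Real.dist_eq, sub_zero, abs_of_nonneg (hnn s)]
    linarith [h s hs]
  set n : H → ℝ := fun x => ‖x - p‖ with hn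
  set ψ : H → ℝ := fun x => η (n x) with hψ
  have hn_lip : LipschitzWith 1 n := by
    apply LipschitzWith.of_dist_le_mul
    intro a b
    rw [Real.dist_eq, dist_eq_norm]
    simpa using abs_norm_sub_norm_le (a - p) (b - p) |>.trans (by
      rw [show a - p - (b - p) = a - b by abel])
  have habs : ∀ t : ℝ, 0 ≤ t → |η t| ≤ 4 * t * ε (4 * t) := by
    intro t ht
    rw [abs_le]
    constructor
    · linarith [hηlb t ht]
    · have := hηub t ht
      nlinarith [mul_nonneg ht (hnn t), mul_nonneg (mul_nonneg (by norm_num : (0:ℝ) ≤ 4) ht) (hnn (4*t))]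
  have hFp : HasFDerivAt ψ (0 : H →L[ℝ] ℝ) p := by
    rw [hasFDerivAt_iff_isLittleO_nhds_zero]
    rw [Asymptotics.isLittleO_iff]
    intro c hc
    obtain ⟨δ, hδ, h⟩ := hlim (c / 4) (by linarith)
    filter_upwards [Metric.ball_mem_nhds (0:H) (show 0 < δ/4 by linarith)] with v hv
    have hv' : ‖v‖ < δ / 4 := by simpa [dist_eq_norm] using hv
    have h1 : ψ (p + v) - ψ p - (0 : H →L[ℝ] ℝ) v = η ‖v‖ := by
      simp [hψ, hn, hη0]
    rw [h1, Real.norm_eq_abs]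
    calc |η ‖v‖| ≤ 4 * ‖v‖ * ε (4 * ‖v‖) := habs _ (norm_nonneg v)
      _ ≤ 4 * ‖v‖ * (c/4) := by
          have := h (4 * ‖v‖) (by linarith)
          nlinarith [norm_nonneg v]
      _ = c * ‖v‖ := by ring
  have hψp0 : ψ p = 0 := by simp [hψ, hn, hη0]
  have hcd_ne : ∀ x : H, x ≠ p → ContDiffAt ℝ 1 ψ x := by
    intro x hx
    have h1 : ContDiffAt ℝ 1 n x := by
      have h2 : ContDiffAt ℝ 1 (fun y : H => ‖y‖) (x - p) :=
        contDiffAt_norm ℝ (sub_ne_zero.2 hx)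
      exact h2.comp x ((contDiff_id.sub contDiff_const).contDiffAt)
    exact hcd.contDiffAt.comp x h1
  have hdiff : Differentiable ℝ ψ := by
    intro x
    by_cases hx : x = p
    · subst hx; exact hFp.differentiableAt
    · exact (hcd_ne x hx).differentiableAt one_ne_zero
  have hfd_bound : ∀ x : H, ‖fderiv ℝ ψ x‖ ≤ 4 * ε (4 * ‖x - p‖) := by
    intro x
    by_cases hx : x = p
    · subst hx
      rw [hFp.fderiv]
      simpa using mul_nonneg (by norm_num : (0:ℝ) ≤ 4) (hnn (4 * ‖x - x‖))
    · have hnd : HasFDerivAt n (fderiv ℝ n x) x := by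
        have h1 : ContDiffAt ℝ 1 n x := by
          have h2 : ContDiffAt ℝ 1 (fun y : H => ‖y‖) (x - p) :=
            contDiffAt_norm ℝ (sub_ne_zero.2 hx)
          exact h2.comp x ((contDiff_id.sub contDiff_const).contDiffAt)
        exact (h1.differentiableAt one_ne_zero).hasFDerivAt
      have hcomp : HasFDerivAt ψ (d (n x) • fderiv ℝ n x) x :=
        (hder (n x)).comp_hasFDerivAt x hnd
      rw [hcomp.fderiv]
      calc ‖d (n x) • fderiv ℝ n x‖ = |d (n x)| * ‖fderiv ℝ n x‖ := by
            rw [norm_smul, Real.norm_eq_abs]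
        _ ≤ |d (n x)| * 1 :=
            mul_le_mul_of_nonneg_left
              (by simpa using norm_fderiv_le_of_lipschitz (𝕜 := ℝ) (x₀ := x) hn_lip)
              (abs_nonneg _)
        _ ≤ 4 * ε (4 * ‖x - p‖) := by
            rw [mul_one]
            exact hdb (n x) (norm_nonneg _)
  have hfcont : Continuous (fderiv ℝ ψ) := by
    rw [continuous_iff_continuousAt]
    intro x
    by_cases hx : x = p
    · subst hx
      have h0 : fderiv ℝ ψ x = 0 := hFp.fderiv
      unfold ContinuousAt
      rw [h0]
      apply squeeze_zero_norm hfd_bound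
      have h1 : Tendsto (fun y : H => 4 * ‖y - x‖) (𝓝 x) (𝓝 0) := by
        have h3 : Continuous (fun y : H => ‖y - x‖) :=
          (continuous_id.sub continuous_const).norm
        have h2 : Tendsto (fun y : H => ‖y - x‖) (𝓝 x) (𝓝 0) := by
          simpa using h3.tendsto x
        simpa using h2.const_mul (4:ℝ)
      have h4 := (hεt0.comp h1).const_mul (4:ℝ)
      simpa using h4
    · have hopen : IsOpen ({p}ᶜ : Set H) := isOpen_compl_singleton
      have hCO : ContDiffOn ℝ 1 ψ ({p}ᶜ : Set H) := fun y hy =>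
        (hcd_ne y hy).contDiffWithinAt
      exact (hCO.continuousOn_fderiv_of_isOpen hopen le_rfl).continuousAt
        (hopen.mem_nhds hx)
  refine ⟨ψ, contDiff_one_iff_fderiv.2 ⟨hdiff, hfcont⟩, hFp, hψp0, ?_⟩
  intro x
  exact hηub (n x) (norm_nonneg _)


private theorem visc_two_to_three {H : Type*} [NormedAddCommGroup H] [InnerProductSpace ℝ H] [CompleteSpace H]
    (f : H → EReal) (hbot : ∀ x, f x ≠ ⊥) (p : H) (hp : f p ≠ ⊤) (ζ : H →L[ℝ] ℝ)
    (φ : H → ℝ) (hdiff : DifferentiableAt ℝ φ p) (hfd : fderiv ℝ φ p = ζ)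
    (hmin : ∀ᶠ x in 𝓝 p, f p - ((φ p : ℝ) : EReal) ≤ f x - ((φ x : ℝ) : EReal)) :
    (0 : EReal) ≤ liminf
        (fun v : H => (f (p + v) - f p - ((ζ v : ℝ) : EReal)) / ((‖v‖ : ℝ) : EReal))
        (𝓝[≠] (0 : H)) := by
  set a : ℝ := (f p).toReal with ha
  have hfa : f p = (a : EReal) := (EReal.coe_toReal hp (hbot p)).symm
  rw [le_liminf_iff]
  intro y hy
  obtain ⟨c, hyc, hc0⟩ := EReal.exists_between_coe_real hy
  have hc0' : c < 0 := by exact_mod_cast hc0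
  have hφ : HasFDerivAt φ ζ p := hfd ▸ hdiff.hasFDerivAt
  have hlittle := hasFDerivAt_iff_isLittleO_nhds_zero.1 hφ
  rw [Asymptotics.isLittleO_iff] at hlittle
  have hsmall := hlittle (show (0:ℝ) < -c by linarith)
  have hadd : Tendsto (fun v : H => p + v) (𝓝 0) (𝓝 p) := by
    have h : Continuous (fun v : H => p + v) := continuous_const.add continuous_id
    simpa using h.tendsto (0 : H)
  have hmin' : ∀ᶠ v in 𝓝 (0 : H), f p - ((φ p : ℝ) : EReal) ≤ f (p + v) - ((φ (p + v) : ℝ) : EReal) :=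
    hadd.eventually hmin
  have hev : ∀ᶠ v in 𝓝[≠] (0 : H),
      y < (f (p + v) - f p - ((ζ v : ℝ) : EReal)) / ((‖v‖ : ℝ) : EReal) := by
    rw [eventually_nhdsWithin_iff]
    filter_upwards [hsmall, hmin'] with v h1 h2 hv
    have hv0 : v ≠ 0 := by simpa using hv
    have hnv : (0:ℝ) < ‖v‖ := norm_pos_iff.2 hv0
    by_cases htop : f (p + v) = ⊤
    · rw [htop, hfa, EReal.top_sub_coe, EReal.top_sub_coe,
        EReal.top_div_of_pos_ne_top (by exact_mod_cast hnv) (EReal.coe_ne_top _)]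
      exact hyc.trans_le le_top
    · set b : ℝ := (f (p + v)).toReal with hb
      have hfb : f (p + v) = (b : EReal) := (EReal.coe_toReal htop (hbot _)).symm
      rw [hfb, hfa] at h2 ⊢
      have h2' : a - φ p ≤ b - φ (p + v) := by exact_mod_cast h2
      have h1' : c * ‖v‖ ≤ φ (p + v) - φ p - ζ v := by
        rw [Real.norm_eq_abs] at h1
        have h1'' := (abs_le.1 h1).1
        nlinarith
      refine hyc.trans_le ?_
      rw [show ((b:EReal) - (a:EReal) - ((ζ v : ℝ):EReal)) / ((‖v‖:ℝ):EReal)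
          = (((b - a - ζ v) / ‖v‖ : ℝ) : EReal) by
        rw [← EReal.coe_sub, ← EReal.coe_sub, ← EReal.coe_div]]
      rw [EReal.coe_le_coe_iff, le_div_iff₀ hnv]
      nlinarith
  exact hev

private theorem visc_three_to_one {H : Type*} [NormedAddCommGroup H] [InnerProductSpace ℝ H]
    [CompleteSpace H]
    (f : H → EReal) (hbot : ∀ x, f x ≠ ⊥) (p : H) (hp : f p ≠ ⊤) (ζ : H →L[ℝ] ℝ)
    (h3 : (0 : EReal) ≤ liminf
        (fun v : H => (f (p + v) - f p - ((ζ v : ℝ) : EReal)) / ((‖v‖ : ℝ) : EReal))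
        (𝓝[≠] (0 : H))) :
    ∃ φ : H → ℝ, ContDiff ℝ 1 φ ∧ fderiv ℝ φ p = ζ ∧
      ∀ᶠ x in 𝓝 p, f p - ((φ p : ℝ) : EReal) ≤ f x - ((φ x : ℝ) : EReal) := by
  set a : ℝ := (f p).toReal with ha
  have hfa : f p = (a : EReal) := (EReal.coe_toReal hp (hbot p)).symm
  set Q : H → EReal :=
    fun v => (f (p + v) - f p - ((ζ v : ℝ) : EReal)) / ((‖v‖ : ℝ) : EReal) with hQdef
  -- case analysis on the value of Q
  have hcaseQ : ∀ v : H, v ≠ 0 →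
      (f (p + v) - f p - ((ζ v : ℝ) : EReal) = ⊤ ∧ Q v = ⊤) ∨
      (∃ q : ℝ, f (p + v) - f p - ((ζ v : ℝ) : EReal) = (q : EReal) ∧
        Q v = ((q / ‖v‖ : ℝ) : EReal)) := by
    intro v hv
    have hnv : (0:ℝ) < ‖v‖ := norm_pos_iff.2 hv
    by_cases htop : f (p + v) = ⊤
    · left
      have h1 : f (p + v) - f p - ((ζ v : ℝ) : EReal) = ⊤ := by
        rw [htop, hfa, EReal.top_sub_coe, EReal.top_sub_coe]
      exact ⟨h1, by
        rw [hQdef]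
        simp only
        rw [h1, EReal.top_div_of_pos_ne_top (by exact_mod_cast hnv) (EReal.coe_ne_top _)]⟩
    · right
      set b : ℝ := (f (p + v)).toReal with hb
      have hfb : f (p + v) = (b : EReal) := (EReal.coe_toReal htop (hbot _)).symm
      refine ⟨b - a - ζ v, ?_, ?_⟩
      · rw [hfb, hfa, ← EReal.coe_sub, ← EReal.coe_sub]
      · rw [hQdef]
        simp only
        rw [hfb, hfa, ← EReal.coe_sub, ← EReal.coe_sub, ← EReal.coe_div]
  have hev : ∀ c : ℝ, 0 < c → ∃ r > (0:ℝ), ∀ v : H, v ≠ 0 → ‖v‖ < r →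
      ((-c : ℝ) : EReal) < Q v := by
    intro c hc
    have h := ((le_liminf_iff (by isBoundedDefault) (by isBoundedDefault)).1 h3)
      ((-c : ℝ) : EReal) (by exact_mod_cast neg_lt_zero.2 hc)
    rw [eventually_nhdsWithin_iff, Metric.eventually_nhds_iff] at h
    obtain ⟨r, hr, h⟩ := h
    exact ⟨r, hr, fun v hv hvr =>
      h (by simpa [dist_eq_norm] using hvr) (by simpa using hv)⟩
  set rr : H → ℝ := fun v => max (-((Q v).toReal)) 0 with hrr
  have hrr_nn : ∀ v, 0 ≤ rr v := fun v => le_max_right _ _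
  have hrr_le : ∀ c : ℝ, 0 < c → ∃ r > (0:ℝ), ∀ v : H, v ≠ 0 → ‖v‖ < r → rr v ≤ c := by
    intro c hc
    obtain ⟨r, hr, h⟩ := hev c hc
    refine ⟨r, hr, fun v hv hvr => ?_⟩
    rcases hcaseQ v hv with ⟨_, hQt⟩ | ⟨q, _, hQq⟩
    · simp [hrr, hQt, hc.le]
    · have h1 := h v hv hvr
      rw [hQq, EReal.coe_lt_coe_iff] at h1
      simp only [hrr, hQq, EReal.toReal_coe]
      exact max_le (by linarith) hc.le
  have hrr_key : ∀ v : H, v ≠ 0 →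
      ((-(rr v * ‖v‖) : ℝ) : EReal) ≤ f (p + v) - f p - ((ζ v : ℝ) : EReal) := by
    intro v hv
    have hnv : (0:ℝ) < ‖v‖ := norm_pos_iff.2 hv
    rcases hcaseQ v hv with ⟨hgt, _⟩ | ⟨q, hgq, hQq⟩
    · rw [hgt]; exact le_top
    · rw [hgq, EReal.coe_le_coe_iff]
      have h1 : -(q / ‖v‖) ≤ rr v := by
        simp only [hrr, hQq, EReal.toReal_coe]
        exact le_max_left _ _
      have h2 : -(q / ‖v‖) * ‖v‖ ≤ rr v * ‖v‖ :=
        mul_le_mul_of_nonneg_right h1 (norm_nonneg v)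
      rw [neg_mul, div_mul_cancel₀ _ (ne_of_gt hnv)] at h2
      linarith
  obtain ⟨r₁, hr₁, hbnd₁⟩ := hrr_le 1 one_pos
  set t₀ : ℝ := r₁ / 2 with ht₀
  have ht₀pos : 0 < t₀ := by positivity
  have ht₀lt : t₀ < r₁ := by simp [ht₀]; linarith
  have hrr1 : ∀ v : H, v ≠ 0 → ‖v‖ ≤ t₀ → rr v ≤ 1 :=
    fun v hv h => hbnd₁ v hv (lt_of_le_of_lt h ht₀lt)
  set ε : ℝ → ℝ :=
    fun t => sSup (insert 0 (rr '' {v : H | v ≠ 0 ∧ ‖v‖ ≤ min t t₀})) with hε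
  have hbdd : ∀ t : ℝ, ∀ x ∈ insert 0 (rr '' {v : H | v ≠ 0 ∧ ‖v‖ ≤ min t t₀}), x ≤ 1 := by
    intro t x hx
    rcases Set.mem_insert_iff.1 hx with h | ⟨v, ⟨hv, hvt⟩, rfl⟩
    · rw [h]; norm_num
    · exact hrr1 v hv (hvt.trans (min_le_right _ _))
  have hBdd : ∀ t : ℝ, BddAbove (insert 0 (rr '' {v : H | v ≠ 0 ∧ ‖v‖ ≤ min t t₀})) :=
    fun t => ⟨1, fun x hx => hbdd t x hx⟩
  have hεnn : ∀ t, 0 ≤ ε t := fun t => le_csSup (hBdd t) (Set.mem_insert _ _)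
  have hεub : ∀ t, ε t ≤ 1 := fun t =>
    csSup_le (Set.insert_nonempty _ _) (hbdd t)
  have hεmono : Monotone ε := by
    intro s t hst
    apply csSup_le_csSup (hBdd t) (Set.insert_nonempty _ _)
    apply Set.insert_subset_insert
    apply Set.image_mono
    exact fun v hv => ⟨hv.1, hv.2.trans (min_le_min hst le_rfl)⟩
  have hεneg : ∀ t ≤ (0:ℝ), ε t = 0 := by
    intro t ht
    have hS : {v : H | v ≠ 0 ∧ ‖v‖ ≤ min t t₀} = ∅ := by
      ext v
      simp only [Set.mem_setOf_eq, Set.mem_empty_iff_false, iff_false, not_and]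
      intro hv hle
      have : (0:ℝ) < ‖v‖ := norm_pos_iff.2 hv
      have : min t t₀ ≤ t := min_le_left _ _
      linarith
    rw [hε]
    simp only [hS, Set.image_empty, LawfulSingleton.insert_empty_eq]
    exact csSup_singleton 0
  have hεlim : ∀ c > (0:ℝ), ∃ δ > (0:ℝ), ∀ t < δ, ε t ≤ c := by
    intro c hc
    obtain ⟨r, hr, h⟩ := hrr_le c hc
    refine ⟨r, hr, fun t htr => ?_⟩
    apply csSup_le (Set.insert_nonempty _ _)
    intro x hx
    rcases Set.mem_insert_iff.1 hx with h' | ⟨v, ⟨hv, hvt⟩, rfl⟩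
    · rw [h']; exact hc.le
    · exact h v hv (lt_of_le_of_lt (hvt.trans (min_le_left _ _)) htr)
  have hεkey : ∀ v : H, v ≠ 0 → ‖v‖ ≤ t₀ → rr v ≤ ε ‖v‖ := by
    intro v hv hvt
    exact le_csSup (hBdd _)
      (Set.mem_insert_iff.2 (Or.inr ⟨v, ⟨hv, le_min le_rfl hvt⟩, rfl⟩))
  obtain ⟨ψ, hψcd, hψF, hψ0, hψle⟩ := visc_psi_exists p ε hεmono hεnn hεub hεneg hεlim
  set φ : H → ℝ := fun x => ζ (x - p) + ψ x with hφ
  have hζc : ContDiff ℝ 1 (fun x : H => ζ (x - p)) :=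
    ζ.contDiff.comp (contDiff_id.sub contDiff_const)
  have hζF : HasFDerivAt (fun x : H => ζ (x - p)) ζ p := by
    have h1 : HasFDerivAt (fun x : H => x - p) (ContinuousLinearMap.id ℝ H) p :=
      (hasFDerivAt_id p).sub_const p
    have h2 := ζ.hasFDerivAt.comp p h1
    have heq : (fun x : H => ζ (x - p)) = ⇑ζ ∘ fun x : H => x - p := rfl
    rw [heq]
    exact (ContinuousLinearMap.comp_id ζ) ▸ h2
  have hφF : HasFDerivAt φ ζ p := by
    have h5 := hζF.add hψF
    rw [add_zero] at h5
    exact h5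
  have hφp : φ p = 0 := by simp [hφ, hψ0]
  refine ⟨φ, hζc.add hψcd, hφF.fderiv, ?_⟩
  filter_upwards [Metric.ball_mem_nhds p ht₀pos] with x hx
  by_cases hxp : x = p
  · subst hxp; exact le_refl _
  · have hv0 : x - p ≠ 0 := sub_ne_zero.2 hxp
    have hvt : ‖x - p‖ ≤ t₀ := le_of_lt (by simpa [dist_eq_norm] using hx)
    have hpv : p + (x - p) = x := by abel
    have hkey := hrr_key (x - p) hv0
    rw [hpv] at hkey
    have hchain : φ x ≤ ζ (x - p) - rr (x - p) * ‖x - p‖ := by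
      have h1 : ψ x ≤ -(‖x - p‖ * ε ‖x - p‖) := hψle x
      have h2 : rr (x - p) ≤ ε ‖x - p‖ := hεkey (x - p) hv0 hvt
      have h3 : ‖x - p‖ * rr (x - p) ≤ ‖x - p‖ * ε ‖x - p‖ :=
        mul_le_mul_of_nonneg_left h2 (norm_nonneg _)
      simp only [hφ]
      nlinarith
    by_cases htop : f x = ⊤
    · rw [htop, EReal.top_sub_coe]
      exact le_top
    · set b : ℝ := (f x).toReal with hb
      have hfb : f x = (b : EReal) := (EReal.coe_toReal htop (hbot _)).symm
      rw [hfb, hfa] at hkey ⊢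
      rw [← EReal.coe_sub, ← EReal.coe_sub, EReal.coe_le_coe_iff] at hkey
      rw [← EReal.coe_sub, ← EReal.coe_sub, EReal.coe_le_coe_iff]
      rw [hφp]
      linarith [hchain]


/-- Characterizations of the viscosity subdifferential in a real Hilbert space: for
`f : H → ℝ ∪ {+∞}` finite at `p` and `ζ ∈ H*`, the following are equivalent:
(1) `ζ = Dφ(p)` for some `C¹` function `φ` such that `f - φ` has a local minimum at `p`;
(2) the same with `φ` merely Fréchet differentiable at `p`;
(3) `liminf_{v → 0} (f(p+v) - f(p) - ζ(v))/‖v‖ ≥ 0`. -/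
theorem subdifferential_characterizations
    {H : Type*} [NormedAddCommGroup H] [InnerProductSpace ℝ H] [CompleteSpace H]
    (f : H → EReal) (hbot : ∀ x, f x ≠ ⊥) (p : H) (hp : f p ≠ ⊤) (ζ : H →L[ℝ] ℝ) :
    List.TFAE
      [(∃ φ : H → ℝ, ContDiff ℝ 1 φ ∧ fderiv ℝ φ p = ζ ∧
          ∀ᶠ x in 𝓝 p, f p - ((φ p : ℝ) : EReal) ≤ f x - ((φ x : ℝ) : EReal)),
       (∃ φ : H → ℝ, DifferentiableAt ℝ φ p ∧ fderiv ℝ φ p = ζ ∧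
          ∀ᶠ x in 𝓝 p, f p - ((φ p : ℝ) : EReal) ≤ f x - ((φ x : ℝ) : EReal)),
       (0 : EReal) ≤ liminf
          (fun v : H => (f (p + v) - f p - ((ζ v : ℝ) : EReal)) / ((‖v‖ : ℝ) : EReal))
          (𝓝[≠] (0 : H))] := by
  tfae_have 1 → 2 := by
    rintro ⟨φ, hφ, h1, h2⟩
    exact ⟨φ, (hφ.differentiable one_ne_zero).differentiableAt, h1, h2⟩
  tfae_have 2 → 3 := by
    rintro ⟨φ, hd, hfd, hmin⟩
    exact visc_two_to_three f hbot p hp ζ φ hd hfd hmin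
  tfae_have 3 → 1 := visc_three_to_one f hbot p hp ζ
  tfae_finish
end

section
/- Let H be a real Hilbert space and f : H → ℝ ∪ {+∞} a function which is locally bounded below, i.e. every point of H has a neighborhood on which f is bounded below. Let p be a point with f(p) < +∞ and let ζ ∈ H*. Then ζ ∈ D⁻f(p) if and only if there exists a C¹ function φ : H → ℝ such that f − φ attains a global minimum at p and Dφ(p) = ζ. -/
open Filter Topology

section Moreau
variable {H : Type*} [NormedAddCommGroup H] [InnerProductSpace ℝ H] [CompleteSpace H]

local notation "⟪" x ", " y "⟫" => @inner ℝ _ _ x y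

set_option maxHeartbeats 2000000 in
/-- Moreau–Yosida double envelope: any globally `1`-Lipschitz function on a real Hilbert
space can be uniformly approximated by `C¹` functions. -/
theorem moreau_c1 (v : H → ℝ) (hv : ∀ a b : H, v a ≤ v b + ‖a - b‖)
    {l : ℝ} (hl : 0 < l) :
    ∃ w : H → ℝ, ContDiff ℝ 1 w ∧ ∀ x, |w x - v x| ≤ l := by
  classical
  have hne : Nonempty H := ⟨0⟩
  -- the inf-envelope v1
  set v1 : H → ℝ := fun z => ⨅ y : H, (v y + ‖z - y‖ ^ 2 / (2 * l)) with hv1def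
  have hterm_ge : ∀ z y : H, v z - l / 2 ≤ v y + ‖z - y‖ ^ 2 / (2 * l) := by
    intro z y
    have h1 := hv z y
    have h2 : 0 ≤ (‖z - y‖ - l) ^ 2 / (2 * l) := by positivity
    have h3 : (‖z - y‖ - l) ^ 2 / (2 * l) = ‖z - y‖ ^ 2 / (2 * l) - ‖z - y‖ + l / 2 := by
      field_simp; ring
    linarith [h3 ▸ h2]
  have hbdd : ∀ z : H, BddBelow (Set.range fun y => v y + ‖z - y‖ ^ 2 / (2 * l)) := by
    intro z; exact ⟨v z - l / 2, by rintro _ ⟨y, rfl⟩; exact hterm_ge z y⟩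
  have hv1_le : ∀ z y : H, v1 z ≤ v y + ‖z - y‖ ^ 2 / (2 * l) := fun z y => ciInf_le (hbdd z) y
  have hv1_le_self : ∀ z, v1 z ≤ v z := by
    intro z
    have := hv1_le z z
    simpa using this
  have hv1_ge : ∀ z, v z - l / 2 ≤ v1 z := fun z => le_ciInf (hterm_ge z)
  -- v1 is 1-Lipschitz
  have hv1_lip : ∀ a b : H, v1 a ≤ v1 b + ‖a - b‖ := by
    intro a b
    have key : ∀ y : H, v1 a - ‖a - b‖ ≤ v y + ‖b - y‖ ^ 2 / (2 * l) := by
      intro y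
      have h1 : v1 a ≤ v (y + (a - b)) + ‖a - (y + (a - b))‖ ^ 2 / (2 * l) := hv1_le a _
      have h2 : a - (y + (a - b)) = b - y := by abel
      have h3 : v (y + (a - b)) ≤ v y + ‖a - b‖ := by
        have := hv (y + (a - b)) y
        simpa using this
      rw [h2] at h1; linarith
    linarith [le_ciInf key]
  -- parallelogram identity in convenient form
  have hpar : ∀ a b c : H, ‖a - c‖ ^ 2 + ‖b - c‖ ^ 2
      = 2 * ‖(2:ℝ)⁻¹ • (a + b) - c‖ ^ 2 + ‖a - b‖ ^ 2 / 2 := by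
    intro a b c
    have h := parallelogram_law_with_norm ℝ ((2:ℝ)⁻¹ • (a + b) - c) ((2:ℝ)⁻¹ • (a - b))
    have e1 : (2:ℝ)⁻¹ • (a + b) - c + (2:ℝ)⁻¹ • (a - b) = a - c := by
      module
    have e2 : (2:ℝ)⁻¹ • (a + b) - c - (2:ℝ)⁻¹ • (a - b) = b - c := by
      module
    rw [e1, e2] at h
    have e3 : ‖(2:ℝ)⁻¹ • (a - b)‖ ^ 2 = ‖a - b‖ ^ 2 / 4 := by
      rw [norm_smul]
      have : ‖(2:ℝ)⁻¹‖ = 2⁻¹ := by norm_num [Real.norm_eq_abs]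
      rw [this, mul_pow]
      ring
    rw [e3] at h
    linarith
  -- the objective of the second envelope
  set Obj : H → H → ℝ := fun x z => ‖x - z‖ ^ 2 / l - v1 z with hObjdef
  have hObj_ge : ∀ x z, -v x - l / 4 ≤ Obj x z := by
    intro x z
    have h1 : v1 z ≤ v z := hv1_le_self z
    have h2 : v z ≤ v x + ‖z - x‖ := hv z x
    have h3 : ‖z - x‖ = ‖x - z‖ := norm_sub_rev _ _
    have h4 : 0 ≤ (‖x - z‖ - l / 2) ^ 2 / l := by positivity
    have h5 : (‖x - z‖ - l / 2) ^ 2 / l = ‖x - z‖ ^ 2 / l - ‖x - z‖ + l / 4 := by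
      field_simp; ring
    rw [h3] at h2
    simp only [hObjdef]
    linarith [h5 ▸ h4]
  have hObjbdd : ∀ x : H, BddBelow (Set.range (Obj x)) := by
    intro x; exact ⟨-v x - l / 4, by rintro _ ⟨z, rfl⟩; exact hObj_ge x z⟩
  -- midpoint ("strong concavity") inequality for Obj
  have hmid : ∀ x z z' : H, Obj x ((2:ℝ)⁻¹ • (z + z'))
      ≤ (Obj x z + Obj x z') / 2 - ‖z - z'‖ ^ 2 / (8 * l) := by
    intro x z z'
    set m := (2:ℝ)⁻¹ • (z + z') with hm
    -- lower bound for v1 m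
    have hv1m : (v1 z + v1 z') / 2 - ‖z - z'‖ ^ 2 / (8 * l) ≤ v1 m := by
      apply le_ciInf
      intro y
      have h1 : v1 z ≤ v y + ‖z - y‖ ^ 2 / (2 * l) := hv1_le z y
      have h2 : v1 z' ≤ v y + ‖z' - y‖ ^ 2 / (2 * l) := hv1_le z' y
      have hA : ‖z - y‖ ^ 2 + ‖z' - y‖ ^ 2 = 2 * ‖m - y‖ ^ 2 + ‖z - z'‖ ^ 2 / 2 := hpar z z' y
      have hA' : ‖z - y‖ ^ 2 / (2 * l) + ‖z' - y‖ ^ 2 / (2 * l)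
          = ‖m - y‖ ^ 2 / l + ‖z - z'‖ ^ 2 / (4 * l) := by
        linear_combination hA / (2 * l)
      have e2 : ‖m - y‖ ^ 2 / l = 2 * (‖m - y‖ ^ 2 / (2 * l)) := by ring
      have e3 : ‖z - z'‖ ^ 2 / (4 * l) = 2 * (‖z - z'‖ ^ 2 / (8 * l)) := by ring
      linarith [h1, h2, hA', e2, e3]
    have hB : ‖z - x‖ ^ 2 + ‖z' - x‖ ^ 2 = 2 * ‖m - x‖ ^ 2 + ‖z - z'‖ ^ 2 / 2 := hpar z z' x
    have hB' : ‖x - z‖ ^ 2 / l + ‖x - z'‖ ^ 2 / l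
        = 2 * ‖x - m‖ ^ 2 / l + ‖z - z'‖ ^ 2 / (2 * l) := by
      rw [norm_sub_rev x z, norm_sub_rev x z', norm_sub_rev x m]
      linear_combination hB / l
    have e4 : ‖z - z'‖ ^ 2 / (2 * l) = 4 * (‖z - z'‖ ^ 2 / (8 * l)) := by ring
    have e5 : 2 * ‖x - m‖ ^ 2 / l = 2 * (‖x - m‖ ^ 2 / l) := by ring
    simp only [hObjdef]
    linarith [hv1m, hB', e4, e5]
  -- the double envelope e
  set e : H → ℝ := fun x => ⨅ z : H, Obj x z with hedef
  have he_le : ∀ x z, e x ≤ Obj x z := fun x z => ciInf_le (hObjbdd x) z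
  have he_ge : ∀ x, -v x - l / 4 ≤ e x := fun x => le_ciInf (hObj_ge x)
  -- v1 is continuous
  have hv1cont : Continuous v1 := by
    have : LipschitzWith 1 v1 := by
      apply LipschitzWith.of_dist_le_mul
      intro a b
      rw [Real.dist_eq, dist_eq_norm, NNReal.coe_one, one_mul, abs_sub_le_iff]
      constructor
      · have := hv1_lip a b; linarith
      · have := hv1_lip b a; rw [norm_sub_rev] at this; linarith
    exact this.continuous
  have hObjcont : ∀ x, Continuous (Obj x) := by
    intro x
    simp only [hObjdef]
    exact (((continuous_const.sub continuous_id).norm.pow 2).div_const l).sub hv1cont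
  -- existence of a minimizer for Obj x
  have hZex : ∀ x : H, ∃ z0 : H, ∀ z, Obj x z0 ≤ Obj x z := by
    intro x
    have hseq : ∀ k : ℕ, ∃ z, Obj x z < e x + 1 / (k + 1) := by
      intro k
      apply exists_lt_of_ciInf_lt
      have : (0:ℝ) < 1 / (k + 1) := by positivity
      linarith
    choose seq hseq using hseq
    have hCauchy : CauchySeq seq := by
      rw [Metric.cauchySeq_iff']
      intro ε hε
      obtain ⟨N, hN⟩ := exists_nat_gt (16 * l / ε ^ 2)
      refine ⟨N, fun n hn => ?_⟩
      have h1 := hseq n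
      have h2 := hseq N
      have hm := hmid x (seq n) (seq N)
      have hem : e x ≤ Obj x ((2:ℝ)⁻¹ • (seq n + seq N)) := he_le x _
      have hNn : 1 / ((n:ℝ) + 1) ≤ 1 / ((N:ℝ) + 1) := by
        apply one_div_le_one_div_of_le (by positivity)
        exact_mod_cast by omega
      have hsq : ‖seq n - seq N‖ ^ 2 / (8 * l) < 1 / ((N:ℝ) + 1) := by linarith
      have hsq2 : ‖seq n - seq N‖ ^ 2 < 8 * l / ((N:ℝ) + 1) := by
        have h8 : (0:ℝ) < 8 * l := by positivity
        calc ‖seq n - seq N‖ ^ 2 = ‖seq n - seq N‖ ^ 2 / (8 * l) * (8 * l) := by field_simp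
          _ < 1 / ((N:ℝ) + 1) * (8 * l) := mul_lt_mul_of_pos_right hsq h8
          _ = 8 * l / ((N:ℝ) + 1) := by ring
      have hNb : 8 * l / ((N:ℝ) + 1) < ε ^ 2 / 2 := by
        rw [div_lt_iff₀ (by positivity : (0:ℝ) < (N:ℝ) + 1)]
        rw [div_lt_iff₀ (by positivity : (0:ℝ) < ε ^ 2)] at hN
        nlinarith [hN, sq_nonneg ε]
      have hd2 : dist (seq n) (seq N) ^ 2 < ε ^ 2 := by
        rw [dist_eq_norm]
        nlinarith [hsq2, hNb, hε]
      nlinarith [hd2, dist_nonneg (x := seq n) (y := seq N), hε]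
    obtain ⟨z0, hz0⟩ := cauchySeq_tendsto_of_complete hCauchy
    refine ⟨z0, fun z => ?_⟩
    have h1 : Tendsto (fun k => Obj x (seq k)) atTop (𝓝 (Obj x z0)) :=
      ((hObjcont x).continuousAt).tendsto.comp hz0
    have h2 : Tendsto (fun k => Obj x (seq k)) atTop (𝓝 (e x)) := by
      have hub : Tendsto (fun k : ℕ => e x + 1 / ((k:ℝ) + 1)) atTop (𝓝 (e x)) := by
        have h0 : Tendsto (fun k : ℕ => 1 / ((k:ℝ) + 1)) atTop (𝓝 0) :=
          tendsto_one_div_add_atTop_nhds_zero_nat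
        have h := (tendsto_const_nhds (x := e x) (f := atTop (α := ℕ))).add h0
        rw [add_zero] at h
        exact h
      exact tendsto_of_tendsto_of_tendsto_of_le_of_le tendsto_const_nhds hub
        (fun k => he_le x (seq k)) (fun k => (hseq k).le)
    have heq : Obj x z0 = e x := tendsto_nhds_unique h1 h2
    rw [heq]
    exact he_le x z
  choose Z hZ using hZex
  have heZ : ∀ x, e x = Obj x (Z x) := fun x => le_antisymm (he_le x (Z x)) (le_ciInf (hZ x))
  -- strong minimality
  have hstrong : ∀ x z, e x + ‖z - Z x‖ ^ 2 / (4 * l) ≤ Obj x z := by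
    intro x z
    have hm := hmid x z (Z x)
    have h1 : Obj x (Z x) ≤ Obj x ((2:ℝ)⁻¹ • (z + Z x)) := hZ x _
    have e6 : ‖z - Z x‖ ^ 2 / (4 * l) = 2 * (‖z - Z x‖ ^ 2 / (8 * l)) := by ring
    rw [heZ]
    linarith
  -- expansion lemma
  have hexp : ∀ c x x' : H, ‖x' - c‖ ^ 2 = ‖x - c‖ ^ 2 + 2 * ⟪x - c, x' - x⟫ + ‖x' - x‖ ^ 2 := by
    intro c x x'
    have h := norm_add_sq_real (x - c) (x' - x)
    have e1 : x - c + (x' - x) = x' - c := by abel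
    rw [e1] at h
    exact h
  -- derivative candidate
  set L : H → (H →L[ℝ] ℝ) := fun x => (2 / l) • (innerSL ℝ (x - Z x)) with hLdef
  have hL_apply : ∀ x h : H, L x h = 2 / l * ⟪x - Z x, h⟫ := by
    intro x h
    rw [hLdef]
    simp only [ContinuousLinearMap.smul_apply, innerSL_apply_apply, smul_eq_mul]
  -- upper estimate
  have hE1 : ∀ x x' : H, e x' ≤ e x + L x (x' - x) + ‖x' - x‖ ^ 2 / l := by
    intro x x'
    have h1 : e x' ≤ Obj x' (Z x) := he_le x' (Z x)
    have h2 : Obj x' (Z x) = ‖x' - Z x‖ ^ 2 / l - v1 (Z x) := by simp only [hObjdef]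
    rw [h2] at h1
    have h3 : e x = ‖x - Z x‖ ^ 2 / l - v1 (Z x) := by rw [heZ]
    have h4 := hexp (Z x) x x'
    have h5 : ‖x' - Z x‖ ^ 2 / l
        = ‖x - Z x‖ ^ 2 / l + 2 / l * ⟪x - Z x, x' - x⟫ + ‖x' - x‖ ^ 2 / l := by
      linear_combination h4 / l
    rw [hL_apply]
    linarith
  -- lower estimate
  have hE3 : ∀ x x' : H, e x + L x (x' - x) - 4 * ‖x' - x‖ ^ 2 / l ≤ e x' := by
    intro x x'
    have h1 : e x + ‖Z x' - Z x‖ ^ 2 / (4 * l) ≤ Obj x (Z x') := hstrong x (Z x')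
    have h3 : Obj x (Z x') = ‖x - Z x'‖ ^ 2 / l - v1 (Z x') := by simp only [hObjdef]
    rw [h3] at h1
    have hrev : ‖Z x' - Z x‖ = ‖Z x - Z x'‖ := norm_sub_rev _ _
    rw [hrev] at h1
    have h2 : e x' = ‖x' - Z x'‖ ^ 2 / l - v1 (Z x') := by rw [heZ]
    have h4 := hexp (Z x') x x'
    have h5 : ‖x' - Z x'‖ ^ 2 / l
        = ‖x - Z x'‖ ^ 2 / l + 2 / l * ⟪x - Z x', x' - x⟫ + ‖x' - x‖ ^ 2 / l := by
      linear_combination h4 / l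
    have h6 : ⟪x - Z x', x' - x⟫ = ⟪x - Z x, x' - x⟫ + ⟪Z x - Z x', x' - x⟫ := by
      rw [← inner_add_left]
      congr 1
      abel
    have h7 : -(‖Z x - Z x'‖ * ‖x' - x‖) ≤ ⟪Z x - Z x', x' - x⟫ :=
      neg_le_of_abs_le (abs_real_inner_le_norm _ _)
    have hq : 0 ≤ (‖Z x - Z x'‖ / 2 - 2 * ‖x' - x‖) ^ 2 / l := by positivity
    have hq' : (‖Z x - Z x'‖ / 2 - 2 * ‖x' - x‖) ^ 2 / l
        = ‖Z x - Z x'‖ ^ 2 / (4 * l) - 2 * (‖Z x - Z x'‖ * ‖x' - x‖) / l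
          + 4 * ‖x' - x‖ ^ 2 / l := by
      field_simp
      ring
    rw [hq'] at hq
    have h8 : -(2 * (‖Z x - Z x'‖ * ‖x' - x‖) / l) ≤ 2 / l * ⟪Z x - Z x', x' - x⟫ := by
      have hll : (0:ℝ) ≤ 2 / l := by positivity
      calc -(2 * (‖Z x - Z x'‖ * ‖x' - x‖) / l) = 2 / l * (-(‖Z x - Z x'‖ * ‖x' - x‖)) := by
            ring
        _ ≤ 2 / l * ⟪Z x - Z x', x' - x⟫ := mul_le_mul_of_nonneg_left h7 hll
    have h9 : 2 / l * ⟪x - Z x', x' - x⟫ = 2 / l * ⟪x - Z x, x' - x⟫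
        + 2 / l * ⟪Z x - Z x', x' - x⟫ := by
      rw [h6]; ring
    rw [hL_apply]
    have hs2 : (0:ℝ) ≤ ‖x' - x‖ ^ 2 / l := by positivity
    linarith
  -- Z is 4-Lipschitz
  have hZlip : ∀ x x' : H, ‖Z x' - Z x‖ ≤ 4 * ‖x' - x‖ := by
    intro x x'
    have h1 : e x + ‖Z x' - Z x‖ ^ 2 / (4 * l) ≤ Obj x (Z x') := hstrong x (Z x')
    have h2 : e x' + ‖Z x - Z x'‖ ^ 2 / (4 * l) ≤ Obj x' (Z x) := hstrong x' (Z x)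
    have h3 : Obj x (Z x') = e x' + (‖x - Z x'‖ ^ 2 - ‖x' - Z x'‖ ^ 2) / l := by
      rw [heZ x']
      simp only [hObjdef]
      ring
    have h4 : Obj x' (Z x) = e x + (‖x' - Z x‖ ^ 2 - ‖x - Z x‖ ^ 2) / l := by
      rw [heZ x]
      simp only [hObjdef]
      ring
    rw [h3] at h1
    rw [h4] at h2
    have hrev : ‖Z x - Z x'‖ = ‖Z x' - Z x‖ := norm_sub_rev _ _
    rw [hrev] at h2
    have h5 := hexp (Z x') x' x
    have h6 := hexp (Z x) x x'
    rw [norm_sub_rev x' x] at h6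
    have e8 : (‖x - Z x'‖ ^ 2 - ‖x' - Z x'‖ ^ 2) / l + (‖x' - Z x‖ ^ 2 - ‖x - Z x‖ ^ 2) / l
        = (2 * ⟪x' - Z x', x - x'⟫ + 2 * ⟪x - Z x, x' - x⟫ + 2 * ‖x - x'‖ ^ 2) / l := by
      linear_combination (h5 + h6) / l
    have hsum : ‖Z x' - Z x‖ ^ 2 / (2 * l)
        ≤ (2 * ⟪x' - Z x', x - x'⟫ + 2 * ⟪x - Z x, x' - x⟫ + 2 * ‖x - x'‖ ^ 2) / l := by
      have e7 : ‖Z x' - Z x‖ ^ 2 / (2 * l) = 2 * (‖Z x' - Z x‖ ^ 2 / (4 * l)) := by ring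
      linarith
    have hinner : 2 * ⟪x' - Z x', x - x'⟫ + 2 * ⟪x - Z x, x' - x⟫ + 2 * ‖x - x'‖ ^ 2
        = 2 * ⟪Z x' - Z x, x' - x⟫ := by
      have i1 : ⟪x' - Z x', x - x'⟫ = -⟪x' - Z x', x' - x⟫ := by
        rw [← inner_neg_right]
        congr 1
        abel
      have i2 : ⟪x' - Z x', x' - x⟫ = ⟪x' - x, x' - x⟫ + ⟪x - Z x', x' - x⟫ := by
        rw [← inner_add_left]; congr 1; abel
      have i3 : ⟪x - Z x', x' - x⟫ = ⟪x - Z x, x' - x⟫ + ⟪Z x - Z x', x' - x⟫ := by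
        rw [← inner_add_left]; congr 1; abel
      have i4 : ⟪x' - x, x' - x⟫ = ‖x' - x‖ ^ 2 := real_inner_self_eq_norm_sq _
      have i5 : ⟪Z x - Z x', x' - x⟫ = -⟪Z x' - Z x, x' - x⟫ := by
        rw [← inner_neg_left]; congr 1; abel
      rw [norm_sub_rev x x']
      rw [i1, i2, i3, i4, i5]
      ring
    rw [hinner] at hsum
    have hcs : ⟪Z x' - Z x, x' - x⟫ ≤ ‖Z x' - Z x‖ * ‖x' - x‖ := real_inner_le_norm _ _
    have htpos : (0:ℝ) ≤ ‖Z x' - Z x‖ := norm_nonneg _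
    have hspos : (0:ℝ) ≤ ‖x' - x‖ := norm_nonneg _
    have h10 : ‖Z x' - Z x‖ ^ 2 ≤ 4 * (‖Z x' - Z x‖ * ‖x' - x‖) := by
      have h11 : ‖Z x' - Z x‖ ^ 2 / (2 * l) ≤ 2 * (‖Z x' - Z x‖ * ‖x' - x‖) / l := by
        calc ‖Z x' - Z x‖ ^ 2 / (2 * l) ≤ 2 * ⟪Z x' - Z x, x' - x⟫ / l := hsum
          _ ≤ 2 * (‖Z x' - Z x‖ * ‖x' - x‖) / l := by gcongr
      have h12 := mul_le_mul_of_nonneg_right h11 (by positivity : (0:ℝ) ≤ 2 * l)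
      have e9 : ‖Z x' - Z x‖ ^ 2 / (2 * l) * (2 * l) = ‖Z x' - Z x‖ ^ 2 := by field_simp
      have e10 : 2 * (‖Z x' - Z x‖ * ‖x' - x‖) / l * (2 * l)
          = 4 * (‖Z x' - Z x‖ * ‖x' - x‖) := by field_simp; ring
      rw [e9, e10] at h12
      exact h12
    rcases eq_or_lt_of_le htpos with h | h
    · rw [← h]; positivity
    · have := le_of_mul_le_mul_right
        (by nlinarith : ‖Z x' - Z x‖ * ‖Z x' - Z x‖ ≤ 4 * ‖x' - x‖ * ‖Z x' - Z x‖) h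
      linarith
  -- e has derivative L x at x
  have hfd : ∀ x, HasFDerivAt e (L x) x := by
    intro x
    rw [hasFDerivAt_iff_isLittleO_nhds_zero]
    rw [Asymptotics.isLittleO_iff]
    intro c hc
    have hev : ∀ᶠ h : H in 𝓝 0, ‖h‖ < c * l / 4 := by
      have hb : Metric.ball (0:H) (c * l / 4) ∈ 𝓝 (0:H) :=
        Metric.ball_mem_nhds _ (by positivity)
      filter_upwards [hb] with h hh
      simpa [mem_ball_zero_iff] using hh
    filter_upwards [hev] with h hh
    have h1 := hE1 x (x + h)
    have h2 := hE3 x (x + h)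
    have hsimp : x + h - x = h := by abel
    rw [hsimp] at h1 h2
    have hpos : (0:ℝ) ≤ ‖h‖ ^ 2 / l := by positivity
    have hmul : 4 * ‖h‖ ^ 2 / l = 4 * (‖h‖ ^ 2 / l) := by ring
    have hlow : -(4 * ‖h‖ ^ 2 / l) ≤ e (x + h) - e x - L x h := by linarith
    have hupp : e (x + h) - e x - L x h ≤ 4 * ‖h‖ ^ 2 / l := by linarith
    have habs : |e (x + h) - e x - L x h| ≤ 4 * ‖h‖ ^ 2 / l := abs_le.2 ⟨hlow, hupp⟩
    have hfin : 4 * ‖h‖ ^ 2 / l ≤ c * ‖h‖ := by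
      have h4 : 4 * ‖h‖ ^ 2 / l = 4 * ‖h‖ / l * ‖h‖ := by ring
      rw [h4]
      apply mul_le_mul_of_nonneg_right ?_ (norm_nonneg h)
      rw [div_le_iff₀ hl]
      nlinarith [hh, norm_nonneg h]
    calc ‖e (x + h) - e x - L x h‖ = |e (x + h) - e x - L x h| := Real.norm_eq_abs _
      _ ≤ 4 * ‖h‖ ^ 2 / l := habs
      _ ≤ c * ‖h‖ := hfin
  -- continuity of the derivative
  have hZcont : Continuous Z := by
    have : LipschitzWith 4 Z := by
      apply LipschitzWith.of_dist_le_mul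
      intro a b
      rw [dist_eq_norm, dist_eq_norm]
      have h := hZlip b a
      have h4 : ((4:NNReal):ℝ) = 4 := by norm_num
      rw [h4]
      exact h
    exact this.continuous
  have hLcont : Continuous L := by
    have h1 : Continuous fun x : H => x - Z x := continuous_id.sub hZcont
    have h2 : Continuous fun x : H => innerSL ℝ (x - Z x) :=
      (innerSL ℝ).continuous.comp h1
    exact h2.const_smul (2 / l)
  have he_diff : Differentiable ℝ e := fun x => (hfd x).differentiableAt
  have hfe : fderiv ℝ e = L := funext fun x => (hfd x).fderiv
  have heC1 : ContDiff ℝ 1 e := contDiff_one_iff_fderiv.2 ⟨he_diff, by rw [hfe]; exact hLcont⟩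
  refine ⟨fun x => -e x, heC1.neg, fun x => ?_⟩
  show |-e x - v x| ≤ l
  have h1 : e x ≤ -v1 x := by
    have := he_le x x
    simp only [hObjdef] at this
    simpa using this
  have h2 : -v x - l / 4 ≤ e x := he_ge x
  have h3 : v x - l / 2 ≤ v1 x := hv1_ge x
  rw [abs_le]
  constructor
  · linarith
  · linarith

end Moreau

section Minorant
variable {H : Type*} [NormedAddCommGroup H] [InnerProductSpace ℝ H] [CompleteSpace H]

set_option maxHeartbeats 1000000 in
/-- Any locally-bounded-below function on a real Hilbert space admits a `C¹` global minorant. -/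
theorem exists_contDiff_le (F : H → ℝ)
    (hloc : ∀ x : H, ∃ δ > 0, ∃ c : ℝ, ∀ y ∈ Metric.ball x δ, c ≤ F y) :
    ∃ g : H → ℝ, ContDiff ℝ 1 g ∧ ∀ x, g x ≤ F x := by
  classical
  set G : H → ℝ := fun x => min (F x) 0 with hGdef
  have hG_le : ∀ x, G x ≤ F x := fun x => min_le_left _ _
  have hlocG : ∀ x : H, ∃ δ > 0, ∃ c : ℝ, c ≤ 0 ∧ ∀ y ∈ Metric.ball x δ, c ≤ G y := by
    intro x
    obtain ⟨δ, hδ, c, hc⟩ := hloc x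
    exact ⟨δ, hδ, min c 0, min_le_right _ _,
      fun y hy => le_min (le_trans (min_le_left _ _) (hc y hy)) (min_le_right _ _)⟩
  -- the 1-Lipschitz scale function u
  set T : H → Set ℝ := fun x =>
    {t : ℝ | t ∈ Set.Ioc (0:ℝ) 1 ∧ ∀ y ∈ Metric.ball x t, -(1/t) ≤ G y} with hTdef
  have hT_ne : ∀ x, (T x).Nonempty := by
    intro x
    obtain ⟨δ, hδ, c, hc0, hc⟩ := hlocG x
    have h1c : (0:ℝ) < 1 - c := by linarith
    refine ⟨min (min δ 1) (1/(1 - c)), ⟨⟨?_, ?_⟩, ?_⟩⟩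
    · have : (0:ℝ) < 1/(1-c) := by positivity
      have : (0:ℝ) < min δ 1 := lt_min hδ one_pos
      positivity
    · exact le_trans (min_le_left _ _) (min_le_right _ _)
    · intro y hy
      have hyδ : y ∈ Metric.ball x δ := by
        apply Metric.ball_subset_ball ?_ hy
        exact le_trans (min_le_left _ _) (min_le_left _ _)
      have h1 : c ≤ G y := hc y hyδ
      have htle : min (min δ 1) (1/(1 - c)) ≤ 1/(1-c) := min_le_right _ _
      have htpos : (0:ℝ) < min (min δ 1) (1/(1 - c)) := by
        have h3 : (0:ℝ) < 1/(1-c) := by positivity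
        have h4 : (0:ℝ) < min δ 1 := lt_min hδ one_pos
        positivity
      have h2 : 1 - c ≤ 1 / min (min δ 1) (1/(1 - c)) := by
        have h6 := one_div_le_one_div_of_le htpos htle
        rwa [one_div_one_div] at h6
      linarith
  have hT_bdd : ∀ x, BddAbove (T x) := fun x => ⟨1, fun t ht => ht.1.2⟩
  set u : H → ℝ := fun x => sSup (T x) with hudef
  have hu_pos : ∀ x, 0 < u x := by
    intro x
    obtain ⟨t, ht⟩ := hT_ne x
    exact lt_of_lt_of_le ht.1.1 (le_csSup (hT_bdd x) ht)
  have hu_le_one : ∀ x, u x ≤ 1 := fun x => csSup_le (hT_ne x) (fun t ht => ht.1.2)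
  -- key lower bound for G on the ball of radius u x
  have hu_bound : ∀ x y : H, dist y x < u x → -(1/(u x)) ≤ G y := by
    intro x y hxy
    by_contra hcon
    push_neg at hcon
    have hGneg : G y < 0 := by
      have h0 : (0:ℝ) < 1 / u x := one_div_pos.mpr (hu_pos x)
      linarith
    set β : ℝ := -G y with hβ
    have hβpos : 0 < β := by simp only [hβ]; linarith
    have hβu : 1/β < u x := by
      rw [div_lt_iff₀ hβpos]
      have h2 : 1/(u x) < β := by
        have := hu_pos x
        have h3 : -(1/u x) > G y := hcon
        simp only [hβ]; linarith
      calc (1:ℝ) = (1/(u x)) * (u x) := by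
            rw [one_div, inv_mul_cancel₀ (ne_of_gt (hu_pos x))]
        _ < β * u x := by
            apply mul_lt_mul_of_pos_right h2 (hu_pos x)
        _ = u x * β := by ring
    have hb_lt : max (dist y x) (1/β) < u x := max_lt hxy hβu
    obtain ⟨t, htT, htb⟩ := exists_lt_of_lt_csSup (hT_ne x) hb_lt
    have hyt : y ∈ Metric.ball x t := by
      rw [Metric.mem_ball]
      exact lt_of_le_of_lt (le_max_left _ _) htb
    have hGy : -(1/t) ≤ G y := htT.2 y hyt
    have htβ : 1/β < t := lt_of_le_of_lt (le_max_right _ _) htb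
    have h1t : 1/t < β := by
      rw [div_lt_iff₀ htT.1.1]
      rw [div_lt_iff₀ hβpos] at htβ
      calc (1:ℝ) < t * β := by linarith
        _ = β * t := by ring
    simp only [hβ] at h1t
    linarith
  -- u is 1-Lipschitz
  have hu_lip : ∀ a b : H, u a ≤ u b + dist a b := by
    intro a b
    apply csSup_le (hT_ne a)
    intro t ht
    rcases le_or_gt t (dist a b) with h | h
    · have := hu_pos b
      linarith
    · have htT : t - dist a b ∈ T b := by
        have hd0 : (0:ℝ) ≤ dist a b := dist_nonneg
        have ht1 : t ≤ 1 := ht.1.2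
        refine ⟨⟨by linarith, by linarith⟩, ?_⟩
        intro y hy
        have hyt : y ∈ Metric.ball a t := by
          rw [Metric.mem_ball] at hy ⊢
          calc dist y a ≤ dist y b + dist b a := dist_triangle _ _ _
            _ < t - dist a b + dist b a := by linarith
            _ = t := by rw [dist_comm b a]; ring
        have h1 : -(1/t) ≤ G y := ht.2 y hyt
        have h2 : 1/t ≤ 1/(t - dist a b) := by
          apply one_div_le_one_div_of_le
          · linarith
          · linarith
        linarith
      have := le_csSup (hT_bdd b) htT
      linarith
  have hu_lipn : ∀ a b : H, u a ≤ u b + ‖a - b‖ := by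
    intro a b
    have := hu_lip a b
    rwa [dist_eq_norm] at this
  -- smoothed versions of u at every scale
  have hW : ∀ n : ℕ, ∃ w : H → ℝ, ContDiff ℝ 1 w ∧ ∀ x, |w x - u x| ≤ (2:ℝ)⁻¹^n/16 := by
    intro n
    exact moreau_c1 u hu_lipn (by positivity)
  choose W hWc hWd using hW
  set P : ℕ → ℝ := fun n => (2:ℝ)⁻¹ ^ n with hPdef
  have hPpos : ∀ n, 0 < P n := fun n => by positivity
  set θ : ℕ → H → ℝ := fun n x => Real.smoothTransition (6 - 8 * W n x / P n) with hθdef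
  have hθ_one : ∀ n x, u x ≤ P n / 2 → θ n x = 1 := by
    intro n x h
    apply Real.smoothTransition.one_of_one_le
    obtain ⟨hd1, hd2⟩ := abs_le.1 (hWd n x)
    have hPn : P n = (2:ℝ)⁻¹ ^ n := rfl
    have h1 : W n x ≤ P n / 2 + P n / 16 := by linarith
    have h2 : 8 * W n x / P n ≤ 9/2 := by
      rw [div_le_iff₀ (hPpos n)]
      linarith
    linarith
  have hθ_zero : ∀ n x, P n ≤ u x → θ n x = 0 := by
    intro n x h
    apply Real.smoothTransition.zero_of_nonpos
    obtain ⟨hd1, hd2⟩ := abs_le.1 (hWd n x)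
    have hPn : P n = (2:ℝ)⁻¹ ^ n := rfl
    have h1 : P n - P n / 16 ≤ W n x := by linarith
    have h2 : (15:ℝ)/2 ≤ 8 * W n x / P n := by
      rw [le_div_iff₀ (hPpos n)]
      linarith
    linarith
  have hθ_nonneg : ∀ n x, 0 ≤ θ n x := fun n x => Real.smoothTransition.nonneg _
  have hθ_cd : ∀ n, ContDiff ℝ 1 (θ n) := by
    intro n
    apply (Real.smoothTransition.contDiff (n := 1)).comp
    exact contDiff_const.sub ((contDiff_const.mul (hWc n)).div_const (P n))
  -- index bound
  have hfind : ∀ x : H, ∃ n : ℕ, P n / 2 < u x := by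
    intro x
    obtain ⟨n, hn⟩ := exists_pow_lt_of_lt_one (hu_pos x) (by norm_num : (2:ℝ)⁻¹ < 1)
    refine ⟨n, ?_⟩
    have h0 : P n = (2:ℝ)⁻¹ ^ n := rfl
    have := hPpos n
    rw [h0]
    linarith [hn]
  set m : H → ℕ := fun x => Nat.find (hfind x) with hmdef
  have hm_spec : ∀ x, P (m x) / 2 < u x := fun x => Nat.find_spec (hfind x)
  have hm_min : ∀ x, ∀ n < m x, u x ≤ P n / 2 :=
    fun x n hn => le_of_not_gt (Nat.find_min (hfind x) hn)
  have hP_anti : ∀ k n : ℕ, k ≤ n → P n ≤ P k := by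
    intro k n hkn
    apply pow_le_pow_of_le_one (by norm_num) (by norm_num) hkn
  have hθ_zero' : ∀ (x : H) (N : ℕ), P N / 2 < u x → ∀ n, N < n → θ n x = 0 := by
    intro x N hN n hn
    apply hθ_zero
    have h1 : P n ≤ P (N + 1) := hP_anti (N+1) n hn
    have h2 : P (N + 1) = P N / 2 := by
      simp only [hPdef, pow_succ]
      ring
    linarith
  -- the sum is locally a finite sum
  have hsum_eq : ∀ (y : H) (N : ℕ), (∀ n, N < n → θ n y = 0) →
      ∑' n, (2:ℝ)^(n+2) * θ n y = ∑ n ∈ Finset.range (N+1), (2:ℝ)^(n+2) * θ n y := by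
    intro y N hN
    apply tsum_eq_sum
    intro n hn
    rw [Finset.mem_range, not_lt] at hn
    rw [hN n (by omega)]
    ring
  have hgeo : ∀ k : ℕ, ∑ n ∈ Finset.range k, (2:ℝ)^(n+2) = 2^(k+2) - 4 := by
    intro k
    induction k with
    | zero => norm_num
    | succ k ih =>
      rw [Finset.sum_range_succ, ih]
      have : (2:ℝ)^(k+1+2) = 2 * 2^(k+2) := by ring
      rw [this]
      ring
  set g : H → ℝ := fun x => -4 - ∑' n, (2:ℝ)^(n+2) * θ n x with hgdef
  -- g is a minorant
  have hg_le : ∀ x, g x ≤ F x := by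
    intro x
    set N := m x with hN
    have hsum := hsum_eq x N (hθ_zero' x N (hm_spec x))
    have hones : ∀ n ∈ Finset.range N, (2:ℝ)^(n+2) * θ n x = (2:ℝ)^(n+2) := by
      intro n hn
      rw [Finset.mem_range] at hn
      rw [hθ_one n x (hm_min x n hn), mul_one]
    have hsplit : ∑ n ∈ Finset.range (N+1), (2:ℝ)^(n+2) * θ n x
        = ∑ n ∈ Finset.range N, (2:ℝ)^(n+2) * θ n x + (2:ℝ)^(N+2) * θ N x :=
      Finset.sum_range_succ _ _
    have hlow : (2:ℝ)^(N+2) - 4 ≤ ∑ n ∈ Finset.range (N+1), (2:ℝ)^(n+2) * θ n x := by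
      rw [hsplit, Finset.sum_congr rfl hones, hgeo N]
      have h1 : 0 ≤ (2:ℝ)^(N+2) * θ N x := mul_nonneg (by positivity) (hθ_nonneg N x)
      linarith
    have hg1 : g x ≤ -(2:ℝ)^(N+2) := by
      simp only [hgdef]
      rw [hsum]
      linarith
    have hF1 : -(1/(u x)) ≤ G x := hu_bound x x (by
      rw [dist_self]; exact hu_pos x)
    have hF2 : 1/(u x) < 2^(N+1) := by
      have h1 : P N / 2 < u x := hm_spec x
      have h2 : P N / 2 = ((2:ℝ)^(N+1))⁻¹ := by
        show ((2:ℝ)⁻¹ ^ N) / 2 = _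
        rw [← inv_pow]
        rw [pow_succ]
        ring
      rw [h2] at h1
      have h3 : (0:ℝ) < 2^(N+1) := by positivity
      rw [div_lt_iff₀ (hu_pos x)]
      calc (1:ℝ) = 2^(N+1) * ((2:ℝ)^(N+1))⁻¹ := by field_simp
        _ < 2^(N+1) * u x := mul_lt_mul_of_pos_left h1 h3
    have h2N : (2:ℝ)^(N+1) ≤ 2^(N+2) := by
      have : (2:ℝ)^(N+2) = 2 * 2^(N+1) := by ring
      rw [this]
      have : (0:ℝ) < 2^(N+1) := by positivity
      linarith
    calc g x ≤ -(2:ℝ)^(N+2) := hg1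
      _ ≤ -(2:ℝ)^(N+1) := by linarith
      _ ≤ -(1/(u x)) := by linarith
      _ ≤ G x := hF1
      _ ≤ F x := hG_le x
  -- g is C¹
  have hg_cd : ContDiff ℝ 1 g := by
    rw [contDiff_iff_contDiffAt]
    intro x0
    set N := m x0 with hN
    set r : ℝ := u x0 - P N / 2 with hr
    have hrpos : 0 < r := by simp only [hr]; linarith [hm_spec x0]
    have hball : ∀ y ∈ Metric.ball x0 r, P N / 2 < u y := by
      intro y hy
      rw [Metric.mem_ball] at hy
      have h1 := hu_lip x0 y
      rw [dist_comm y x0] at hy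
      simp only [hr] at hy
      linarith
    have hCfin : ContDiff ℝ 1 (fun y => -4 - ∑ n ∈ Finset.range (N+1), (2:ℝ)^(n+2) * θ n y) := by
      apply contDiff_const.sub
      apply ContDiff.sum
      intro i _
      exact contDiff_const.mul (hθ_cd i)
    apply hCfin.contDiffAt.congr_of_eventuallyEq
    filter_upwards [Metric.ball_mem_nhds x0 hrpos] with y hy
    simp only [hgdef]
    rw [hsum_eq y N (hθ_zero' y N (hball y hy))]
  exact ⟨g, hg_cd, hg_le⟩

end Minorant

/-- The viscosity subdifferential of `f : H → ℝ ∪ {+∞}` at `p`: the set of derivatives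
`Dφ(p)` of `C¹` functions `φ : H → ℝ` such that `f - φ` attains a local minimum at `p`. -/
def esubdiff {H : Type*} [NormedAddCommGroup H] [InnerProductSpace ℝ H]
    (f : H → EReal) (p : H) : Set (H →L[ℝ] ℝ) :=
  {ζ | ∃ φ : H → ℝ, ContDiff ℝ 1 φ ∧ fderiv ℝ φ p = ζ ∧
    ∀ᶠ x in 𝓝 p, f p - ((φ p : ℝ) : EReal) ≤ f x - ((φ x : ℝ) : EReal)}

/-- If `f : H → ℝ ∪ {+∞}` is locally bounded below, then `ζ ∈ D⁻f(p)` iff there is a `C¹`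
function `φ` with `Dφ(p) = ζ` such that `f - φ` attains a *global* minimum at `p`. -/
theorem subdifferential_global_minimum
    {H : Type*} [NormedAddCommGroup H] [InnerProductSpace ℝ H] [CompleteSpace H]
    (f : H → EReal) (hbot : ∀ x, f x ≠ ⊥)
    (hlocbdd : ∀ x : H, ∃ U ∈ 𝓝 x, ∃ c : ℝ, ∀ y ∈ U, (c : EReal) ≤ f y)
    (p : H) (hp : f p ≠ ⊤) (ζ : H →L[ℝ] ℝ) :
    ζ ∈ esubdiff f p ↔
      ∃ φ : H → ℝ, ContDiff ℝ 1 φ ∧ fderiv ℝ φ p = ζ ∧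
        ∀ x, f p - ((φ p : ℝ) : EReal) ≤ f x - ((φ x : ℝ) : EReal) := by
  constructor
  · rintro ⟨φ, hφ1, hφ2, hφ3⟩
    rw [Metric.eventually_nhds_iff_ball] at hφ3
    obtain ⟨ε, hε, hball⟩ := hφ3
    set m : ℝ := (f p).toReal - φ p with hmdef
    have hfp : ((f p).toReal : EReal) = f p := EReal.coe_toReal hp (hbot p)
    set F : H → ℝ := fun x => if f x = ⊤ then φ x else (f x).toReal - m with hFdef
    -- φ ≤ F on the ball where the local minimum holds
    have hφleF : ∀ y ∈ Metric.ball p ε, φ y ≤ F y := by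
      intro y hy
      by_cases hT : f y = ⊤
      · simp only [hFdef, if_pos hT]
        exact le_refl _
      · have h3 := hball y hy
        have hfy : ((f y).toReal : EReal) = f y := EReal.coe_toReal hT (hbot y)
        rw [← hfp, ← hfy, ← EReal.coe_sub, ← EReal.coe_sub, EReal.coe_le_coe_iff] at h3
        simp only [hFdef, if_neg hT]
        linarith
    -- F is locally bounded below
    have hFloc : ∀ x : H, ∃ δ > 0, ∃ c : ℝ, ∀ y ∈ Metric.ball x δ, c ≤ F y := by
      intro x
      obtain ⟨U, hU, c, hc⟩ := hlocbdd x
      obtain ⟨δ₁, hδ₁, hball₁⟩ := Metric.mem_nhds_iff.1 hU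
      have hcont : ContinuousAt φ x := hφ1.continuous.continuousAt
      obtain ⟨δ₂, hδ₂, hball₂⟩ : ∃ δ > 0, ∀ y, dist y x < δ → |φ y - φ x| < 1 := by
        obtain ⟨δ, hδ, hd⟩ := Metric.continuousAt_iff.1 hcont 1 one_pos
        exact ⟨δ, hδ, fun y hy => by simpa [Real.dist_eq] using hd hy⟩
      refine ⟨min δ₁ δ₂, lt_min hδ₁ hδ₂, min (c - m) (φ x - 1), ?_⟩
      intro y hy
      rw [Metric.mem_ball] at hy
      have hy1 : y ∈ Metric.ball x δ₁ := by
        rw [Metric.mem_ball]; exact lt_of_lt_of_le hy (min_le_left _ _)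
      have hy2 : dist y x < δ₂ := lt_of_lt_of_le hy (min_le_right _ _)
      by_cases hT : f y = ⊤
      · have h1 := abs_lt.1 (hball₂ y hy2)
        simp only [hFdef, if_pos hT]
        have := min_le_right (c - m) (φ x - 1)
        linarith [h1.1]
      · have h1 : (c : EReal) ≤ f y := hc y (hball₁ hy1)
        have hfy : ((f y).toReal : EReal) = f y := EReal.coe_toReal hT (hbot y)
        rw [← hfy, EReal.coe_le_coe_iff] at h1
        simp only [hFdef, if_neg hT]
        have := min_le_left (c - m) (φ x - 1)
        linarith
    obtain ⟨g, hg1, hg2⟩ := exists_contDiff_le F hFloc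
    -- glue with a bump function
    set b : ContDiffBump p := ⟨ε/3, 2*ε/3, by positivity, by linarith⟩ with hbdef
    set Φ : H → ℝ := fun x => b x * φ x + (1 - b x) * g x with hΦdef
    have hΦ_cd : ContDiff ℝ 1 Φ :=
      (b.contDiff.mul hφ1).add ((contDiff_const.sub b.contDiff).mul hg1)
    have hΦ_eq : Φ =ᶠ[𝓝 p] φ := by
      filter_upwards [Metric.ball_mem_nhds p (show (0:ℝ) < ε/3 by positivity)] with y hy
      have h1 : b y = 1 := b.one_of_mem_closedBall (Metric.ball_subset_closedBall hy)
      simp only [hΦdef, h1]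
      ring
    have hΦp : Φ p = φ p := hΦ_eq.eq_of_nhds
    have hΦderiv : fderiv ℝ Φ p = ζ := by rw [hΦ_eq.fderiv_eq, hφ2]
    have hΦ_le : ∀ x, Φ x ≤ F x := by
      intro x
      by_cases hx : x ∈ Metric.ball p (2*ε/3)
      · have h1 : φ x ≤ F x := hφleF x (Metric.ball_subset_ball (by linarith) hx)
        have h2 : g x ≤ F x := hg2 x
        have h3 : 0 ≤ b x := b.nonneg
        have h4 : b x ≤ 1 := b.le_one
        simp only [hΦdef]
        nlinarith
      · have h0 : b x = 0 := by
          apply b.zero_of_le_dist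
          rw [Metric.mem_ball, not_lt] at hx
          exact hx
        simp only [hΦdef, h0]
        have := hg2 x
        linarith
    refine ⟨Φ, hΦ_cd, hΦderiv, fun x => ?_⟩
    rw [hΦp]
    by_cases hT : f x = ⊤
    · rw [hT, EReal.top_sub_coe]
      exact le_top
    · have hfx : ((f x).toReal : EReal) = f x := EReal.coe_toReal hT (hbot x)
      rw [← hfp, ← hfx, ← EReal.coe_sub, ← EReal.coe_sub, EReal.coe_le_coe_iff]
      have h1 := hΦ_le x
      simp only [hFdef, if_neg hT] at h1
      linarith
  · rintro ⟨φ, h1, h2, h3⟩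
    exact ⟨φ, h1, h2, Filter.Eventually.of_forall h3⟩
end

section
/- Let H be a real Hilbert space, f : H → ℝ a function, and p ∈ H. Then f is Fréchet differentiable at p if and only if f is both subdifferentiable and superdifferentiable at p, i.e. D⁻f(p) ≠ ∅ and D⁺f(p) ≠ ∅. In that case D⁻f(p) = D⁺f(p) = {Df(p)}, where Df(p) is the Fréchet derivative of f at p. -/
set_option maxHeartbeats 1000000

open Filter Topology

/-- The viscosity subdifferential of `f : H → ℝ` at `p`. -/
def subdiffR {H : Type*} [NormedAddCommGroup H] [InnerProductSpace ℝ H]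
    (f : H → ℝ) (p : H) : Set (H →L[ℝ] ℝ) :=
  {ζ | ∃ φ : H → ℝ, ContDiff ℝ 1 φ ∧ fderiv ℝ φ p = ζ ∧
    IsLocalMin (fun x => f x - φ x) p}

/-- The viscosity superdifferential of `f : H → ℝ` at `p`. -/
def superdiffR {H : Type*} [NormedAddCommGroup H] [InnerProductSpace ℝ H]
    (f : H → ℝ) (p : H) : Set (H →L[ℝ] ℝ) :=
  {ζ | ∃ φ : H → ℝ, ContDiff ℝ 1 φ ∧ fderiv ℝ φ p = ζ ∧
    IsLocalMax (fun x => f x - φ x) p}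

section Aux

open Set MeasureTheory intervalIntegral

variable {H : Type*} [NormedAddCommGroup H] [InnerProductSpace ℝ H]

private lemma hasFDerivAt_norm_sub (p x : H) (hx : x ≠ p) :
    HasFDerivAt (fun y => ‖y - p‖) ((‖x - p‖)⁻¹ • innerSL ℝ (x - p)) x := by
  have hxp : x - p ≠ 0 := sub_ne_zero.2 hx
  have hnp : ‖x - p‖ ≠ 0 := norm_ne_zero_iff.2 hxp
  have h1 : HasFDerivAt (fun y : H => y - p) (ContinuousLinearMap.id ℝ H) x :=
    (hasFDerivAt_id x).sub_const p
  have h2 := h1.norm_sq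
  have hq : ‖x - p‖ ^ 2 ≠ 0 := pow_ne_zero 2 hnp
  have h3 := (Real.hasDerivAt_sqrt hq).comp_hasFDerivAt x h2
  have heq : (Real.sqrt ∘ fun y : H => ‖y - p‖ ^ 2) = fun y => ‖y - p‖ := by
    funext y; exact Real.sqrt_sq (norm_nonneg _)
  rw [heq] at h3
  refine h3.congr_fderiv ?_
  ext y
  have hs : Real.sqrt (‖x - p‖ ^ 2) = ‖x - p‖ := Real.sqrt_sq (norm_nonneg _)
  simp only [ContinuousLinearMap.smul_apply, innerSL_apply_apply, hs,
    ContinuousLinearMap.coe_smul', Pi.smul_apply, ContinuousLinearMap.coe_comp',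
    Function.comp_apply, ContinuousLinearMap.coe_id', id_eq, smul_eq_mul, two_smul,
    ContinuousLinearMap.add_apply]
  field_simp
  ring

private lemma exists_Phi (g : H → ℝ) (p : H)
    (hg : (fun x => g x) =o[𝓝 p] fun x => x - p) :
    ∃ Φ : H → ℝ, ContDiff ℝ 1 Φ ∧ Φ p = 0 ∧ fderiv ℝ Φ p = 0 ∧
      (∀ x, 0 ≤ Φ x) ∧ ∀ᶠ x in 𝓝 p, |g x| ≤ Φ x := by
  obtain ⟨δ, hδpos, hδ⟩ := Metric.eventually_nhds_iff.1 (hg.def one_pos)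
  set S : ℝ → Set ℝ := fun t =>
    insert (0:ℝ) ((fun x => |g x| / ‖x - p‖) '' {x | 0 < ‖x - p‖ ∧ ‖x - p‖ ≤ min t (δ/2)})
    with hS
  have hgx : ∀ x : H, ‖x - p‖ < δ → |g x| ≤ ‖x - p‖ := by
    intro x hx
    have := hδ (by rwa [dist_eq_norm] : dist x p < δ)
    simpa [Real.norm_eq_abs] using this
  have hsub : ∀ t, S t ⊆ Icc 0 1 := by
    rintro t y (rfl | ⟨x, ⟨hx0, hx1⟩, rfl⟩)
    · exact ⟨le_rfl, zero_le_one⟩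
    · have hlt : ‖x - p‖ < δ := lt_of_le_of_lt (hx1.trans (min_le_right _ _)) (by linarith)
      exact ⟨div_nonneg (abs_nonneg _) (norm_nonneg _), (div_le_one hx0).2 (hgx x hlt)⟩
  have hbdd : ∀ t, BddAbove (S t) := fun t => ⟨1, fun y hy => (hsub t hy).2⟩
  have hne : ∀ t, (S t).Nonempty := fun t => ⟨0, mem_insert _ _⟩
  set m : ℝ → ℝ := fun t => sSup (S t) with hm
  have hm0le : ∀ t, 0 ≤ m t := fun t => le_csSup (hbdd t) (mem_insert _ _)
  have hmle1 : ∀ t, m t ≤ 1 := fun t => csSup_le (hne t) fun y hy => (hsub t hy).2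
  have hmono : Monotone m := by
    intro t t' htt
    refine csSup_le_csSup (hbdd t') (hne t) ?_
    rintro y (rfl | ⟨x, ⟨hx0, hx1⟩, rfl⟩)
    · exact mem_insert _ _
    · exact mem_insert_of_mem _ ⟨x, ⟨hx0, hx1.trans (min_le_min htt le_rfl)⟩, rfl⟩
  have hmbound : ∀ x : H, x ≠ p → ‖x - p‖ ≤ δ/2 → |g x| ≤ ‖x - p‖ * m ‖x - p‖ := by
    intro x hx h2
    have hpos : 0 < ‖x - p‖ := norm_pos_iff.2 (sub_ne_zero.2 hx)
    have hmem : |g x| / ‖x - p‖ ∈ S ‖x - p‖ :=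
      mem_insert_of_mem _ ⟨x, ⟨hpos, le_min le_rfl h2⟩, rfl⟩
    have := le_csSup (hbdd _) hmem
    rw [div_le_iff₀ hpos] at this
    linarith [this]
  have hmsmall : ∀ ε : ℝ, 0 < ε → ∃ r > 0, ∀ t, t ≤ r → m t ≤ ε := by
    intro ε hε
    obtain ⟨ρ, hρpos, hρ⟩ := Metric.eventually_nhds_iff.1 (hg.def hε)
    refine ⟨ρ/2, by linarith, fun t ht => csSup_le (hne t) ?_⟩
    rintro y (rfl | ⟨x, ⟨hx0, hx1⟩, rfl⟩)
    · exact hε.le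
    · have hlt : ‖x - p‖ < ρ := lt_of_le_of_lt ((hx1.trans (min_le_left _ _)).trans ht) (by linarith)
      have := hρ (by rwa [dist_eq_norm] : dist x p < ρ)
      rw [Real.norm_eq_abs] at this
      rw [div_le_iff₀ hx0]
      simpa [Real.norm_eq_abs] using this
  have hmneg : ∀ t, t ≤ 0 → m t = 0 := by
    intro t ht
    refine le_antisymm (csSup_le (hne t) ?_) (hm0le t)
    rintro y (rfl | ⟨x, ⟨hx0, hx1⟩, rfl⟩)
    · exact le_rfl
    · exact absurd (hx0.trans_le ((hx1.trans (min_le_left _ _)).trans ht)) (lt_irrefl 0)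
  have hint : ∀ a b : ℝ, IntervalIntegrable m volume a b := fun a b => hmono.intervalIntegrable
  set B : ℝ → ℝ := fun t => ∫ s in (0:ℝ)..t, m s with hB
  have hBadj : ∀ a b : ℝ, B b - B a = ∫ s in a..b, m s := by
    intro a b
    have := integral_add_adjacent_intervals (hint 0 a) (hint a b)
    simp only [hB]
    linarith [this]
  have hBmono : ∀ a b : ℝ, a ≤ b → B a ≤ B b := by
    intro a b hab
    have h := hBadj a b
    have : 0 ≤ ∫ s in a..b, m s :=
      intervalIntegral.integral_nonneg hab fun u _ => hm0le u
    linarith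
  have hB0 : B 0 = 0 := integral_same
  have hBneg : ∀ t, t ≤ 0 → B t = 0 := by
    intro t ht
    have h := hBadj t 0
    rw [hB0] at h
    have : (∫ s in t..(0:ℝ), m s) = ∫ s in t..(0:ℝ), (0:ℝ) := by
      apply intervalIntegral.integral_congr
      intro s hs
      rw [uIcc_of_le ht] at hs
      exact hmneg s hs.2
    rw [this, intervalIntegral.integral_zero] at h
    linarith
  have hBnonneg : ∀ t, 0 ≤ B t := by
    intro t
    rcases le_or_gt t 0 with h | h
    · rw [hBneg t h]
    · rw [← hB0]; exact hBmono 0 t h.le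
  have hBle : ∀ t : ℝ, 0 ≤ t → B t ≤ t * m t := by
    intro t ht
    have h1 : (∫ s in (0:ℝ)..t, m s) ≤ ∫ s in (0:ℝ)..t, m t :=
      intervalIntegral.integral_mono_on ht (hint 0 t) intervalIntegrable_const
        fun s hs => hmono hs.2
    have h2 : (∫ s in (0:ℝ)..t, m t) = t * m t := by
      rw [intervalIntegral.integral_const, smul_eq_mul]; ring
    rw [← h2]; exact h1
  have hBge : ∀ t : ℝ, 0 ≤ t → t * m t ≤ B (2*t) := by
    intro t ht
    have hadj := hBadj t (2*t)
    have h1 : (∫ s in t..(2*t), m t) ≤ ∫ s in t..(2*t), m s :=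
      intervalIntegral.integral_mono_on (by linarith) intervalIntegrable_const
        (hint t (2*t)) fun s hs => hmono hs.1
    have h2 : (∫ s in t..(2*t), m t) = t * m t := by
      rw [intervalIntegral.integral_const, smul_eq_mul]; ring
    have h3 := hBnonneg t
    rw [h2] at h1
    linarith
  have hBcont : Continuous B := by
    have hlip : LipschitzWith 1 B := by
      apply LipschitzWith.of_dist_le_mul
      intro a b
      rw [Real.dist_eq, Real.dist_eq]
      have h := hBadj b a
      have hb : ‖∫ s in b..a, m s‖ ≤ 1 * |a - b| := by
        apply intervalIntegral.norm_integral_le_of_norm_le_const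
        intro s _
        rw [Real.norm_eq_abs, abs_le]
        exact ⟨by linarith [hm0le s], hmle1 s⟩
      rw [Real.norm_eq_abs] at hb
      calc |B a - B b| = |∫ s in b..a, m s| := by rw [h]
        _ ≤ 1 * |a - b| := hb
    exact hlip.continuous
  set hfun : ℝ → ℝ := fun s => B s / s with hhdef
  have hhneg : ∀ s, s ≤ 0 → hfun s = 0 := by
    intro s hs; simp only [hhdef, hBneg s hs, zero_div]
  have hh0 : hfun 0 = 0 := hhneg 0 le_rfl
  have hhnonneg : ∀ s, 0 ≤ hfun s := by
    intro s
    rcases le_or_gt s 0 with h | h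
    · rw [hhneg s h]
    · exact div_nonneg (hBnonneg s) h.le
  have hhm : ∀ s, hfun s ≤ m s := by
    intro s
    rcases le_or_gt s 0 with h | h
    · rw [hhneg s h]; exact hm0le s
    · show B s / s ≤ m s
      rw [div_le_iff₀ h]
      calc B s ≤ s * m s := hBle s h.le
        _ = m s * s := by ring
  have hhcont : Continuous hfun := by
    rw [continuous_iff_continuousAt]
    intro s
    by_cases hs : s = 0
    · subst hs
      rw [ContinuousAt, hh0, Metric.tendsto_nhds]
      intro ε hε
      obtain ⟨r, hrpos, hr⟩ := hmsmall (ε/2) (by linarith)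
      filter_upwards [Metric.ball_mem_nhds (0:ℝ) hrpos] with s' hs'
      rw [Real.dist_eq, sub_zero]
      have habs : |s'| < r := by simpa [Real.dist_eq] using hs'
      rcases le_or_gt s' 0 with h | h
      · rw [hhneg s' h]; simpa using hε
      · have : hfun s' ≤ ε/2 :=
          (hhm s').trans (hr s' (le_of_lt (lt_of_le_of_lt (le_abs_self s') habs)))
        rw [abs_of_nonneg (hhnonneg s')]
        linarith
    · exact (hBcont.continuousAt).div continuousAt_id hs
  have hinth : ∀ a b : ℝ, IntervalIntegrable hfun volume a b :=
    fun a b => hhcont.intervalIntegrable a b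
  set C : ℝ → ℝ := fun t => ∫ s in (0:ℝ)..t, hfun s with hCdef
  have hC : ∀ t, HasDerivAt C (hfun t) t := fun t =>
    (hhcont.integral_hasStrictDerivAt 0 t).hasDerivAt
  have hCcd : ContDiff ℝ 1 C := by
    rw [contDiff_one_iff_deriv]
    refine ⟨fun t => (hC t).differentiableAt, ?_⟩
    have : deriv C = hfun := funext fun t => (hC t).deriv
    rw [this]; exact hhcont
  have hCadj : ∀ a b : ℝ, C b - C a = ∫ s in a..b, hfun s := by
    intro a b
    have := integral_add_adjacent_intervals
      (hinth 0 a) (hinth a b)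
    simp only [hCdef]
    linarith [this]
  have hC0 : C 0 = 0 := integral_same
  have hCmono : ∀ a b : ℝ, a ≤ b → C a ≤ C b := by
    intro a b hab
    have h := hCadj a b
    have : 0 ≤ ∫ s in a..b, hfun s :=
      intervalIntegral.integral_nonneg hab fun u _ => hhnonneg u
    linarith
  have hCneg : ∀ t, t ≤ 0 → C t = 0 := by
    intro t ht
    have h := hCadj t 0
    rw [hC0] at h
    have : (∫ s in t..(0:ℝ), hfun s) = ∫ s in t..(0:ℝ), (0:ℝ) := by
      apply intervalIntegral.integral_congr
      intro s hs
      rw [uIcc_of_le ht] at hs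
      exact hhneg s hs.2
    rw [this, intervalIntegral.integral_zero] at h
    linarith
  have hCnonneg : ∀ t, 0 ≤ C t := by
    intro t
    rcases le_or_gt t 0 with h | h
    · rw [hCneg t h]
    · rw [← hC0]; exact hCmono 0 t h.le
  have hCle : ∀ t : ℝ, 0 ≤ t → C t ≤ t * m t := by
    intro t ht
    have h1 : (∫ s in (0:ℝ)..t, hfun s) ≤ ∫ s in (0:ℝ)..t, m t :=
      intervalIntegral.integral_mono_on ht (hinth 0 t)
        intervalIntegrable_const fun s hs => (hhm s).trans (hmono hs.2)
    have h2 : (∫ s in (0:ℝ)..t, m t) = t * m t := by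
      rw [intervalIntegral.integral_const, smul_eq_mul]; ring
    calc C t = ∫ s in (0:ℝ)..t, hfun s := rfl
      _ ≤ ∫ s in (0:ℝ)..t, m t := h1
      _ = t * m t := h2
  have hCge : ∀ t : ℝ, 0 ≤ t → B t ≤ 2 * C (2*t) := by
    intro t ht
    rcases eq_or_lt_of_le ht with h | h
    · rw [← h]; simp [hBneg 0 le_rfl, hCneg 0 le_rfl]
    · have hadj := hCadj t (2*t)
      have hpt : ∀ s ∈ Icc t (2*t), B t / (2*t) ≤ hfun s := by
        intro s hs
        have hspos : 0 < s := lt_of_lt_of_le h hs.1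
        have h1 : B t ≤ B s := hBmono t s hs.1
        have h2 : B s / (2*t) ≤ B s / s :=
          div_le_div_of_nonneg_left (hBnonneg s) hspos hs.2
        have h3 : B t / (2*t) ≤ B s / (2*t) :=
          div_le_div_of_nonneg_right h1 (by linarith)
        exact h3.trans h2
      have h1 : (∫ s in t..(2*t), B t / (2*t)) ≤ ∫ s in t..(2*t), hfun s :=
        intervalIntegral.integral_mono_on (by linarith) intervalIntegrable_const
          (hinth t (2*t)) hpt
      have h2 : (∫ s in t..(2*t), B t / (2*t)) = B t / 2 := by
        rw [intervalIntegral.integral_const, smul_eq_mul]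
        field_simp
        ring
      have h3 := hCnonneg t
      rw [h2] at h1
      linarith
  -- the function Φ
  set Φ : H → ℝ := fun x => 2 * C (4 * ‖x - p‖) with hΦdef
  have hΦp : Φ p = 0 := by
    simp only [hΦdef, sub_self, norm_zero, mul_zero, hCneg 0 le_rfl]
  have hΦnn : ∀ x, 0 ≤ Φ x := fun x =>
    mul_nonneg (by norm_num) (hCnonneg _)
  have hΦat : HasFDerivAt Φ (0 : H →L[ℝ] ℝ) p := by
    apply HasFDerivAt.of_isLittleO
    rw [Asymptotics.isLittleO_iff]
    intro c hc
    obtain ⟨r, hrpos, hr⟩ := hmsmall (c/8) (by linarith)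
    filter_upwards [Metric.ball_mem_nhds p (show (0:ℝ) < r/4 by linarith)] with x hx
    have ht : ‖x - p‖ < r/4 := by rwa [Metric.mem_ball, dist_eq_norm] at hx
    have htn : (0:ℝ) ≤ ‖x - p‖ := norm_nonneg _
    have h1 : Φ x ≤ 2 * ((4*‖x - p‖) * m (4*‖x - p‖)) := by
      have := hCle (4*‖x - p‖) (by linarith)
      simp only [hΦdef]
      linarith
    have h2 : m (4*‖x - p‖) ≤ c/8 := hr _ (by linarith)
    have h3 : Φ x ≤ c * ‖x - p‖ := by nlinarith [hm0le (4*‖x - p‖)]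
    simp only [hΦp, ContinuousLinearMap.zero_apply, sub_zero, Real.norm_eq_abs]
    rw [abs_of_nonneg (hΦnn x)]
    exact h3
  set F : H → (H →L[ℝ] ℝ) :=
    fun x => (8 * hfun (4 * ‖x - p‖) * (‖x - p‖)⁻¹) • innerSL ℝ (x - p) with hFdef
  have hFp : F p = 0 := by simp [hFdef]
  have hFx : ∀ x, x ≠ p → HasFDerivAt Φ (F x) x := by
    intro x hx
    have hN := hasFDerivAt_norm_sub p x hx
    have h4 : HasDerivAt (fun t : ℝ => 4 * t) 4 ‖x - p‖ := by
      simpa using (hasDerivAt_id ‖x - p‖).const_mul (4:ℝ)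
    have hc1 : HasDerivAt (fun t : ℝ => C (4 * t)) (hfun (4 * ‖x - p‖) * 4) ‖x - p‖ :=
      (hC (4 * ‖x - p‖)).comp ‖x - p‖ h4
    have hc2 : HasDerivAt (fun t : ℝ => 2 * C (4 * t)) (8 * hfun (4 * ‖x - p‖)) ‖x - p‖ := by
      have := hc1.const_mul (2:ℝ)
      have h8 : (8 * hfun (4 * ‖x - p‖)) = 2 * (hfun (4 * ‖x - p‖) * 4) := by ring
      rw [h8]; exact this
    have hcomp := hc2.comp_hasFDerivAt x hN
    have heq : (8 * hfun (4 * ‖x - p‖)) • (‖x - p‖)⁻¹ • innerSL ℝ (x - p) = F x := by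
      rw [smul_smul]
    rw [← heq]
    exact hcomp
  have hFcont : Continuous F := by
    rw [continuous_iff_continuousAt]
    intro x
    by_cases hx : x = p
    · rw [hx, ContinuousAt, hFp]
      apply squeeze_zero_norm (a := fun y => 8 * hfun (4 * ‖y - p‖))
      · intro y
        have hnn : (0:ℝ) ≤ 8 * hfun (4 * ‖y - p‖) * (‖y - p‖)⁻¹ :=
          mul_nonneg (mul_nonneg (by norm_num) (hhnonneg _)) (inv_nonneg.2 (norm_nonneg _))
        have hnn2 : (0:ℝ) ≤ 8 * hfun (4 * ‖y - p‖) :=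
          mul_nonneg (by norm_num) (hhnonneg _)
        have h2 : (‖y - p‖)⁻¹ * ‖y - p‖ ≤ 1 := by
          rcases eq_or_ne (‖y - p‖) 0 with h0 | h0
          · simp [h0]
          · rw [inv_mul_cancel₀ h0]
        apply ContinuousLinearMap.opNorm_le_bound _ hnn2
        intro z
        have h1 : F y z = (8 * hfun (4 * ‖y - p‖) * (‖y - p‖)⁻¹) * (inner ℝ (y - p) z : ℝ) := by
          have : F y = (8 * hfun (4 * ‖y - p‖) * (‖y - p‖)⁻¹) • innerSL ℝ (y - p) := rfl
          rw [this]
          simp only [ContinuousLinearMap.smul_apply, innerSL_apply_apply, smul_eq_mul]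
        rw [h1, Real.norm_eq_abs, abs_mul, abs_of_nonneg hnn]
        have h3 : |(inner ℝ (y - p) z : ℝ)| ≤ ‖y - p‖ * ‖z‖ := abs_real_inner_le_norm _ z
        have h4 : (0:ℝ) ≤ (‖y - p‖)⁻¹ := inv_nonneg.2 (norm_nonneg _)
        calc 8 * hfun (4 * ‖y - p‖) * (‖y - p‖)⁻¹ * |(inner ℝ (y - p) z : ℝ)|
            ≤ 8 * hfun (4 * ‖y - p‖) * (‖y - p‖)⁻¹ * (‖y - p‖ * ‖z‖) :=
              mul_le_mul_of_nonneg_left h3 hnn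
          _ = 8 * hfun (4 * ‖y - p‖) * (((‖y - p‖)⁻¹ * ‖y - p‖) * ‖z‖) := by ring
          _ ≤ 8 * hfun (4 * ‖y - p‖) * (1 * ‖z‖) :=
              mul_le_mul_of_nonneg_left
                (mul_le_mul_of_nonneg_right h2 (norm_nonneg z)) hnn2
          _ = 8 * hfun (4 * ‖y - p‖) * ‖z‖ := by ring
      · have hcont : Continuous fun y : H => 8 * hfun (4 * ‖y - p‖) :=
          continuous_const.mul
            (hhcont.comp (continuous_const.mul ((continuous_id.sub continuous_const).norm)))
        have := hcont.tendsto p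
        simpa [hh0] using this
    · have hsc : ContinuousAt (fun y : H => 8 * hfun (4 * ‖y - p‖) * (‖y - p‖)⁻¹) x := by
        apply ContinuousAt.mul
        · exact (continuous_const.mul
            (hhcont.comp (continuous_const.mul
              ((continuous_id.sub continuous_const).norm)))).continuousAt
        · exact ((continuous_id.sub continuous_const).norm.continuousAt).inv₀
            (norm_ne_zero_iff.2 (sub_ne_zero.2 hx))
      have hTC : ContinuousAt (fun y : H => innerSL ℝ (y - p)) x :=
        ((innerSL ℝ).continuous.comp (continuous_id.sub continuous_const)).continuousAt
      exact hsc.smul hTC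
  have hΦdiff : Differentiable ℝ Φ := by
    intro x
    by_cases hx : x = p
    · subst hx; exact hΦat.differentiableAt
    · exact (hFx x hx).differentiableAt
  have hΦfd : fderiv ℝ Φ = F := by
    funext x
    by_cases hx : x = p
    · subst hx; rw [hΦat.fderiv, hFp]
    · exact (hFx x hx).fderiv
  have hΦcd : ContDiff ℝ 1 Φ :=
    contDiff_one_iff_fderiv.2 ⟨hΦdiff, by rw [hΦfd]; exact hFcont⟩
  have hev : ∀ᶠ x in 𝓝 p, |g x| ≤ Φ x := by
    filter_upwards [Metric.closedBall_mem_nhds p (show (0:ℝ) < δ/2 by linarith)] with x hx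
    rw [Metric.mem_closedBall, dist_eq_norm] at hx
    by_cases hxp : x = p
    · have h0 : |g x| ≤ 0 := by
        rw [hxp]
        simpa using hgx p (by simpa using hδpos)
      calc |g x| ≤ 0 := h0
        _ ≤ Φ x := hΦnn x
    · have hn0 : (0:ℝ) ≤ ‖x - p‖ := norm_nonneg _
      have c1 := hmbound x hxp hx
      have c2 := hBge ‖x - p‖ hn0
      have c3 := hCge (2 * ‖x - p‖) (by linarith)
      have heq : 2 * (2 * ‖x - p‖) = 4 * ‖x - p‖ := by ring
      rw [heq] at c3
      calc |g x| ≤ ‖x - p‖ * m ‖x - p‖ := c1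
        _ ≤ B (2*‖x - p‖) := c2
        _ ≤ 2 * C (4*‖x - p‖) := c3
  exact ⟨Φ, hΦcd, hΦp, hΦat.fderiv, hΦnn, hev⟩

private lemma mem_both (f : H → ℝ) (p : H) (hf : DifferentiableAt ℝ f p) :
    fderiv ℝ f p ∈ subdiffR f p ∧ fderiv ℝ f p ∈ superdiffR f p := by
  set L := fderiv ℝ f p with hL
  have hLd : HasFDerivAt f L p := hf.hasFDerivAt
  have hg : (fun x => f x - f p - L (x - p)) =o[𝓝 p] (fun x => x - p) := hLd.isLittleO
  obtain ⟨Φ, hΦcd, hΦp, hΦf, hΦnn, hΦb⟩ := exists_Phi _ p hg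
  have hΦhas : HasFDerivAt Φ (0 : H →L[ℝ] ℝ) p := by
    have := ((hΦcd.differentiable one_ne_zero) p).hasFDerivAt
    rwa [hΦf] at this
  have haff : HasFDerivAt (fun x : H => f p + L (x - p)) L p := by
    have h1 : HasFDerivAt (fun y : H => y - p) (ContinuousLinearMap.id ℝ H) p :=
      (hasFDerivAt_id p).sub_const p
    have h2 := (L.hasFDerivAt.comp p h1).const_add (f p)
    simpa using h2
  have haffcd : ContDiff ℝ 1 (fun x : H => f p + L (x - p)) :=
    contDiff_const.add (L.contDiff.comp (contDiff_id.sub contDiff_const))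
  constructor
  · refine ⟨fun x => f p + L (x - p) - Φ x, haffcd.sub hΦcd, ?_, ?_⟩
    · have := (haff.sub hΦhas).fderiv
      rw [sub_zero] at this; exact this
    · show ∀ᶠ x in 𝓝 p, _ ≤ _
      filter_upwards [hΦb] with x hx
      have hval : f p - (f p + L (p - p) - Φ p) = 0 := by
        simp [hΦp]
      show f p - (f p + L (p - p) - Φ p) ≤ f x - (f p + L (x - p) - Φ x)
      rw [hval]
      have := neg_abs_le (f x - f p - L (x - p))
      linarith
  · refine ⟨fun x => f p + L (x - p) + Φ x, haffcd.add hΦcd, ?_, ?_⟩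
    · have := (haff.add hΦhas).fderiv
      rw [add_zero] at this; exact this
    · show ∀ᶠ x in 𝓝 p, _ ≤ _
      filter_upwards [hΦb] with x hx
      have hval : f p - (f p + L (p - p) + Φ p) = 0 := by
        simp [hΦp]
      show f x - (f p + L (x - p) + Φ x) ≤ f p - (f p + L (p - p) + Φ p)
      rw [hval]
      have := le_abs_self (f x - f p - L (x - p))
      linarith

lemma both_imp {f : H → ℝ} {p : H} {ζ₁ ζ₂ : H →L[ℝ] ℝ}
    (h1 : ζ₁ ∈ subdiffR f p) (h2 : ζ₂ ∈ superdiffR f p) :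
    HasFDerivAt f ζ₁ p ∧ ζ₁ = ζ₂ := by
  obtain ⟨φ₁, hc1, hd1, hm1⟩ := h1
  obtain ⟨φ₂, hc2, hd2, hm2⟩ := h2
  have h₁ : HasFDerivAt φ₁ ζ₁ p := by
    have := ((hc1.differentiable one_ne_zero) p).hasFDerivAt
    rwa [hd1] at this
  have h₂ : HasFDerivAt φ₂ ζ₂ p := by
    have := ((hc2.differentiable one_ne_zero) p).hasFDerivAt
    rwa [hd2] at this
  have hmin : IsLocalMin (fun x => φ₂ x - φ₁ x) p := by
    filter_upwards [hm1, hm2] with x hx1 hx2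
    show φ₂ p - φ₁ p ≤ φ₂ x - φ₁ x
    have hx1' : f p - φ₁ p ≤ f x - φ₁ x := hx1
    have hx2' : f x - φ₂ x ≤ f p - φ₂ p := hx2
    linarith
  have hz : ζ₂ - ζ₁ = 0 := hmin.hasFDerivAt_eq_zero (h₂.sub h₁)
  have hzz : ζ₁ = ζ₂ := by
    have := sub_eq_zero.1 hz
    exact this.symm
  refine ⟨?_, hzz⟩
  apply HasFDerivAt.of_isLittleO
  rw [Asymptotics.isLittleO_iff]
  intro c hc
  have e1 := Asymptotics.isLittleO_iff.1 h₁.isLittleO hc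
  have e2 := Asymptotics.isLittleO_iff.1 h₂.isLittleO hc
  filter_upwards [e1, e2, hm1, hm2] with x k1 k2 k3 k4
  rw [Real.norm_eq_abs] at k1 k2 ⊢
  rw [abs_le] at k1 k2 ⊢
  rw [← hzz] at k2
  constructor
  · have : f p - φ₁ p ≤ f x - φ₁ x := k3
    linarith [k1.1]
  · have : f x - φ₂ x ≤ f p - φ₂ p := k4
    linarith [k2.2]


end Aux

/-- `f` is Fréchet differentiable at `p` iff it is both subdifferentiable and
superdifferentiable at `p`, in which case `D⁻f(p) = D⁺f(p) = {Df(p)}`. -/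
theorem differentiable_iff_sub_and_superdifferentiable
    {H : Type*} [NormedAddCommGroup H] [InnerProductSpace ℝ H] [CompleteSpace H]
    (f : H → ℝ) (p : H) :
    (DifferentiableAt ℝ f p ↔ (subdiffR f p).Nonempty ∧ (superdiffR f p).Nonempty) ∧
    (DifferentiableAt ℝ f p →
      subdiffR f p = {fderiv ℝ f p} ∧ superdiffR f p = {fderiv ℝ f p}) := by
  constructor
  · constructor
    · intro hf
      obtain ⟨hs, hsu⟩ := mem_both f p hf
      exact ⟨⟨_, hs⟩, ⟨_, hsu⟩⟩
    · rintro ⟨⟨ζ₁, h1⟩, ⟨ζ₂, h2⟩⟩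
      exact (both_imp h1 h2).1.differentiableAt
  · intro hf
    obtain ⟨hs, hsu⟩ := mem_both f p hf
    constructor
    · apply Set.eq_singleton_iff_unique_mem.2
      exact ⟨hs, fun ζ hζ => (both_imp hζ hsu).2⟩
    · apply Set.eq_singleton_iff_unique_mem.2
      exact ⟨hsu, fun ζ hζ => ((both_imp hs hζ).2).symm⟩
end

section
/- Let H₁ and H₂ be real Hilbert spaces, g : H₁ → H₂ a map which is Fréchet differentiable at a point p ∈ H₁, and f : H₂ → ℝ ∪ {+∞} a function subdifferentiable at g(p) (with f(g(p)) < +∞). Then the composition f ∘ g is subdifferentiable at p, and for every ζ ∈ D⁻f(g(p)) one has ζ ∘ Dg(p) ∈ D⁻(f ∘ g)(p); that is, { ζ ∘ Dg(p) : ζ ∈ D⁻f(g(p)) } ⊆ D⁻(f ∘ g)(p). -/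
open Filter Topology MeasureTheory intervalIntegral

theorem continuousAt_fderiv_of_contDiffAt {𝕜 : Type*} [NontriviallyNormedField 𝕜]
    {E : Type*} [NormedAddCommGroup E] [NormedSpace 𝕜 E]
    {F : Type*} [NormedAddCommGroup F] [NormedSpace 𝕜 F]
    {f : E → F} {x : E} (h : ContDiffAt 𝕜 1 f x) :
    ContinuousAt (fderiv 𝕜 f) x := by
  obtain ⟨f', u, hu, hcont, hderiv⟩ := contDiffAt_one_iff.mp h
  have heq : ∀ᶠ y in 𝓝 x, f' y = fderiv 𝕜 f y :=
    Filter.eventually_of_mem hu fun y hy => ((hderiv y hy).fderiv).symm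
  exact (hcont.continuousAt hu).congr heq

theorem contDiff_comp_norm {H : Type*} [NormedAddCommGroup H] [InnerProductSpace ℝ H]
    (θ q : ℝ → ℝ) (hd : ∀ t, HasDerivAt θ (q t) t) (hq : Continuous q) (hq0 : q 0 = 0) :
    ContDiff ℝ 1 (fun x : H => θ ‖x‖) ∧ HasFDerivAt (fun x : H => θ ‖x‖) (0 : H →L[ℝ] ℝ) 0 := by
  set D : H → (H →L[ℝ] ℝ) := fun x => q ‖x‖ • fderiv ℝ (fun y : H => ‖y‖) x with hDdef
  have hD0 : D 0 = 0 := by simp [hDdef, hq0]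
  have hDnorm : ∀ x, ‖D x‖ ≤ |q ‖x‖| := by
    intro x
    calc ‖D x‖ = ‖q ‖x‖ • fderiv ℝ (fun y : H => ‖y‖) x‖ := by rw [hDdef]
      _ = |q ‖x‖| * ‖fderiv ℝ (fun y : H => ‖y‖) x‖ := by
          rw [norm_smul, Real.norm_eq_abs]
      _ ≤ |q ‖x‖| * 1 := by
          gcongr
          have h := norm_fderiv_le_of_lipschitz ℝ (x₀ := x) (lipschitzWith_one_norm (E := H))
          simpa using h
      _ = _ := mul_one _
  have hzero : HasFDerivAt (fun x : H => θ ‖x‖) (0 : H →L[ℝ] ℝ) 0 := by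
    rw [hasFDerivAt_iff_isLittleO_nhds_zero, Asymptotics.isLittleO_iff]
    intro c hc
    obtain ⟨ρ, hρpos, hρ⟩ := Metric.continuousAt_iff.mp hq.continuousAt c hc
    rw [Metric.eventually_nhds_iff]
    refine ⟨ρ, hρpos, fun x hx => ?_⟩
    have hxρ : ‖x‖ < ρ := by simpa [dist_eq_norm] using hx
    have hmvt : ‖θ ‖x‖ - θ 0‖ ≤ c * ‖(‖x‖ : ℝ) - 0‖ := by
      apply Convex.norm_image_sub_le_of_norm_hasDerivWithin_le
        (f' := q) (s := Set.Icc 0 ‖x‖)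
        (fun t _ => (hd t).hasDerivWithinAt) ?_ (convex_Icc _ _)
        ⟨le_refl 0, norm_nonneg x⟩ ⟨norm_nonneg x, le_refl _⟩
      intro t ht
      have : dist t 0 < ρ := by
        rw [Real.dist_eq, sub_zero, abs_of_nonneg ht.1]
        exact lt_of_le_of_lt ht.2 hxρ
      have := hρ this
      rw [Real.dist_eq, hq0, sub_zero] at this
      rw [Real.norm_eq_abs]
      exact this.le
    simp only [zero_add, norm_zero, ContinuousLinearMap.zero_apply, sub_zero]
    calc ‖θ ‖x‖ - θ 0‖ ≤ c * ‖(‖x‖ : ℝ) - 0‖ := hmvt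
      _ = c * ‖x‖ := by
          rw [sub_zero, Real.norm_eq_abs, abs_of_nonneg (norm_nonneg x)]
  have hD : ∀ x, HasFDerivAt (fun y : H => θ ‖y‖) (D x) x := by
    intro x
    by_cases hx : x = 0
    · subst hx; rw [hD0]; exact hzero
    · have hn : DifferentiableAt ℝ (fun y : H => ‖y‖) x :=
        (contDiffAt_norm ℝ (n := 1) hx).differentiableAt one_ne_zero
      exact (hd ‖x‖).comp_hasFDerivAt x hn.hasFDerivAt
  have hDc : Continuous D := by
    rw [continuous_iff_continuousAt]
    intro x
    by_cases hx : x = 0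
    · subst hx
      rw [ContinuousAt, hD0]
      apply squeeze_zero_norm hDnorm
      have : Tendsto (fun x : H => |q ‖x‖|) (𝓝 0) (𝓝 (|q ‖(0 : H)‖|)) :=
        ((hq.comp continuous_norm).abs).continuousAt
      simpa [hq0] using this
    · have h1 : ContinuousAt (fun y : H => q ‖y‖) x := (hq.comp continuous_norm).continuousAt
      have h2 : ContinuousAt (fderiv ℝ (fun y : H => ‖y‖)) x :=
        continuousAt_fderiv_of_contDiffAt (contDiffAt_norm ℝ (n := 1) hx)
      exact h1.smul h2
  constructor
  · refine contDiff_one_iff_fderiv.mpr ⟨fun x => (hD x).differentiableAt, ?_⟩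
    have : fderiv ℝ (fun y : H => θ ‖y‖) = D := funext fun x => (hD x).fderiv
    rw [this]; exact hDc
  · rw [← hD0]; exact hD 0

theorem exists_modulus (e : ℝ → ℝ) (hmono : Monotone e) (h0 : ∀ t ≤ 0, e t = 0)
    (hnn : ∀ t, 0 ≤ e t)
    (hsmall : ∀ c > 0, ∃ t₀ > 0, ∀ t ≤ t₀, e t ≤ c) :
    ∃ θ q : ℝ → ℝ, (∀ t, HasDerivAt θ (q t) t) ∧ Continuous q ∧ q 0 = 0 ∧ θ 0 = 0 ∧
      ∀ t, 0 ≤ t → t * e t ≤ θ t := by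
  have hint : ∀ a b : ℝ, IntervalIntegrable e volume a b := fun a b =>
    hmono.intervalIntegrable
  set E₁ : ℝ → ℝ := fun t => ∫ s in (0:ℝ)..t, e s with hE₁def
  have hE₁cont : Continuous E₁ := intervalIntegral.continuous_primitive hint 0
  have hE₁split : ∀ t : ℝ, E₁ (2*t) - E₁ t = ∫ s in t..(2*t), e s := by
    intro t
    have h := integral_add_adjacent_intervals (hint 0 t) (hint t (2*t))
    simp only [hE₁def]
    linarith
  have hlow : ∀ t : ℝ, 0 ≤ t → t * e t ≤ E₁ (2*t) - E₁ t := by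
    intro t ht
    rw [hE₁split t]
    have h : ∫ s in t..(2*t), e t ≤ ∫ s in t..(2*t), e s :=
      integral_mono_on (by linarith) intervalIntegrable_const (hint t (2*t))
        (fun s hs => hmono hs.1)
    rw [intervalIntegral.integral_const, smul_eq_mul] at h
    have he : (2*t - t) * e t = t * e t := by ring
    rw [he] at h
    exact h
  have hupp : ∀ t : ℝ, 0 ≤ t → E₁ (2*t) - E₁ t ≤ t * e (2*t) := by
    intro t ht
    rw [hE₁split t]
    have h : ∫ s in t..(2*t), e s ≤ ∫ s in t..(2*t), e (2*t) :=
      integral_mono_on (by linarith) (hint t (2*t)) intervalIntegrable_const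
        (fun s hs => hmono hs.2)
    rw [intervalIntegral.integral_const, smul_eq_mul] at h
    have he : (2*t - t) * e (2*t) = t * e (2*t) := by ring
    rw [he] at h
    exact h
  set en : ℝ → ℝ := fun t => if 0 < t then (E₁ (2*t) - E₁ t)/t else 0 with hendef
  have hen0 : ∀ t ≤ 0, en t = 0 := by
    intro t ht
    simp [hendef, not_lt.mpr ht]
  have hen_lb : ∀ t, e t ≤ en t := by
    intro t
    rcases le_or_gt t 0 with ht | ht
    · rw [hen0 t ht, h0 t ht]
    · rw [hendef]
      simp only [ht, if_true]
      rw [le_div_iff₀ ht]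
      have := hlow t ht.le
      linarith
  have hen_ub : ∀ t, 0 < t → en t ≤ e (2*t) := by
    intro t ht
    rw [hendef]
    simp only [ht, if_true]
    rw [div_le_iff₀ ht]
    have := hupp t ht.le
    linarith
  have hen_nn : ∀ t, 0 ≤ en t := fun t => (hnn t).trans (hen_lb t)
  have hen_cont : Continuous en := by
    rw [continuous_iff_continuousAt]
    intro t
    rcases lt_trichotomy t 0 with ht | ht | ht
    · have hev : ∀ᶠ s in 𝓝 t, (0:ℝ) = en s :=
        eventually_of_mem (Iio_mem_nhds ht) fun s hs => (hen0 s (le_of_lt hs)).symm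
      exact continuousAt_const.congr hev
    · subst ht
      rw [Metric.continuousAt_iff]
      intro ε hε
      obtain ⟨t₀, ht₀, hsm⟩ := hsmall (ε/2) (by linarith)
      refine ⟨t₀/2, by linarith, fun {s} hs => ?_⟩
      rw [Real.dist_eq] at hs
      rw [Real.dist_eq, hen0 0 le_rfl, sub_zero]
      rcases le_or_gt s 0 with h's | h's
      · rw [hen0 s h's]; simpa using hε
      · have h1 : en s ≤ e (2*s) := hen_ub s h's
        have h2 : e (2*s) ≤ ε/2 := by
          apply hsm
          have : |s| < t₀/2 := by simpa using hs
          rw [abs_of_pos h's] at this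
          linarith
        rw [abs_of_nonneg (hen_nn s)]
        linarith
    · have hev : ∀ᶠ s in 𝓝 t, (E₁ (2*s) - E₁ s)/s = en s :=
        eventually_of_mem (Ioi_mem_nhds ht) fun s hs =>
          (if_pos (show (0:ℝ) < s from hs)).symm
      refine ContinuousAt.congr ?_ hev
      exact (((hE₁cont.comp (continuous_const.mul continuous_id)).sub hE₁cont).continuousAt).div
        continuousAt_id (ne_of_gt ht)
  have henint : ∀ a b : ℝ, IntervalIntegrable en volume a b := fun a b =>
    hen_cont.intervalIntegrable a b
  set E₂ : ℝ → ℝ := fun t => ∫ s in (0:ℝ)..t, en s with hE₂def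
  have hE₂d : ∀ t, HasDerivAt E₂ (en t) t := fun t =>
    integral_hasDerivAt_right (henint 0 t)
      hen_cont.aestronglyMeasurable.stronglyMeasurableAtFilter hen_cont.continuousAt
  have hE₂split : ∀ t : ℝ, E₂ (2*t) - E₂ t = ∫ s in t..(2*t), en s := by
    intro t
    have h := integral_add_adjacent_intervals (henint 0 t) (henint t (2*t))
    simp only [hE₂def]
    linarith
  refine ⟨fun t => E₂ (2*t) - E₂ t, fun t => en (2*t) * 2 - en t, ?_, ?_, ?_, ?_, ?_⟩
  · intro t
    have hlin : HasDerivAt (fun s : ℝ => 2*s) 2 t := by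
      simpa using (hasDerivAt_id t).const_mul (2:ℝ)
    have h2 : HasDerivAt (fun t => E₂ (2*t)) (en (2*t) * 2) t :=
      HasDerivAt.comp t (hE₂d (2*t)) hlin
    exact h2.sub (hE₂d t)
  · exact ((hen_cont.comp (continuous_const.mul continuous_id)).mul continuous_const).sub hen_cont
  · simp [hen0 0 le_rfl]
  · simp
  · intro t ht
    show t * e t ≤ E₂ (2*t) - E₂ t
    rw [hE₂split t]
    have h : ∫ s in t..(2*t), e t ≤ ∫ s in t..(2*t), en s :=
      integral_mono_on (by linarith) intervalIntegrable_const (henint t (2*t))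
        (fun s hs => (hmono hs.1).trans (hen_lb s))
    rw [intervalIntegral.integral_const, smul_eq_mul] at h
    have he : (2*t - t) * e t = t * e t := by ring
    rw [he] at h
    exact h

/-- Chain rule: if `g : H₁ → H₂` is Fréchet differentiable at `p` and `f : H₂ → ℝ ∪ {+∞}` is
subdifferentiable at `g(p)`, then `f ∘ g` is subdifferentiable at `p` and
`{ζ ∘ Dg(p) : ζ ∈ D⁻f(g(p))} ⊆ D⁻(f ∘ g)(p)`. -/
theorem subdifferential_chain_rule
    {H₁ : Type*} [NormedAddCommGroup H₁] [InnerProductSpace ℝ H₁] [CompleteSpace H₁]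
    {H₂ : Type*} [NormedAddCommGroup H₂] [InnerProductSpace ℝ H₂] [CompleteSpace H₂]
    (g : H₁ → H₂) (p : H₁) (hg : DifferentiableAt ℝ g p)
    (f : H₂ → EReal) (hbot : ∀ y, f y ≠ ⊥) (hfin : f (g p) ≠ ⊤)
    (hsub : (esubdiff f (g p)).Nonempty) :
    (esubdiff (fun x => f (g x)) p).Nonempty ∧
    ∀ ζ ∈ esubdiff f (g p), ζ.comp (fderiv ℝ g p) ∈ esubdiff (fun x => f (g x)) p := by
  suffices hmain : ∀ ζ ∈ esubdiff f (g p), ζ.comp (fderiv ℝ g p) ∈ esubdiff (fun x => f (g x)) p by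
    obtain ⟨ζ₀, hζ₀⟩ := hsub
    exact ⟨⟨_, hmain ζ₀ hζ₀⟩, hmain⟩
  intro ζ hζ
  obtain ⟨φ, hφ1, hφd, hφmin⟩ := hζ
  set L := fderiv ℝ g p with hL
  set A : H₁ → H₂ := fun x => g p + L (x - p) with hA
  have hAp : A p = g p := by simp [hA]
  have hφdiff : HasFDerivAt φ ζ (g p) := hφd ▸ (hφ1.differentiable one_ne_zero (g p)).hasFDerivAt
  have h1 : HasFDerivAt (fun x => φ (g x)) (ζ.comp L) p := hφdiff.comp p hg.hasFDerivAt
  have hAd : HasFDerivAt A L p := by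
    have h' : HasFDerivAt (fun x : H₁ => L (x - p)) L p := by
      exact L.hasFDerivAt.comp p ((hasFDerivAt_id p).sub_const p)
    exact h'.const_add (g p)
  have hφdiff' : HasFDerivAt φ ζ (A p) := hAp ▸ hφdiff
  have h2 : HasFDerivAt (fun x => φ (A x)) (ζ.comp L) p := hφdiff'.comp p hAd
  set δ : H₁ → ℝ := fun x => φ (g x) - φ (A x) with hδ
  have hδp : δ p = 0 := by simp [hδ, hAp]
  have hδd : HasFDerivAt δ (0 : H₁ →L[ℝ] ℝ) p := by
    have := h1.sub h2
    rw [sub_self] at this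
    exact this
  have hδo : (fun x => δ x) =o[𝓝 p] fun x => x - p := by
    have h := hδd.isLittleO
    simpa [hδp] using h
  obtain ⟨r, hrpos, hr⟩ : ∃ r > 0, ∀ x, dist x p < r → ‖δ x‖ ≤ ‖x - p‖ := by
    have := (Asymptotics.isLittleO_iff.mp hδo) one_pos
    rw [Metric.eventually_nhds_iff] at this
    obtain ⟨r, hrpos, hr⟩ := this
    exact ⟨r, hrpos, fun x hx => by simpa using hr hx⟩
  set S : ℝ → Set ℝ := fun t =>
    insert (0:ℝ) ((fun x => -δ x / ‖x - p‖) '' {x | ‖x - p‖ ≤ min t (r/2)}) with hS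
  set e : ℝ → ℝ := fun t => sSup (S t) with he
  have hub : ∀ t, ∀ u ∈ S t, u ≤ 1 := by
    intro t u hu
    rcases hu with hu | ⟨x, hx, rfl⟩
    · rw [hu]; norm_num
    · rcases eq_or_ne x p with rfl | hxp
      · simp [hδp]
      · have hpos : 0 < ‖x - p‖ := by
          rwa [norm_pos_iff, sub_ne_zero]
        rw [div_le_one hpos]
        have := hr x (by rw [dist_eq_norm]; exact lt_of_le_of_lt (hx.trans (min_le_right _ _)) (by linarith))
        rw [Real.norm_eq_abs] at this
        calc -δ x ≤ |δ x| := neg_le_abs _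
          _ ≤ ‖x - p‖ := this
  have hBdd : ∀ t, BddAbove (S t) := fun t => ⟨1, fun u hu => hub t u hu⟩
  have hne : ∀ t, (S t).Nonempty := fun t => ⟨0, Set.mem_insert _ _⟩
  have hnn : ∀ t, 0 ≤ e t := fun t => le_csSup (hBdd t) (Set.mem_insert _ _)
  have hmono : Monotone e := by
    intro s t hst
    apply csSup_le_csSup (hBdd t) (hne s)
    apply Set.insert_subset_insert
    apply Set.image_mono
    intro x hx
    have hx' : ‖x - p‖ ≤ min s (r/2) := hx
    show ‖x - p‖ ≤ min t (r/2)
    exact hx'.trans (min_le_min hst le_rfl)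
  have h0 : ∀ t ≤ 0, e t = 0 := by
    intro t ht
    refine le_antisymm (csSup_le (hne t) ?_) (hnn t)
    intro u hu
    rcases hu with hu | ⟨x, hx, rfl⟩
    · exact hu.le
    · have : ‖x - p‖ ≤ 0 := hx.trans ((min_le_left _ _).trans ht)
      have hxp : x = p := by
        rw [← sub_eq_zero]
        exact norm_le_zero_iff.mp this
      simp [hxp, hδp]
  have hbound : ∀ x, ‖x - p‖ ≤ r/2 → -δ x ≤ ‖x - p‖ * e ‖x - p‖ := by
    intro x hx
    rcases eq_or_ne x p with rfl | hxp
    · simp [hδp]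
    · have hpos : 0 < ‖x - p‖ := by rwa [norm_pos_iff, sub_ne_zero]
      have hmem : -δ x / ‖x - p‖ ∈ S ‖x - p‖ :=
        Set.mem_insert_of_mem _ ⟨x, le_min le_rfl hx, rfl⟩
      have := le_csSup (hBdd ‖x - p‖) hmem
      rw [div_le_iff₀ hpos] at this
      calc -δ x ≤ e ‖x - p‖ * ‖x - p‖ := this
        _ = ‖x - p‖ * e ‖x - p‖ := mul_comm _ _
  have hsmall : ∀ c > 0, ∃ t₀ > 0, ∀ t ≤ t₀, e t ≤ c := by
    intro c hc
    have := (Asymptotics.isLittleO_iff.mp hδo) hc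
    rw [Metric.eventually_nhds_iff] at this
    obtain ⟨ρ, hρpos, hρ⟩ := this
    refine ⟨ρ/2, by linarith, fun t ht => ?_⟩
    apply csSup_le (hne t)
    intro u hu
    rcases hu with hu | ⟨x, hx, rfl⟩
    · rw [hu]; exact hc.le
    · rcases eq_or_ne x p with rfl | hxp
      · simpa [hδp] using hc.le
      · have hpos : 0 < ‖x - p‖ := by rwa [norm_pos_iff, sub_ne_zero]
        have hxρ : dist x p < ρ := by
          rw [dist_eq_norm]
          have hx' : ‖x - p‖ ≤ min t (r/2) := hx
          have := hx'.trans (min_le_left _ _)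
          linarith
        have hδx := hρ hxρ
        rw [Real.norm_eq_abs] at hδx
        rw [div_le_iff₀ hpos]
        calc -δ x ≤ |δ x| := neg_le_abs _
          _ ≤ c * ‖x - p‖ := hδx
          _ = c * ‖x - p‖ := rfl
  obtain ⟨θ, q, hθd, hqc, hq0, hθ0, hθlb⟩ := exists_modulus e hmono h0 hnn hsmall
  obtain ⟨hC1, hF0⟩ := contDiff_comp_norm (H := H₁) θ q hθd hqc hq0
  set N : H₁ → ℝ := fun x => θ ‖x - p‖ with hN
  have hNC1 : ContDiff ℝ 1 N := hC1.comp (contDiff_id.sub contDiff_const)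
  have hNd : HasFDerivAt N (0 : H₁ →L[ℝ] ℝ) p := by
    have h0' : HasFDerivAt (fun y : H₁ => θ ‖y‖) (0 : H₁ →L[ℝ] ℝ) (p - p) := by
      rwa [sub_self]
    have hsub : HasFDerivAt (fun x : H₁ => x - p) (ContinuousLinearMap.id ℝ H₁) p :=
      (hasFDerivAt_id p).sub_const p
    have := HasFDerivAt.comp (f := fun x : H₁ => x - p) p h0' hsub
    rw [ContinuousLinearMap.zero_comp] at this
    exact this
  have hAC1 : ContDiff ℝ 1 A :=
    contDiff_const.add (L.contDiff.comp (contDiff_id.sub contDiff_const))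
  set ψ : H₁ → ℝ := fun x => φ (A x) - N x with hψ
  have hψ1 : ContDiff ℝ 1 ψ := (hφ1.comp hAC1).sub hNC1
  have hψd : fderiv ℝ ψ p = ζ.comp L := by
    have h := (h2.sub hNd).fderiv
    simp at h
    exact h
  have hψp : ψ p = φ (g p) := by
    simp [hψ, hN, hAp, hθ0]
  refine ⟨ψ, hψ1, hψd, ?_⟩
  have hev1 : ∀ᶠ x in 𝓝 p, f (g p) - ((φ (g p) : ℝ) : EReal) ≤ f (g x) - ((φ (g x) : ℝ) : EReal) :=
    hg.continuousAt.eventually hφmin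
  have hev2 : ∀ᶠ x in 𝓝 p, ‖x - p‖ ≤ r/2 := by
    rw [Metric.eventually_nhds_iff]
    exact ⟨r/2, by linarith, fun {x} hx => by rw [← dist_eq_norm]; exact hx.le⟩
  filter_upwards [hev1, hev2] with x h1x h2x
  have hkey : ψ x ≤ φ (g x) := by
    have hb := hbound x h2x
    have hθx := hθlb ‖x - p‖ (norm_nonneg _)
    have hδx : δ x = φ (g x) - φ (A x) := rfl
    have hNx : ψ x = φ (A x) - θ ‖x - p‖ := rfl
    linarith
  have hψpE : ((ψ p : ℝ) : EReal) = ((φ (g p) : ℝ) : EReal) := by rw [hψp]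
  calc f (g p) - ((ψ p : ℝ) : EReal) = f (g p) - ((φ (g p) : ℝ) : EReal) := by rw [hψpE]
    _ ≤ f (g x) - ((φ (g x) : ℝ) : EReal) := h1x
    _ ≤ f (g x) - ((ψ x : ℝ) : EReal) := by
        rw [sub_eq_add_neg, sub_eq_add_neg, ← EReal.coe_neg, ← EReal.coe_neg]
        exact add_le_add_right (EReal.coe_le_coe_iff.mpr (neg_le_neg hkey)) _
end

section
/- Let H be a real Hilbert space and f₁, f₂ : H → [0, ∞) nonnegative functions which are both subdifferentiable at a point p ∈ H. Then the product f₁·f₂ is subdifferentiable at p, and f₁(p)·D⁻f₂(p) + f₂(p)·D⁻f₁(p) ⊆ D⁻(f₁·f₂)(p); that is, for every ζ₁ ∈ D⁻f₁(p) and ζ₂ ∈ D⁻f₂(p) one has f₁(p)ζ₂ + f₂(p)ζ₁ ∈ D⁻(f₁·f₂)(p). -/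
open Filter Topology

/-- Elementary inequality: products of lower bounds, one of which is nonnegative. -/
lemma key_mul_ineq {a₁ a₂ b₁ b₂ : ℝ} (ha₁ : 0 ≤ a₁) (ha₂ : 0 ≤ a₂)
    (hb₁ : b₁ ≤ a₁) (hb₂ : b₂ ≤ a₂) (h : 0 ≤ b₁ ∨ 0 ≤ b₂) : b₁ * b₂ ≤ a₁ * a₂ := by
  rcases h with h | h
  · rcases le_or_gt 0 b₂ with h2 | h2
    · exact mul_le_mul hb₁ hb₂ h2 ha₁
    · nlinarith [mul_nonneg ha₁ ha₂]
  · rcases le_or_gt 0 b₁ with h2 | h2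
    · exact mul_le_mul hb₁ hb₂ h (le_trans h2 hb₁)
    · nlinarith [mul_nonneg ha₁ ha₂]

/-- Product rule: if `f₁, f₂ : H → [0,∞)` are subdifferentiable at `p`, then so is `f₁·f₂`,
and `f₁(p)·D⁻f₂(p) + f₂(p)·D⁻f₁(p) ⊆ D⁻(f₁·f₂)(p)`. -/
theorem subdifferential_product_rule
    {H : Type*} [NormedAddCommGroup H] [InnerProductSpace ℝ H] [CompleteSpace H]
    (f₁ f₂ : H → ℝ) (h₁ : ∀ x, 0 ≤ f₁ x) (h₂ : ∀ x, 0 ≤ f₂ x) (p : H)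
    (hs₁ : (subdiffR f₁ p).Nonempty) (hs₂ : (subdiffR f₂ p).Nonempty) :
    (subdiffR (fun x => f₁ x * f₂ x) p).Nonempty ∧
    ∀ ζ₁ ∈ subdiffR f₁ p, ∀ ζ₂ ∈ subdiffR f₂ p,
      f₁ p • ζ₂ + f₂ p • ζ₁ ∈ subdiffR (fun x => f₁ x * f₂ x) p := by
  have main : ∀ ζ₁ ∈ subdiffR f₁ p, ∀ ζ₂ ∈ subdiffR f₂ p,
      f₁ p • ζ₂ + f₂ p • ζ₁ ∈ subdiffR (fun x => f₁ x * f₂ x) p := by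
    rintro ζ₁ ⟨φ₁, hφ₁, hd₁, hm₁⟩ ζ₂ ⟨φ₂, hφ₂, hd₂, hm₂⟩
    by_cases hz : f₁ p = 0 ∧ f₂ p = 0
    · refine ⟨fun _ => 0, contDiff_const, ?_, ?_⟩
      · simp [fderiv_const, hz.1, hz.2]
      · have : ∀ x, (fun x => f₁ x * f₂ x - 0) p ≤ (fun x => f₁ x * f₂ x - 0) x := by
          intro x
          simp only [hz.1, hz.2]
          nlinarith [mul_nonneg (h₁ x) (h₂ x)]
        exact Filter.Eventually.of_forall this
    · -- at least one of f₁ p, f₂ p is positive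
      have hpos : 0 < f₁ p ∨ 0 < f₂ p := by
        rcases not_and_or.mp hz with h | h
        · exact Or.inl (lt_of_le_of_ne (h₁ p) (Ne.symm h))
        · exact Or.inr (lt_of_le_of_ne (h₂ p) (Ne.symm h))
      set g₁ : H → ℝ := fun x => φ₁ x + (f₁ p - φ₁ p) with hg₁def
      set g₂ : H → ℝ := fun x => φ₂ x + (f₂ p - φ₂ p) with hg₂def
      have hcg₁ : ContDiff ℝ 1 g₁ := hφ₁.add contDiff_const
      have hcg₂ : ContDiff ℝ 1 g₂ := hφ₂.add contDiff_const
      have hdg₁ : DifferentiableAt ℝ g₁ p :=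
        (hcg₁.differentiable one_ne_zero).differentiableAt
      have hdg₂ : DifferentiableAt ℝ g₂ p :=
        (hcg₂.differentiable one_ne_zero).differentiableAt
      have hg₁p : g₁ p = f₁ p := by simp [hg₁def]
      have hg₂p : g₂ p = f₂ p := by simp [hg₂def]
      have hfg₁ : fderiv ℝ g₁ p = ζ₁ := by
        rw [hg₁def]; rw [fderiv_add_const]; exact hd₁
      have hfg₂ : fderiv ℝ g₂ p = ζ₂ := by
        rw [hg₂def]; rw [fderiv_add_const]; exact hd₂
      refine ⟨fun x => g₁ x * g₂ x, hcg₁.mul hcg₂, ?_, ?_⟩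
      · rw [fderiv_fun_mul hdg₁ hdg₂, hfg₁, hfg₂, hg₁p, hg₂p]
      · -- eventual sign condition
        have hev : ∀ᶠ x in 𝓝 p, 0 ≤ g₁ x ∨ 0 ≤ g₂ x := by
          rcases hpos with h | h
          · have ht : Filter.Tendsto g₁ (𝓝 p) (𝓝 (g₁ p)) :=
              (hcg₁.continuous.tendsto p)
            have : ∀ᶠ x in 𝓝 p, 0 < g₁ x := by
              apply ht.eventually
              rw [hg₁p]
              exact eventually_gt_nhds h
            exact this.mono fun x hx => Or.inl hx.le
          · have ht : Filter.Tendsto g₂ (𝓝 p) (𝓝 (g₂ p)) :=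
              (hcg₂.continuous.tendsto p)
            have : ∀ᶠ x in 𝓝 p, 0 < g₂ x := by
              apply ht.eventually
              rw [hg₂p]
              exact eventually_gt_nhds h
            exact this.mono fun x hx => Or.inr hx.le
        have hm₁' : ∀ᶠ x in 𝓝 p, f₁ p - φ₁ p ≤ f₁ x - φ₁ x := hm₁
        have hm₂' : ∀ᶠ x in 𝓝 p, f₂ p - φ₂ p ≤ f₂ x - φ₂ x := hm₂
        have goal : ∀ᶠ x in 𝓝 p,
            (fun x => f₁ x * f₂ x - g₁ x * g₂ x) p ≤
            (fun x => f₁ x * f₂ x - g₁ x * g₂ x) x := by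
          filter_upwards [hm₁', hm₂', hev] with x H1 H2 H3
          have hb₁ : g₁ x ≤ f₁ x := by simp only [hg₁def]; linarith
          have hb₂ : g₂ x ≤ f₂ x := by simp only [hg₂def]; linarith
          have := key_mul_ineq (h₁ x) (h₂ x) hb₁ hb₂ H3
          have hp1 := hg₁p
          have hp2 := hg₂p
          simp only [hg₁def, hg₂def] at *
          nlinarith
        exact goal
  obtain ⟨ζ₁, hζ₁⟩ := hs₁
  obtain ⟨ζ₂, hζ₂⟩ := hs₂
  exact ⟨⟨_, main ζ₁ hζ₁ ζ₂ hζ₂⟩, main⟩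
end
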